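/- arXiv:2502.03112 — 5 statements merged into one kernel-verified Lean document; each statement's English description precedes it below -/
import Mathlib

section
/- Fix a topological system (X, T), positive integers ℓ, m, and open sets U, V ⊆ X. If there exists an (ℓ,m)-Erdős progression (x₀, x₁, x₂) ∈ X³ with x₁ ∈ U and x₂ ∈ V, then there exists an infinite set B ⊆ {n ∈ ℕ : T^{ℓn} x₀ ∈ U} such that {m·b₁ + ℓ·b₂ : b₁, b₂ ∈ B and b₁ < b₂} ⊆ {n ∈ ℕ : T^n x₀ ∈ V}. -/
open Filter MeasureTheory Topology

/-- A Følner sequence in `ℕ`. -/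
def IsFolnerSeq (Φ : ℕ → Finset ℕ) : Prop :=
  (∀ N, (Φ N).Nonempty) ∧
  ∀ t : ℕ, Filter.Tendsto
    (fun N => ((Φ N ∩ (Φ N).image (fun n => t + n)).card : ℝ) / ((Φ N).card : ℝ))
    Filter.atTop (nhds 1)

/-- `a` is `T`-generic for `μ` along the Følner sequence `Φ`: the empirical measures
along orbits converge to `μ` in the weak* topology. -/
def GenericAlong {X : Type*} [TopologicalSpace X] [MeasurableSpace X]
    (T : X → X) (μ : MeasureTheory.Measure X) (a : X) (Φ : ℕ → Finset ℕ) : Prop :=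
  ∀ f : C(X, ℝ), Filter.Tendsto
    (fun N => (∑ n ∈ Φ N, f (T^[n] a)) / ((Φ N).card : ℝ))
    Filter.atTop (nhds (∫ x, f x ∂μ))

/-- `(x₀, x₁, x₂)` is an `(ℓ,m)`-Erdős progression for `T`. -/
def ErdosProg {X : Type*} [TopologicalSpace X] (T : X → X) (ℓ m : ℕ)
    (x₀ x₁ x₂ : X) : Prop :=
  ∃ n : ℕ → ℕ, StrictMono n ∧ (∀ i, 0 < n i) ∧
    Filter.Tendsto (fun i => (T^[ℓ * n i] x₀, T^[m * n i] x₁)) Filter.atTop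
      (nhds (x₁, x₂))

/-- If `(x₀, x₁, x₂)` is an `(ℓ,m)`-Erdős progression with `x₁ ∈ U` and `x₂ ∈ V` (for open
`U, V`), then there is an infinite `B ⊆ {n : T^{ℓn} x₀ ∈ U}` with
`{m b₁ + ℓ b₂ : b₁, b₂ ∈ B, b₁ < b₂} ⊆ {n : T^n x₀ ∈ V}`. -/
theorem erdosProg_return_times {X : Type*} [MetricSpace X] [CompactSpace X]
    (T : X ≃ₜ X) (ℓ m : ℕ) (hℓ : 0 < ℓ) (hm : 0 < m)
    (U V : Set X) (hU : IsOpen U) (hV : IsOpen V)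
    (x₀ x₁ x₂ : X) (hEP : ErdosProg (⇑T) ℓ m x₀ x₁ x₂)
    (hx₁ : x₁ ∈ U) (hx₂ : x₂ ∈ V) :
    ∃ B : Set ℕ, B.Infinite ∧ B ⊆ {n : ℕ | (⇑T)^[ℓ * n] x₀ ∈ U} ∧
      ∀ b₁ ∈ B, ∀ b₂ ∈ B, b₁ < b₂ → (⇑T)^[m * b₁ + ℓ * b₂] x₀ ∈ V := by
  obtain ⟨n, hmono, hpos, htend⟩ := hEP
  have h1 : Tendsto (fun i => (⇑T)^[ℓ * n i] x₀) atTop (nhds x₁) :=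
    (continuous_fst.continuousAt (x := (x₁, x₂))).tendsto.comp htend
  have h2 : Tendsto (fun i => (⇑T)^[m * n i] x₁) atTop (nhds x₂) :=
    (continuous_snd.continuousAt (x := (x₁, x₂))).tendsto.comp htend
  have hU' : ∀ᶠ i in atTop, (⇑T)^[ℓ * n i] x₀ ∈ U := h1 (hU.mem_nhds hx₁)
  have hV' : ∀ᶠ i in atTop, (⇑T)^[m * n i] x₁ ∈ V := h2 (hV.mem_nhds hx₂)
  have key : ∀ k : ℕ, ∃ j, k < j ∧ ((⇑T)^[ℓ * n j] x₀ ∈ U ∧ (⇑T)^[m * n j] x₁ ∈ V) ∧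
      ∀ i ≤ k, (⇑T)^[m * n i] x₁ ∈ V → (⇑T)^[m * n i] ((⇑T)^[ℓ * n j] x₀) ∈ V := by
    intro k
    have hcross : ∀ᶠ j in atTop, ∀ i ≤ k,
        (⇑T)^[m * n i] x₁ ∈ V → (⇑T)^[m * n i] ((⇑T)^[ℓ * n j] x₀) ∈ V := by
      have hfin : ∀ᶠ j in atTop, ∀ i ∈ Finset.range (k+1),
          (⇑T)^[m * n i] x₁ ∈ V → (⇑T)^[m * n i] ((⇑T)^[ℓ * n j] x₀) ∈ V := by
        refine (Filter.eventually_all_finset (Finset.range (k+1))).2 ?_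
        intro i _
        by_cases hiv : (⇑T)^[m * n i] x₁ ∈ V
        · have hc : Tendsto (fun j => (⇑T)^[m * n i] ((⇑T)^[ℓ * n j] x₀)) atTop
              (nhds ((⇑T)^[m * n i] x₁)) :=
            ((T.continuous.iterate (m * n i)).continuousAt).tendsto.comp h1
          exact (hc.eventually (p := fun y => y ∈ V) (hV.mem_nhds hiv)).mono (fun j hj _ => hj)
        · exact Filter.Eventually.of_forall (fun j h => absurd h hiv)
      exact hfin.mono (fun j hj i hik =>
        hj i (Finset.mem_range.2 (Nat.lt_succ_of_le hik)))
    exact ((eventually_gt_atTop k).and (hU'.and (hV'.and hcross))).exists.imp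
      (fun j hj => ⟨hj.1, ⟨hj.2.1, hj.2.2.1⟩, hj.2.2.2⟩)
  set g : ℕ → ℕ := fun k => Nat.rec (Classical.choose (key 0))
    (fun _ prev => Classical.choose (key prev)) k with hg
  have hg0 := Classical.choose_spec (key 0)
  have hgs : ∀ k, g k < g (k+1) ∧ ((⇑T)^[ℓ * n (g (k+1))] x₀ ∈ U ∧
      (⇑T)^[m * n (g (k+1))] x₁ ∈ V) ∧
      ∀ i ≤ g k, (⇑T)^[m * n i] x₁ ∈ V →
        (⇑T)^[m * n i] ((⇑T)^[ℓ * n (g (k+1))] x₀) ∈ V :=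
    fun k => Classical.choose_spec (key (g k))
  have sg : StrictMono g := strictMono_nat_of_lt_succ (fun k => (hgs k).1)
  have hP : ∀ k, (⇑T)^[ℓ * n (g k)] x₀ ∈ U ∧ (⇑T)^[m * n (g k)] x₁ ∈ V := by
    intro k
    cases k with
    | zero => exact hg0.2.1
    | succ r => exact (hgs r).2.1
  have sng : StrictMono (fun k => n (g k)) := hmono.comp sg
  refine ⟨Set.range (fun k => n (g k)), Set.infinite_range_of_injective sng.injective,
    ?_, ?_⟩
  · rintro b ⟨k, rfl⟩
    exact (hP k).1
  · rintro b₁ ⟨r, rfl⟩ b₂ ⟨s, rfl⟩ hlt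
    have hrs : r < s := sng.lt_iff_lt.1 hlt
    obtain ⟨t, rfl⟩ := Nat.exists_eq_add_of_lt hrs
    have hle : g r ≤ g (r + t) := sg.monotone (Nat.le_add_right r t)
    have := (hgs (r + t)).2.2 (g r) hle (hP r).2
    rwa [Function.iterate_add_apply]
end

section
/- Let (X, μ, T) be a measure preserving system and let ℓ, m be positive integers. If f ∈ L^∞(X, μ) is a weak-mixing function and g ∈ L^∞(X, μ), then the averages (1/N) Σ_{n=1}^{N} (f ∘ T^{ℓn}) ⊗ (g ∘ T^{mn}) converge to 0 in L²(μ × μ) as N → ∞. -/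
open Filter MeasureTheory Topology

local notation "⟪" x ", " y "⟫" => @inner ℂ _ _ x y

lemma myLp_coeFn_sum {α E : Type*} [MeasurableSpace α] {μ : Measure α}
    [NormedAddCommGroup E] {p : ENNReal} {ι : Type*} (s : Finset ι) (u : ι → Lp E p μ) :
    ⇑(∑ i ∈ s, u i) =ᵐ[μ] fun x => ∑ i ∈ s, u i x := by
  classical
  induction s using Finset.induction_on with
  | empty => simp only [Finset.sum_empty]; exact Lp.coeFn_zero E p μ
  | @insert a s ha ih =>
      rw [Finset.sum_insert ha]
      filter_upwards [Lp.coeFn_add (u a) (∑ i ∈ s, u i), ih] with x hx1 hx2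
      rw [hx1, Pi.add_apply, hx2, Finset.sum_insert ha]

lemma myFilterSum (c : ℕ → ℝ) (hc : ∀ d, 0 ≤ c d) (N : ℕ)
    (t : Finset ℕ) (e : ℕ → ℕ) (he : Set.InjOn e t)
    (him : ∀ x ∈ t, e x = 0 ∨ e x ∈ Finset.Icc 1 N) :
    ∑ n' ∈ t, c (e n') ≤ c 0 + ∑ d ∈ Finset.Icc 1 N, c d := by
  classical
  rw [← Finset.sum_image (fun x hx y hy h => he hx hy h)]
  have hsub : t.image e ⊆ insert 0 (Finset.Icc 1 N) := by
    intro d hd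
    rcases Finset.mem_image.1 hd with ⟨x, hx, rfl⟩
    rcases him x hx with h | h
    · simp [h]
    · exact Finset.mem_insert_of_mem h
  calc ∑ d ∈ t.image e, c d ≤ ∑ d ∈ insert 0 (Finset.Icc 1 N), c d :=
        Finset.sum_le_sum_of_subset_of_nonneg hsub (fun _ _ _ => hc _)
    _ = c 0 + ∑ d ∈ Finset.Icc 1 N, c d := Finset.sum_insert (by simp)

lemma myDoubleSum (c : ℕ → ℝ) (hc : ∀ d, 0 ≤ c d) (N : ℕ) :
    ∑ n ∈ Finset.Icc 1 N, ∑ n' ∈ Finset.Icc 1 N, c ((n' - n) + (n - n')) ≤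
      (N : ℝ) * (2 * c 0 + 2 * ∑ d ∈ Finset.Icc 1 N, c d) := by
  classical
  have inner : ∀ n ∈ Finset.Icc 1 N,
      ∑ n' ∈ Finset.Icc 1 N, c ((n' - n) + (n - n')) ≤
        2 * c 0 + 2 * ∑ d ∈ Finset.Icc 1 N, c d := by
    intro n hn
    set t₁ := (Finset.Icc 1 N).filter (· ≤ n) with ht₁
    set t₂ := (Finset.Icc 1 N).filter (n ≤ ·) with ht₂
    have hcover : Finset.Icc 1 N ⊆ t₁ ∪ t₂ := by
      intro x hx
      rcases le_total x n with h | h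
      · exact Finset.mem_union_left _ (Finset.mem_filter.2 ⟨hx, h⟩)
      · exact Finset.mem_union_right _ (Finset.mem_filter.2 ⟨hx, h⟩)
    have hunion : ∑ n' ∈ t₁ ∪ t₂, c ((n' - n) + (n - n')) ≤
        (∑ n' ∈ t₁, c ((n' - n) + (n - n'))) + ∑ n' ∈ t₂, c ((n' - n) + (n - n')) := by
      rw [← Finset.sum_union_inter]
      exact le_add_of_nonneg_right (Finset.sum_nonneg fun _ _ => hc _)
    have h1 : ∑ n' ∈ t₁, c ((n' - n) + (n - n')) ≤ c 0 + ∑ d ∈ Finset.Icc 1 N, c d := by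
      have heq : ∀ n' ∈ t₁, c ((n' - n) + (n - n')) = c (n - n') := by
        intro n' hn'
        have := (Finset.mem_filter.1 hn').2
        congr 1; omega
      rw [Finset.sum_congr rfl heq]
      refine myFilterSum c hc N t₁ (fun n' => n - n') ?_ ?_
      · intro x hx y hy h
        simp only [ht₁, Finset.coe_filter, Set.mem_setOf_eq, Finset.mem_Icc] at hx hy
        dsimp only at h
        omega
      · intro x hx
        simp only [ht₁, Finset.mem_filter, Finset.mem_Icc] at hx
        simp only [Finset.mem_Icc] at hn ⊢
        omega
    have h2 : ∑ n' ∈ t₂, c ((n' - n) + (n - n')) ≤ c 0 + ∑ d ∈ Finset.Icc 1 N, c d := by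
      have heq : ∀ n' ∈ t₂, c ((n' - n) + (n - n')) = c (n' - n) := by
        intro n' hn'
        have := (Finset.mem_filter.1 hn').2
        congr 1; omega
      rw [Finset.sum_congr rfl heq]
      refine myFilterSum c hc N t₂ (fun n' => n' - n) ?_ ?_
      · intro x hx y hy h
        simp only [ht₂, Finset.coe_filter, Set.mem_setOf_eq, Finset.mem_Icc] at hx hy
        dsimp only at h
        omega
      · intro x hx
        simp only [ht₂, Finset.mem_filter, Finset.mem_Icc] at hx
        simp only [Finset.mem_Icc] at hn ⊢
        omega
    calc ∑ n' ∈ Finset.Icc 1 N, c ((n' - n) + (n - n'))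
        ≤ ∑ n' ∈ t₁ ∪ t₂, c ((n' - n) + (n - n')) :=
          Finset.sum_le_sum_of_subset_of_nonneg hcover (fun _ _ _ => hc _)
      _ ≤ _ := hunion
      _ ≤ 2 * c 0 + 2 * ∑ d ∈ Finset.Icc 1 N, c d := by linarith
  calc ∑ n ∈ Finset.Icc 1 N, ∑ n' ∈ Finset.Icc 1 N, c ((n' - n) + (n - n'))
      ≤ ∑ _n ∈ Finset.Icc 1 N, (2 * c 0 + 2 * ∑ d ∈ Finset.Icc 1 N, c d) :=
        Finset.sum_le_sum inner
    _ = (N : ℝ) * (2 * c 0 + 2 * ∑ d ∈ Finset.Icc 1 N, c d) := by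
        rw [Finset.sum_const, Nat.card_Icc]; simp [nsmul_eq_mul]; ring

lemma myCorr {X : Type*} [MeasurableSpace X] (μ : Measure X)
    (T : X → X) (hT : MeasurePreserving T μ μ) (f : X → ℂ) (hf : AEStronglyMeasurable f μ)
    (j k : ℕ) :
    ∫ x, (starRingEnd ℂ) (f (T^[j] x)) * f (T^[j + k] x) ∂μ
      = ∫ x, f (T^[k] x) * (starRingEnd ℂ) (f x) ∂μ := by
  have hTj := hT.iterate j
  have hφ : AEStronglyMeasurable (fun y => (starRingEnd ℂ) (f y) * f (T^[k] y)) μ :=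
    (RCLike.continuous_conj.comp_aestronglyMeasurable hf).mul
      (hf.comp_measurePreserving (hT.iterate k))
  calc ∫ x, (starRingEnd ℂ) (f (T^[j] x)) * f (T^[j + k] x) ∂μ
      = ∫ x, (fun y => (starRingEnd ℂ) (f y) * f (T^[k] y)) (T^[j] x) ∂μ := by
        congr 1; funext x
        rw [add_comm j k, Function.iterate_add_apply]
    _ = ∫ y, (starRingEnd ℂ) (f y) * f (T^[k] y) ∂μ := by
        have h := integral_map (φ := T^[j]) hTj.measurable.aemeasurable
          (f := fun y => (starRingEnd ℂ) (f y) * f (T^[k] y)) (by rwa [hTj.map_eq])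
        rw [hTj.map_eq] at h
        exact h.symm
    _ = ∫ y, f (T^[k] y) * (starRingEnd ℂ) (f y) ∂μ := by
        congr 1; funext y; ring

/-- **The Kronecker factor is characteristic: weak-mixing components vanish.**
If `f ∈ L^∞(μ)` is weak-mixing and `g ∈ L^∞(μ)`, then the averages
`(1/N) ∑_{n=1}^N (f ∘ T^{ℓn}) ⊗ (g ∘ T^{mn})` converge to `0` in `L²(μ × μ)`. -/
theorem weakMixing_average_tendsto_zero {X : Type*} [MeasurableSpace X]
    (μ : Measure X) [IsProbabilityMeasure μ]
    (T : X → X) (hT : MeasurePreserving T μ μ) (hTbij : Function.Bijective T)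
    (ℓ m : ℕ) (hℓ : 0 < ℓ) (hm : 0 < m)
    (f g : X → ℂ) (hf : MemLp f ⊤ μ) (hg : MemLp g ⊤ μ)
    (hwm : Filter.Tendsto
      (fun N : ℕ =>
        (∑ n ∈ Finset.Icc 1 N, ‖∫ x, f (T^[n] x) * (starRingEnd ℂ) (f x) ∂μ‖) / N)
      Filter.atTop (nhds 0)) :
    Filter.Tendsto
      (fun N : ℕ =>
        eLpNorm (fun p : X × X =>
          (∑ n ∈ Finset.Icc 1 N, f (T^[ℓ * n] p.1) * g (T^[m * n] p.2)) / (N : ℂ))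
          2 (μ.prod μ))
      Filter.atTop (nhds 0) := by
  classical
  -- essential sup bounds
  set Cf := (eLpNorm f ⊤ μ).toReal with hCf_def
  set Cg := (eLpNorm g ⊤ μ).toReal with hCg_def
  have hCf0 : 0 ≤ Cf := ENNReal.toReal_nonneg
  have hCg0 : 0 ≤ Cg := ENNReal.toReal_nonneg
  have hfae : ∀ᵐ x ∂μ, ‖f x‖ ≤ Cf := by
    filter_upwards [enorm_ae_le_eLpNormEssSup f μ] with x hx
    have hne : eLpNormEssSup f μ ≠ ⊤ := by
      simpa [eLpNorm_exponent_top] using hf.2.ne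
    have := ENNReal.toReal_mono hne hx
    simpa [hCf_def, eLpNorm_exponent_top] using this
  have hgae : ∀ᵐ x ∂μ, ‖g x‖ ≤ Cg := by
    filter_upwards [enorm_ae_le_eLpNormEssSup g μ] with x hx
    have hne : eLpNormEssSup g μ ≠ ⊤ := by
      simpa [eLpNorm_exponent_top] using hg.2.ne
    have := ENNReal.toReal_mono hne hx
    simpa [hCg_def, eLpNorm_exponent_top] using this
  -- projections are measure preserving
  have mpfst : MeasurePreserving (Prod.fst : X × X → X) (μ.prod μ) μ :=
    ⟨measurable_fst, by simp⟩
  have mpsnd : MeasurePreserving (Prod.snd : X × X → X) (μ.prod μ) μ :=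
    ⟨measurable_snd, by simp⟩
  -- membership in L²(μ × μ)
  have hF : ∀ n : ℕ,
      MemLp (fun p : X × X => f (T^[ℓ * n] p.1) * g (T^[m * n] p.2)) 2 (μ.prod μ) := by
    intro n
    have hsm : AEStronglyMeasurable
        (fun p : X × X => f (T^[ℓ * n] p.1) * g (T^[m * n] p.2)) (μ.prod μ) := by
      have h1 : AEStronglyMeasurable (fun x => f (T^[ℓ * n] x)) μ :=
        hf.1.comp_measurePreserving (hT.iterate (ℓ * n))
      have h2 : AEStronglyMeasurable (fun x => g (T^[m * n] x)) μ :=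
        hg.1.comp_measurePreserving (hT.iterate (m * n))
      exact (h1.comp_measurePreserving mpfst).mul (h2.comp_measurePreserving mpsnd)
    have hbd : ∀ᵐ p ∂(μ.prod μ), ‖f (T^[ℓ * n] p.1) * g (T^[m * n] p.2)‖ ≤ Cf * Cg := by
      have h1 : ∀ᵐ p ∂(μ.prod μ), ‖f (T^[ℓ * n] p.1)‖ ≤ Cf :=
        mpfst.quasiMeasurePreserving.ae
          ((hT.iterate (ℓ * n)).quasiMeasurePreserving.ae hfae)
      have h2 : ∀ᵐ p ∂(μ.prod μ), ‖g (T^[m * n] p.2)‖ ≤ Cg :=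
        mpsnd.quasiMeasurePreserving.ae
          ((hT.iterate (m * n)).quasiMeasurePreserving.ae hgae)
      filter_upwards [h1, h2] with p hp1 hp2
      rw [norm_mul]
      exact mul_le_mul hp1 hp2 (norm_nonneg _) hCf0
    exact (memLp_top_of_bound hsm (Cf * Cg) hbd).mono_exponent le_top
  -- the Lp elements
  set u : ℕ → Lp ℂ 2 (μ.prod μ) := fun n => (hF n).toLp _ with hu_def
  -- correlation sequences
  set a : ℕ → ℂ := fun k => ∫ x, f (T^[k] x) * (starRingEnd ℂ) (f x) ∂μ with ha_def
  set b : ℕ → ℂ := fun k => ∫ x, g (T^[k] x) * (starRingEnd ℂ) (g x) ∂μ with hb_def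
  -- the inner product formula
  have hkey : ∀ n n' : ℕ, n ≤ n' →
      ⟪u n, u n'⟫ = a (ℓ * (n' - n)) * b (m * (n' - n)) := by
    intro n n' hnn
    have h1 : ⟪u n, u n'⟫ = ∫ p : X × X,
        (starRingEnd ℂ) (f (T^[ℓ * n] p.1) * g (T^[m * n] p.2)) *
          (f (T^[ℓ * n'] p.1) * g (T^[m * n'] p.2)) ∂(μ.prod μ) := by
      rw [L2.inner_def]
      apply integral_congr_ae
      filter_upwards [(hF n).coeFn_toLp, (hF n').coeFn_toLp] with p hp1 hp2
      rw [RCLike.inner_apply, hu_def]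
      simp only [hp1, hp2]
      ring
    have h2 : (fun p : X × X =>
        (starRingEnd ℂ) (f (T^[ℓ * n] p.1) * g (T^[m * n] p.2)) *
          (f (T^[ℓ * n'] p.1) * g (T^[m * n'] p.2))) =
        fun p : X × X =>
          (fun x => (starRingEnd ℂ) (f (T^[ℓ * n] x)) * f (T^[ℓ * n'] x)) p.1 *
          (fun y => (starRingEnd ℂ) (g (T^[m * n] y)) * g (T^[m * n'] y)) p.2 := by
      funext p
      simp only [map_mul]
      ring
    rw [h1, h2]
    refine (integral_prod_mul (L := ℂ) (fun x => (starRingEnd ℂ) (f (T^[ℓ * n] x)) * f (T^[ℓ * n'] x)) (fun y => (starRingEnd ℂ) (g (T^[m * n] y)) * g (T^[m * n'] y))).trans ?_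
    have e1 : ℓ * n' = ℓ * n + ℓ * (n' - n) := by
      rw [← Nat.mul_add, Nat.add_sub_cancel' hnn]
    have e2 : m * n' = m * n + m * (n' - n) := by
      rw [← Nat.mul_add, Nat.add_sub_cancel' hnn]
    rw [e1, e2]
    exact congrArg₂ (· * ·)
      (myCorr μ T hT f hf.1 (ℓ * n) (ℓ * (n' - n)))
      (myCorr μ T hT g hg.1 (m * n) (m * (n' - n)))
  -- uniform bounds on correlations
  have hbk : ∀ k, ‖b k‖ ≤ Cg * Cg := by
    intro k
    have hae : ∀ᵐ x ∂μ, ‖g (T^[k] x) * (starRingEnd ℂ) (g x)‖ ≤ Cg * Cg := by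
      filter_upwards [hgae, (hT.iterate k).quasiMeasurePreserving.ae hgae] with x h1 h2
      rw [norm_mul, RCLike.norm_conj]
      exact mul_le_mul h2 h1 (norm_nonneg _) hCg0
    calc ‖b k‖ ≤ Cg * Cg * (μ Set.univ).toReal :=
          norm_integral_le_of_norm_le_const hae
      _ = Cg * Cg := by simp
  -- the bound sequence
  set c : ℕ → ℝ := fun d => ‖a (ℓ * d)‖ * (Cg * Cg) with hc_def
  have hc0 : ∀ d, 0 ≤ c d := fun d => mul_nonneg (norm_nonneg _) (mul_nonneg hCg0 hCg0)
  have hpair : ∀ n n' : ℕ, ‖⟪u n, u n'⟫‖ ≤ c ((n' - n) + (n - n')) := by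
    intro n n'
    rcases le_total n n' with h | h
    · rw [hkey n n' h, show (n' - n) + (n - n') = n' - n by omega, hc_def]
      rw [norm_mul]
      exact mul_le_mul_of_nonneg_left (hbk _) (norm_nonneg _)
    · have hsymm : ⟪u n, u n'⟫ = (starRingEnd ℂ) ⟪u n', u n⟫ := (inner_conj_symm _ _).symm
      rw [hsymm, RCLike.norm_conj, hkey n' n h,
        show (n' - n) + (n - n') = n - n' by omega, hc_def]
      rw [norm_mul]
      exact mul_le_mul_of_nonneg_left (hbk _) (norm_nonneg _)
  -- norm-squared of the sum
  have hnormsq : ∀ N : ℕ, ‖∑ n ∈ Finset.Icc 1 N, u n‖ ^ 2 ≤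
      (N : ℝ) * (2 * c 0 + 2 * ∑ d ∈ Finset.Icc 1 N, c d) := by
    intro N
    have h1 : ‖∑ n ∈ Finset.Icc 1 N, u n‖ ^ 2 =
        RCLike.re ⟪∑ n ∈ Finset.Icc 1 N, u n, ∑ n' ∈ Finset.Icc 1 N, u n'⟫ :=
      (inner_self_eq_norm_sq _).symm
    calc ‖∑ n ∈ Finset.Icc 1 N, u n‖ ^ 2
        = RCLike.re ⟪∑ n ∈ Finset.Icc 1 N, u n, ∑ n' ∈ Finset.Icc 1 N, u n'⟫ := h1
      _ ≤ ‖⟪∑ n ∈ Finset.Icc 1 N, u n, ∑ n' ∈ Finset.Icc 1 N, u n'⟫‖ :=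
          RCLike.re_le_norm _
      _ = ‖∑ n ∈ Finset.Icc 1 N, ∑ n' ∈ Finset.Icc 1 N, ⟪u n, u n'⟫‖ := by
          rw [sum_inner]
          congr 1
          exact Finset.sum_congr rfl fun n _ => inner_sum _ _ _
      _ ≤ ∑ n ∈ Finset.Icc 1 N, ∑ n' ∈ Finset.Icc 1 N, ‖⟪u n, u n'⟫‖ :=
          (norm_sum_le _ _).trans (Finset.sum_le_sum fun n _ => norm_sum_le _ _)
      _ ≤ ∑ n ∈ Finset.Icc 1 N, ∑ n' ∈ Finset.Icc 1 N, c ((n' - n) + (n - n')) :=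
          Finset.sum_le_sum fun n _ => Finset.sum_le_sum fun n' _ => hpair n n'
      _ ≤ (N : ℝ) * (2 * c 0 + 2 * ∑ d ∈ Finset.Icc 1 N, c d) := myDoubleSum c hc0 N
  -- the averaged Lp elements
  set w : ℕ → Lp ℂ 2 (μ.prod μ) := fun N => ((N : ℂ))⁻¹ • ∑ n ∈ Finset.Icc 1 N, u n
    with hw_def
  have hwnorm : ∀ N : ℕ, ‖w N‖ ^ 2 ≤
      (N : ℝ)⁻¹ * (2 * c 0 + 2 * ∑ d ∈ Finset.Icc 1 N, c d) := by
    intro N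
    rcases Nat.eq_zero_or_pos N with rfl | hN
    · simp [hw_def]
    · have hNpos : (0:ℝ) < N := by exact_mod_cast hN
      have h1 : ‖w N‖ = (N : ℝ)⁻¹ * ‖∑ n ∈ Finset.Icc 1 N, u n‖ := by
        rw [hw_def]
        simp only [norm_smul, norm_inv]
        norm_num
      rw [h1, mul_pow]
      calc ((N:ℝ)⁻¹) ^ 2 * ‖∑ n ∈ Finset.Icc 1 N, u n‖ ^ 2
          ≤ ((N:ℝ)⁻¹) ^ 2 * ((N : ℝ) * (2 * c 0 + 2 * ∑ d ∈ Finset.Icc 1 N, c d)) := by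
            exact mul_le_mul_of_nonneg_left (hnormsq N) (by positivity)
        _ = (N : ℝ)⁻¹ * (2 * c 0 + 2 * ∑ d ∈ Finset.Icc 1 N, c d) := by
            field_simp
  -- Cesàro averages along multiples of ℓ
  have hsub : ∀ N : ℕ, ∑ d ∈ Finset.Icc 1 N, ‖a (ℓ * d)‖ ≤
      ∑ k ∈ Finset.Icc 1 (ℓ * N), ‖a k‖ := by
    intro N
    have hinj : ∀ x ∈ Finset.Icc 1 N, ∀ y ∈ Finset.Icc 1 N,
        ℓ * x = ℓ * y → x = y := by
      intro x _ y _ h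
      exact Nat.eq_of_mul_eq_mul_left hℓ h
    calc ∑ d ∈ Finset.Icc 1 N, ‖a (ℓ * d)‖
        = ∑ k ∈ (Finset.Icc 1 N).image (fun d => ℓ * d), ‖a k‖ :=
          (Finset.sum_image (f := fun k => ‖a k‖) hinj).symm
      _ ≤ ∑ k ∈ Finset.Icc 1 (ℓ * N), ‖a k‖ := ?_
    apply Finset.sum_le_sum_of_subset_of_nonneg
    · intro k hk
      rcases Finset.mem_image.1 hk with ⟨d, hd, rfl⟩
      simp only [Finset.mem_Icc] at hd ⊢
      refine ⟨?_, Nat.mul_le_mul_left ℓ hd.2⟩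
      calc 1 ≤ d := hd.1
        _ ≤ ℓ * d := Nat.le_mul_of_pos_left d hℓ
    · exact fun _ _ _ => norm_nonneg _
  -- the majorant tends to zero
  have hℓtop : Tendsto (fun N : ℕ => ℓ * N) atTop atTop :=
    Filter.tendsto_atTop_mono (fun N => Nat.le_mul_of_pos_left N hℓ) tendsto_id
  have htends : Tendsto (fun N : ℕ => 2 * c 0 * (N : ℝ)⁻¹ +
      2 * (Cg * Cg) * (ℓ : ℝ) *
        ((∑ k ∈ Finset.Icc 1 (ℓ * N), ‖a k‖) / ((ℓ * N : ℕ) : ℝ)))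
      atTop (nhds 0) := by
    have h1 : Tendsto (fun N : ℕ => 2 * c 0 * (N : ℝ)⁻¹) atTop (nhds 0) := by
      simpa using tendsto_inv_atTop_nhds_zero_nat.const_mul (2 * c 0)
    have h3 : Tendsto (fun N : ℕ =>
        (∑ k ∈ Finset.Icc 1 (ℓ * N), ‖a k‖) / ((ℓ * N : ℕ) : ℝ)) atTop (nhds 0) :=
      hwm.comp hℓtop
    have h4 := h3.const_mul (2 * (Cg * Cg) * (ℓ : ℝ))
    simpa using h1.add h4
  -- squeeze for the squared norms
  have hwB : ∀ N : ℕ, ‖w N‖ ^ 2 ≤ 2 * c 0 * (N : ℝ)⁻¹ +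
      2 * (Cg * Cg) * (ℓ : ℝ) *
        ((∑ k ∈ Finset.Icc 1 (ℓ * N), ‖a k‖) / ((ℓ * N : ℕ) : ℝ)) := by
    intro N
    refine (hwnorm N).trans ?_
    rcases Nat.eq_zero_or_pos N with rfl | hN
    · simp
    · have hNne : (N : ℝ) ≠ 0 := (Nat.cast_pos.mpr hN).ne'
      have hℓne : (ℓ : ℝ) ≠ 0 := (Nat.cast_pos.mpr hℓ).ne'
      have hNinv : (0:ℝ) ≤ (N : ℝ)⁻¹ := by positivity
      have hsum_eq : ∑ d ∈ Finset.Icc 1 N, c d =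
          (∑ d ∈ Finset.Icc 1 N, ‖a (ℓ * d)‖) * (Cg * Cg) := by
        rw [hc_def, ← Finset.sum_mul]
      have hcast : ((ℓ * N : ℕ) : ℝ) = (ℓ : ℝ) * (N : ℝ) := by push_cast; ring
      have e : 2 * (Cg * Cg) * (ℓ : ℝ) *
          ((∑ k ∈ Finset.Icc 1 (ℓ * N), ‖a k‖) / ((ℓ : ℝ) * (N : ℝ))) =
          2 * (Cg * Cg) * (∑ k ∈ Finset.Icc 1 (ℓ * N), ‖a k‖) * (N : ℝ)⁻¹ := by
        field_simp
      rw [hcast, e, hsum_eq]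
      have hS := hsub N
      have hmono : (∑ d ∈ Finset.Icc 1 N, ‖a (ℓ * d)‖) * (Cg * Cg) ≤
          (∑ k ∈ Finset.Icc 1 (ℓ * N), ‖a k‖) * (Cg * Cg) :=
        mul_le_mul_of_nonneg_right hS (mul_nonneg hCg0 hCg0)
      calc (N : ℝ)⁻¹ * (2 * c 0 + 2 * ((∑ d ∈ Finset.Icc 1 N, ‖a (ℓ * d)‖) * (Cg * Cg)))
          ≤ (N : ℝ)⁻¹ * (2 * c 0 + 2 * ((∑ k ∈ Finset.Icc 1 (ℓ * N), ‖a k‖) * (Cg * Cg))) := by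
            apply mul_le_mul_of_nonneg_left _ hNinv
            linarith
        _ = 2 * c 0 * (N : ℝ)⁻¹ +
            2 * (Cg * Cg) * (∑ k ∈ Finset.Icc 1 (ℓ * N), ‖a k‖) * (N : ℝ)⁻¹ := by ring
  have hsq : Tendsto (fun N : ℕ => ‖w N‖ ^ 2) atTop (nhds 0) :=
    squeeze_zero (fun N => sq_nonneg _) hwB htends
  have hnorm : Tendsto (fun N : ℕ => ‖w N‖) atTop (nhds 0) := by
    have h := hsq.sqrt
    simpa [Real.sqrt_sq (norm_nonneg _)] using h
  -- identify eLpNorm with the Lp norm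
  have hfinal : ∀ N : ℕ,
      eLpNorm (fun p : X × X =>
        (∑ n ∈ Finset.Icc 1 N, f (T^[ℓ * n] p.1) * g (T^[m * n] p.2)) / (N : ℂ))
        2 (μ.prod μ) = ENNReal.ofReal ‖w N‖ := by
    intro N
    have h3 : ∀ᵐ p ∂(μ.prod μ), ∀ n ∈ Finset.Icc 1 N,
        u n p = f (T^[ℓ * n] p.1) * g (T^[m * n] p.2) := by
      rw [Filter.eventually_all_finset]
      exact fun n _ => (hF n).coeFn_toLp
    have hae : (fun p : X × X =>
        (∑ n ∈ Finset.Icc 1 N, f (T^[ℓ * n] p.1) * g (T^[m * n] p.2)) / (N : ℂ))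
        =ᵐ[μ.prod μ] ⇑(w N) := by
      filter_upwards [Lp.coeFn_smul ((N : ℂ))⁻¹ (∑ n ∈ Finset.Icc 1 N, u n),
        myLp_coeFn_sum (Finset.Icc 1 N) u, h3] with p hp1 hp2 hp3
      simp only [hw_def]
      rw [hp1, Pi.smul_apply, hp2, smul_eq_mul, div_eq_inv_mul]
      congr 1
      exact Finset.sum_congr rfl fun n hn => (hp3 n hn).symm
    rw [eLpNorm_congr_ae hae, Lp.norm_def,
      ENNReal.ofReal_toReal (Lp.eLpNorm_lt_top (w N)).ne]
  have hof : Tendsto (fun N : ℕ => ENNReal.ofReal ‖w N‖) atTop (nhds 0) := by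
    simpa using ENNReal.tendsto_ofReal hnorm
  exact Tendsto.congr (fun N => (hfinal N).symm) hof
end

section
/- Let ℓ, m be positive integers and k = m/ℓ. There exist sets A, A' ⊆ ℕ with upper density d̄(A) = 1 − 1/(k+2) and d̄(A') = 1 − 1/(ℓ(k+1)(k+2)) such that for every infinite set B ⊆ ℕ and every positive integer t, the set {m·b₁ + ℓ·b₂ : b₁, b₂ ∈ B and b₁ ≤ b₂} + t is not contained in A, and the set {m·b₁ + ℓ·b₂ : b₁, b₂ ∈ B and b₁ ≤ b₂} is not contained in A'. -/
open Filter MeasureTheory Topology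

open scoped Classical in
/-- Upper Banach density: `limsup` over window length `N` of the maximal count of
elements of `A` in a window of length `N`, divided by `N`. -/
noncomputable def upperBanachDensity (A : Set ℕ) : ℝ :=
  Filter.limsup
    (fun N : ℕ => ⨆ M : ℕ, (((Finset.Ico M (M + N)).filter (· ∈ A)).card : ℝ) / N)
    Filter.atTop

open scoped Classical in
/-- Natural upper density of a set of naturals. -/
noncomputable def upperDensity (A : Set ℕ) : ℝ :=
  Filter.limsup (fun N : ℕ => (((Finset.Icc 1 N).filter (· ∈ A)).card : ℝ) / N)
    Filter.atTop

open scoped Classical in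
/-- Natural lower density of a set of naturals. -/
noncomputable def lowerDensity (A : Set ℕ) : ℝ :=
  Filter.liminf (fun N : ℕ => (((Finset.Icc 1 N).filter (· ∈ A)).card : ℝ) / N)
    Filter.atTop

namespace OptAux

open Finset

/-- Left endpoints of the blocks. -/
def cc (L M : ℕ) : ℕ → ℕ
  | 0 => L * (4*L+5)^3
  | (j+1) => (M * ((M * cc L M j) / L - (j+1)) + L - 1) / L

/-- Right endpoints of the blocks. -/
def dd (L M : ℕ) (j : ℕ) : ℕ := (M * cc L M j) / L - (j + 1)

lemma cc_succ (L M j : ℕ) : cc L M (j+1) = (M * dd L M j + L - 1) / L := rfl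

/-- ceiling division lower bound -/
lemma ceil_lb {L : ℕ} (hL : 0 < L) (a : ℕ) : a ≤ L * ((a + L - 1) / L) := by
  have h1 := Nat.div_add_mod (a + L - 1) L
  have h2 := Nat.mod_lt (a + L - 1) hL
  set X := L * ((a + L - 1) / L) with hX
  set R := (a + L - 1) % L with hR
  omega

/-- ceiling division upper bound -/
lemma ceil_ub {L : ℕ} (hL : 0 < L) (a : ℕ) : L * ((a + L - 1) / L) ≤ a + L - 1 := by
  have h1 := Nat.div_add_mod (a + L - 1) L
  set X := L * ((a + L - 1) / L) with hX
  omega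

lemma floor_lb {L : ℕ} (hL : 0 < L) (a : ℕ) : a < L * (a / L) + L := by
  have h1 := Nat.div_add_mod a L
  have h2 := Nat.mod_lt a hL
  set X := L * (a / L) with hX
  set R := a % L with hR
  omega

lemma floor_ub {L : ℕ} (hL : 0 < L) (a : ℕ) : L * (a / L) ≤ a := by
  have h1 := Nat.div_add_mod a L
  set X := L * (a / L) with hX
  omega

section

variable {L M : ℕ}

/-- Key division fact: `(M*c)/L ≥ c + c/L`. -/
lemma Mdiv_ge (hL : 0 < L) (hLM : L < M) (c : ℕ) : c + c / L ≤ (M * c) / L := by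
  have h1 : (c + L * c) / L = c / L + c := Nat.add_mul_div_left c c hL
  have h2 : c + L * c ≤ M * c := by nlinarith
  calc c + c / L = c / L + c := by ring
    _ = (c + L * c) / L := h1.symm
    _ ≤ (M * c) / L := Nat.div_le_div_right h2

lemma cc_grow (hL : 0 < L) (hLM : L < M) : ∀ j, L * (j + (4*L+5))^3 ≤ cc L M j := by
  intro j
  induction j with
  | zero => simp [cc]
  | succ j ih =>
    have hx5 : 4*L+5 ≤ j + (4*L+5) := Nat.le_add_left _ _
    have hxj : j + 1 ≤ j + (4*L+5) := by omega
    set x := j + (4*L+5) with hxdef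
    -- c/L ≥ x^3
    have h1 : x^3 ≤ cc L M j / L := by
      have := Nat.div_le_div_right (c := L) ih
      rwa [Nat.mul_div_cancel_left _ hL] at this
    have h2 : cc L M j + x^3 ≤ (M * cc L M j) / L := by
      have := Mdiv_ge hL hLM (cc L M j)
      omega
    -- x^3 ≥ j + 1 (so subtraction is fine)
    have hx3 : x ≤ x^3 := Nat.le_self_pow (by norm_num) x
    have h3 : cc L M j + x^3 - (j+1) ≤ dd L M j := by
      unfold dd; omega
    have h4 : dd L M j ≤ cc L M (j+1) := by
      rw [cc_succ]
      have hlb := ceil_lb hL (M * dd L M j)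
      have h5 : L * dd L M j ≤ M * dd L M j := Nat.mul_le_mul_right _ (le_of_lt hLM)
      have h6 := ceil_lb hL (M * dd L M j)
      -- L * dd ≤ L * cc(j+1)
      have h7 : L * dd L M j ≤ L * ((M * dd L M j + L - 1) / L) := le_trans h5 h6
      exact Nat.le_of_mul_le_mul_left h7 hL
    -- now the polynomial inequality
    have key : L * (x+1)^3 + (j+1) ≤ L * x^3 + x^3 := by nlinarith [sq_nonneg x, hx5, hxj]
    have : L * (x+1)^3 ≤ cc L M j + x^3 - (j+1) := by omega
    calc L * ((j+1) + (4*L+5))^3 = L * (x+1)^3 := by rw [hxdef]; ring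
      _ ≤ cc L M j + x^3 - (j+1) := this
      _ ≤ dd L M j := h3
      _ ≤ cc L M (j+1) := h4

lemma cc_big (hL : 0 < L) (hLM : L < M) (j : ℕ) : (j + 9)^3 ≤ cc L M j := by
  have h := cc_grow hL hLM j
  have h2 : (j+9)^3 ≤ (j + (4*L+5))^3 := Nat.pow_le_pow_left (by omega) 3
  nlinarith

lemma cc_pos (hL : 0 < L) (hLM : L < M) (j : ℕ) : 0 < cc L M j := by
  have := cc_big hL hLM j
  nlinarith [pow_pos (show 0 < j + 9 by omega) 3]

lemma div_eq_dd (hL : 0 < L) (hLM : L < M) (j : ℕ) :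
    dd L M j + (j+1) = (M * cc L M j) / L := by
  have h2 : cc L M j + (j + (4*L+5))^3 ≤ (M * cc L M j) / L := by
    have ha := Mdiv_ge hL hLM (cc L M j)
    have h1 : (j + (4*L+5))^3 ≤ cc L M j / L := by
      have := Nat.div_le_div_right (c := L) (cc_grow hL hLM j)
      rwa [Nat.mul_div_cancel_left _ hL] at this
    omega
  have hx3 : j + (4*L+5) ≤ (j + (4*L+5))^3 := Nat.le_self_pow (by norm_num) _
  unfold dd; omega

/-- dd is well above cc -/
lemma cd_gap (hL : 0 < L) (hLM : L < M) (j : ℕ) :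
    cc L M j + (j + (4*L+5))^3 ≤ dd L M j + (j+1) := by
  rw [div_eq_dd hL hLM]
  have ha := Mdiv_ge hL hLM (cc L M j)
  have h1 : (j + (4*L+5))^3 ≤ cc L M j / L := by
    have := Nat.div_le_div_right (c := L) (cc_grow hL hLM j)
    rwa [Nat.mul_div_cancel_left _ hL] at this
  omega

lemma cd_lt (hL : 0 < L) (hLM : L < M) (j : ℕ) : cc L M j < dd L M j := by
  have := cd_gap hL hLM j
  have hx3 : j + (4*L+5) ≤ (j + (4*L+5))^3 := Nat.le_self_pow (by norm_num) _
  omega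

lemma H3 (hL : 0 < L) (hLM : L < M) (j : ℕ) :
    L * (dd L M j + (j+1)) ≤ M * cc L M j := by
  rw [div_eq_dd hL hLM]
  exact floor_ub hL _

lemma H4 (hL : 0 < L) (hLM : L < M) (j : ℕ) :
    M * cc L M j < L * (dd L M j + (j+2)) := by
  have h1 : dd L M j + (j+2) = (M * cc L M j) / L + 1 := by
    have := div_eq_dd hL hLM j; omega
  rw [h1, Nat.mul_add, Nat.mul_one]
  exact floor_lb hL _

lemma H1 (hL : 0 < L) (hLM : L < M) (j : ℕ) :
    M * dd L M j ≤ L * cc L M (j+1) := by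
  rw [cc_succ]; exact ceil_lb hL _

lemma H2 (hL : 0 < L) (hLM : L < M) (j : ℕ) :
    L * cc L M (j+1) ≤ M * dd L M j + L := by
  rw [cc_succ]
  have := ceil_ub hL (M * dd L M j)
  omega

lemma dd_pos (hL : 0 < L) (hLM : L < M) (j : ℕ) : 0 < dd L M j := by
  have := cd_lt hL hLM j; omega

lemma dc_lt (hL : 0 < L) (hLM : L < M) (j : ℕ) : dd L M j < cc L M (j+1) := by
  have h1 := H1 hL hLM j
  have h2 : L * dd L M j + dd L M j ≤ M * dd L M j := by nlinarith [dd_pos hL hLM j]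
  have h3 : L * dd L M j < L * cc L M (j+1) := by
    have := dd_pos hL hLM j; omega
  exact Nat.lt_of_mul_lt_mul_left h3

lemma cc_mono (hL : 0 < L) (hLM : L < M) : StrictMono (cc L M) :=
  strictMono_nat_of_lt_succ (fun j => lt_trans (cd_lt hL hLM j) (dc_lt hL hLM j))

lemma dd_mono (hL : 0 < L) (hLM : L < M) : Monotone (dd L M) :=
  monotone_nat_of_le_succ (fun j => le_of_lt (lt_trans (dc_lt hL hLM j) (cd_lt hL hLM (j+1))))

lemma cc_le_of_le (hL : 0 < L) (hLM : L < M) {i j : ℕ} (h : i ≤ j) : cc L M i ≤ cc L M j :=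
  (cc_mono hL hLM).monotone h

lemma self_le_cc (hL : 0 < L) (hLM : L < M) (j : ℕ) : j ≤ cc L M j :=
  (cc_mono hL hLM).le_apply

/-- locate `N` in the block/gap structure -/
lemma locate (hL : 0 < L) (hLM : L < M) {N : ℕ} (hN : cc L M 0 ≤ N) :
    ∃ J, cc L M J ≤ N ∧ N < cc L M (J+1) ∧ (∀ i, cc L M i ≤ N → i ≤ J) := by
  classical
  refine ⟨Nat.findGreatest (fun j => cc L M j ≤ N) N,
    Nat.findGreatest_spec (P := fun j => cc L M j ≤ N) (Nat.zero_le N) hN, ?_, ?_⟩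
  · by_cases hc : Nat.findGreatest (fun j => cc L M j ≤ N) N + 1 ≤ N
    · have h := Nat.findGreatest_is_greatest (P := fun j => cc L M j ≤ N)
        (Nat.lt_succ_self (Nat.findGreatest (fun j => cc L M j ≤ N) N)) hc
      simp only [Nat.succ_eq_add_one] at h
      omega
    · have := self_le_cc hL hLM (Nat.findGreatest (fun j => cc L M j ≤ N) N + 1)
      omega
  · intro i hi
    exact Nat.le_findGreatest (le_trans (self_le_cc hL hLM i) hi) hi

end
end OptAux

namespace OptAux
open Finset

/-- total length of the first `J` blocks -/
def FF (L M : ℕ) (J : ℕ) : ℕ := ∑ j ∈ Finset.range J, (dd L M j - cc L M j)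

/-- total length of the first `J` gaps -/
def GG (L M : ℕ) (J : ℕ) : ℕ := ∑ j ∈ Finset.range J, (cc L M (j+1) - dd L M j)

section
variable {L M : ℕ}

lemma FF_succ (J : ℕ) : FF L M (J+1) = FF L M J + (dd L M J - cc L M J) := by
  unfold FF; rw [Finset.sum_range_succ]

lemma GG_succ (J : ℕ) : GG L M (J+1) = GG L M J + (cc L M (J+1) - dd L M J) := by
  unfold GG; rw [Finset.sum_range_succ]

/-- telescoping identity -/
lemma TEL (hL : 0 < L) (hLM : L < M) (J : ℕ) :
    cc L M 0 + FF L M J + GG L M J = cc L M J := by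
  induction J with
  | zero => simp [FF, GG]
  | succ J ih =>
    rw [FF_succ, GG_succ]
    have h1 := cd_lt hL hLM J
    have h2 := dc_lt hL hLM J
    omega

lemma FF_cast_succ (hL : 0 < L) (hLM : L < M) (J : ℕ) :
    (FF L M (J+1) : ℝ) = FF L M J + dd L M J - cc L M J := by
  rw [FF_succ]
  have h := (cd_lt hL hLM J).le
  push_cast [h]
  ring

/-- NL1: `(M+L) * F(J+1) ≤ M * d_J` -/
lemma NL1 (hL : 0 < L) (hLM : L < M) (J : ℕ) :
    ((M : ℝ) + L) * (FF L M (J+1) : ℝ) ≤ (M : ℝ) * (dd L M J : ℝ) := by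
  induction J with
  | zero =>
    rw [FF_cast_succ hL hLM]
    have h3 : (L : ℝ) * (dd L M 0 + 1) ≤ (M : ℝ) * cc L M 0 := by
      exact_mod_cast H3 hL hLM 0
    have hc : (0:ℝ) ≤ (cc L M 0 : ℝ) := by positivity
    have hl : (0:ℝ) < (L:ℝ) := by exact_mod_cast hL
    simp [FF]
    nlinarith
  | succ J ih =>
    rw [FF_cast_succ hL hLM]
    have h1 : (M : ℝ) * dd L M J ≤ (L : ℝ) * cc L M (J+1) := by
      exact_mod_cast H1 hL hLM J
    have h3 : (L : ℝ) * (dd L M (J+1) + (J+2)) ≤ (M : ℝ) * cc L M (J+1) := by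
      exact_mod_cast H3 hL hLM (J+1)
    have hj : (0:ℝ) ≤ ((J:ℝ)+2) := by positivity
    have hl : (0:ℝ) < (L:ℝ) := by exact_mod_cast hL
    nlinarith

lemma NL2 (hL : 0 < L) (hLM : L < M) (J : ℕ) :
    ((M : ℝ) + L) * (FF L M J : ℝ) ≤ (L : ℝ) * (cc L M J : ℝ) := by
  cases J with
  | zero => simp [FF]; positivity
  | succ J =>
    calc ((M : ℝ) + L) * (FF L M (J+1) : ℝ) ≤ (M : ℝ) * dd L M J := NL1 hL hLM J
      _ ≤ (L : ℝ) * cc L M (J+1) := by exact_mod_cast H1 hL hLM J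

/-- NL3: lower bound on block mass: `M*d_J ≤ (M+L)*F(J+1) + (M+L)*(c_0 + (J+4)^2)` -/
lemma NL3 (hL : 0 < L) (hLM : L < M) (J : ℕ) :
    (M : ℝ) * (dd L M J : ℝ) ≤
      ((M : ℝ) + L) * (FF L M (J+1) : ℝ) + ((M : ℝ) + L) * ((cc L M 0 : ℝ) + ((J:ℝ)+4)^2) := by
  induction J with
  | zero =>
    rw [FF_cast_succ hL hLM]
    have hl : (0:ℝ) < (L:ℝ) := by exact_mod_cast hL
    have hm : (0:ℝ) < (M:ℝ) := by exact_mod_cast (hL.trans hLM)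
    have hd : (0:ℝ) ≤ (dd L M 0 : ℝ) := by positivity
    have hc : (cc L M 0 : ℝ) ≤ (dd L M 0 : ℝ) := by exact_mod_cast (cd_lt hL hLM 0).le
    simp [FF]
    nlinarith
  | succ J ih =>
    rw [FF_cast_succ hL hLM]
    have h2 : (L : ℝ) * cc L M (J+1) ≤ (M : ℝ) * dd L M J + L := by
      exact_mod_cast H2 hL hLM J
    have h4 : (M : ℝ) * cc L M (J+1) ≤ (L : ℝ) * (dd L M (J+1) + (J+3)) := by
      have := (H4 hL hLM (J+1)).le
      exact_mod_cast this
    have hl : (0:ℝ) < (L:ℝ) := by exact_mod_cast hL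
    have hm : (0:ℝ) < (M:ℝ) := by exact_mod_cast (hL.trans hLM)
    have hj : (0:ℝ) ≤ (J:ℝ) := by positivity
    push_cast
    push_cast at ih
    nlinarith [mul_nonneg hm.le hj, mul_nonneg hl.le hj]

end
end OptAux
namespace OptAux
open Finset
open scoped Classical

open scoped Classical in
/-- count of elements of `S` in `[1,N]` -/
noncomputable def cnt (S : Set ℕ) (N : ℕ) : ℕ := ((Finset.Icc 1 N).filter (· ∈ S)).card

/-- the "block" set -/
def Aset (L M : ℕ) : Set ℕ := {x | ∃ j, cc L M j ≤ x ∧ x < dd L M j}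

/-- multiples of `M` in the gaps -/
def Cset (L M : ℕ) : Set ℕ := {x | M ∣ x ∧ ∃ j, dd L M j ≤ x ∧ x < cc L M (j+1)}

section
variable {L M : ℕ}

lemma cnt_le (S : Set ℕ) (N : ℕ) : cnt S N ≤ N := by
  unfold cnt
  calc ((Finset.Icc 1 N).filter (· ∈ S)).card ≤ (Finset.Icc 1 N).card :=
        Finset.card_le_card (Finset.filter_subset _ _)
    _ = N := by rw [Nat.card_Icc]; omega

/-- the complement witness set: avoids `ᶜ` so that classical decidability is used -/
def A'set (L M : ℕ) : Set ℕ := {x | x ∉ Cset L M}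

lemma cnt_compl (L M N : ℕ) : cnt (A'set L M) N + cnt (Cset L M) N = N := by
  unfold cnt
  have h1 : (Finset.Icc 1 N).filter (· ∈ A'set L M)
      = Finset.Icc 1 N \ (Finset.Icc 1 N).filter (· ∈ Cset L M) := by
    ext x
    simp only [Finset.mem_filter, Finset.mem_sdiff, A'set, Set.mem_setOf_eq]
    tauto
  rw [h1, Finset.card_sdiff_of_subset (Finset.filter_subset _ _), Nat.card_Icc]
  have h2 : ((Finset.Icc 1 N).filter (· ∈ Cset L M)).card ≤ (Finset.Icc 1 N).card :=
    Finset.card_le_card (Finset.filter_subset _ _)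
  rw [Nat.card_Icc] at h2
  omega

lemma CL0 (hL : 0 < L) (hLM : L < M) {N : ℕ} (hN : N < cc L M 0) :
    cnt (Aset L M) N = 0 := by
  unfold cnt
  rw [Finset.card_eq_zero, Finset.filter_eq_empty_iff]
  intro x hx
  simp only [Finset.mem_Icc] at hx
  rintro ⟨j, h1, h2⟩
  have := cc_le_of_le hL hLM (Nat.zero_le j)
  omega

lemma CL1a (hL : 0 < L) (hLM : L < M) {N J : ℕ} (hcN : cc L M J ≤ N)
    (hNc : N < cc L M (J+1)) :
    cnt (Aset L M) N ≤ FF L M J + (N + 1 - cc L M J) := by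
  have hsub : (Finset.Icc 1 N).filter (· ∈ Aset L M) ⊆
      ((Finset.range J).biUnion (fun j => Finset.Ico (cc L M j) (dd L M j))) ∪
        Finset.Ico (cc L M J) (N+1) := by
    intro x hx
    simp only [Finset.mem_filter, Finset.mem_Icc] at hx
    obtain ⟨⟨hx1, hx2⟩, j, hj1, hj2⟩ := hx
    have hjJ : j ≤ J := by
      by_contra hc
      have : cc L M (J+1) ≤ cc L M j := cc_le_of_le hL hLM (by omega)
      omega
    rcases Nat.lt_or_ge j J with hlt | hge
    · exact Finset.mem_union_left _ (Finset.mem_biUnion.mpr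
        ⟨j, Finset.mem_range.mpr hlt, Finset.mem_Ico.mpr ⟨hj1, hj2⟩⟩)
    · have hjeq : j = J := le_antisymm hjJ hge
      subst hjeq
      exact Finset.mem_union_right _ (Finset.mem_Ico.mpr ⟨hj1, by omega⟩)
  calc cnt (Aset L M) N
      ≤ (((Finset.range J).biUnion (fun j => Finset.Ico (cc L M j) (dd L M j))) ∪
        Finset.Ico (cc L M J) (N+1)).card := Finset.card_le_card hsub
    _ ≤ ((Finset.range J).biUnion (fun j => Finset.Ico (cc L M j) (dd L M j))).card +
        (Finset.Ico (cc L M J) (N+1)).card := Finset.card_union_le _ _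
    _ ≤ (∑ j ∈ Finset.range J, (Finset.Ico (cc L M j) (dd L M j)).card) +
        (Finset.Ico (cc L M J) (N+1)).card := by
        gcongr
        exact Finset.card_biUnion_le
    _ = FF L M J + (N + 1 - cc L M J) := by
        rw [Nat.card_Ico]
        congr 1
        unfold FF
        exact Finset.sum_congr rfl (fun j _ => Nat.card_Ico _ _)

lemma CL1b (hL : 0 < L) (hLM : L < M) {N J : ℕ} (hdN : dd L M J ≤ N)
    (hNc : N < cc L M (J+1)) :
    cnt (Aset L M) N ≤ FF L M (J+1) := by
  have hsub : (Finset.Icc 1 N).filter (· ∈ Aset L M) ⊆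
      (Finset.range (J+1)).biUnion (fun j => Finset.Ico (cc L M j) (dd L M j)) := by
    intro x hx
    simp only [Finset.mem_filter, Finset.mem_Icc] at hx
    obtain ⟨⟨hx1, hx2⟩, j, hj1, hj2⟩ := hx
    have hjJ : j < J + 1 := by
      by_contra hc
      have : cc L M (J+1) ≤ cc L M j := cc_le_of_le hL hLM (by omega)
      omega
    exact Finset.mem_biUnion.mpr ⟨j, Finset.mem_range.mpr hjJ, Finset.mem_Ico.mpr ⟨hj1, hj2⟩⟩
  calc cnt (Aset L M) N
      ≤ ((Finset.range (J+1)).biUnion (fun j => Finset.Ico (cc L M j) (dd L M j))).card :=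
        Finset.card_le_card hsub
    _ ≤ ∑ j ∈ Finset.range (J+1), (Finset.Ico (cc L M j) (dd L M j)).card :=
        Finset.card_biUnion_le
    _ = FF L M (J+1) := Finset.sum_congr rfl (fun j _ => Nat.card_Ico _ _)

lemma CL2 (hL : 0 < L) (hLM : L < M) (J : ℕ) :
    FF L M (J+1) ≤ cnt (Aset L M) (dd L M J - 1) := by
  have hdisj : ∀ i ∈ Finset.range (J+1), ∀ j ∈ Finset.range (J+1), i ≠ j →
      Disjoint (Finset.Ico (cc L M i) (dd L M i)) (Finset.Ico (cc L M j) (dd L M j)) := by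
    have key : ∀ i j : ℕ, i < j →
        Disjoint (Finset.Ico (cc L M i) (dd L M i)) (Finset.Ico (cc L M j) (dd L M j)) := by
      intro i j hij
      rw [Finset.disjoint_left]
      intro x hx1 hx2
      simp only [Finset.mem_Ico] at hx1 hx2
      have h1 : dd L M i < cc L M (i+1) := dc_lt hL hLM i
      have h2 : cc L M (i+1) ≤ cc L M j := cc_le_of_le hL hLM (by omega)
      omega
    intro i _ j _ hij
    rcases Nat.lt_or_ge i j with h | h
    · exact key i j h
    · exact (key j i (by omega)).symm
  have hsub : (Finset.range (J+1)).biUnion (fun j => Finset.Ico (cc L M j) (dd L M j)) ⊆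
      (Finset.Icc 1 (dd L M J - 1)).filter (· ∈ Aset L M) := by
    intro x hx
    obtain ⟨j, hj, hxI⟩ := Finset.mem_biUnion.mp hx
    simp only [Finset.mem_Ico] at hxI
    simp only [Finset.mem_range] at hj
    simp only [Finset.mem_filter, Finset.mem_Icc]
    have h1 : 0 < cc L M j := cc_pos hL hLM j
    have h2 : dd L M j ≤ dd L M J := dd_mono hL hLM (by omega)
    exact ⟨⟨by omega, by omega⟩, j, hxI.1, hxI.2⟩
  calc FF L M (J+1)
      = ∑ j ∈ Finset.range (J+1), (Finset.Ico (cc L M j) (dd L M j)).card :=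
        (Finset.sum_congr rfl (fun j _ => (Nat.card_Ico _ _).symm))
    _ = ((Finset.range (J+1)).biUnion (fun j => Finset.Ico (cc L M j) (dd L M j))).card :=
        (Finset.card_biUnion hdisj).symm
    _ ≤ cnt (Aset L M) (dd L M J - 1) := Finset.card_le_card hsub

end
end OptAux
namespace OptAux
open Finset
open scoped Classical

section
variable {L M : ℕ}

lemma mult_card_eq (hM : 0 < M) {a b : ℕ} (ha : 1 ≤ a) (hab : a ≤ b) :
    ((Finset.Ico a b).filter (M ∣ ·)).card = (b-1)/M - (a-1)/M := by
  have h1 : Finset.Ico a b = Finset.Ioc (a-1) (b-1) := by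
    ext x
    simp only [Finset.mem_Ico, Finset.mem_Ioc]
    omega
  have h2 : Finset.Ioc (a-1) (b-1) = Finset.Ioc 0 (b-1) \ Finset.Ioc 0 (a-1) := by
    ext x
    simp only [Finset.mem_Ioc, Finset.mem_sdiff]
    omega
  have h3 : ((Finset.Ioc 0 (b-1) \ Finset.Ioc 0 (a-1)).filter (M ∣ ·))
      = (Finset.Ioc 0 (b-1)).filter (M ∣ ·) \ (Finset.Ioc 0 (a-1)).filter (M ∣ ·) := by
    ext x
    simp only [Finset.mem_filter, Finset.mem_sdiff]
    tauto
  rw [h1, h2, h3, Finset.card_sdiff_of_subset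
    (Finset.filter_subset_filter _ (Finset.Ioc_subset_Ioc_right (by omega))),
    Nat.Ioc_filter_dvd_card_eq_div, Nat.Ioc_filter_dvd_card_eq_div]

lemma PT1 (hM : 0 < M) {a b : ℕ} (ha : 1 ≤ a) (hab : a ≤ b) :
    b ≤ M * ((Finset.Ico a b).filter (M ∣ ·)).card + a + M := by
  rw [mult_card_eq hM ha hab]
  have hq : (a-1)/M ≤ (b-1)/M := Nat.div_le_div_right (by omega)
  have hmul : M * ((b-1)/M - (a-1)/M) + M * ((a-1)/M) = M * ((b-1)/M) := by
    rw [← Nat.mul_add, Nat.sub_add_cancel hq]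
  have e1 := Nat.div_add_mod (b-1) M
  have e2 := Nat.div_add_mod (a-1) M
  have r1 := Nat.mod_lt (b-1) hM
  have r2 := Nat.mod_lt (a-1) hM
  set X3 := M * ((b-1)/M - (a-1)/M) with hX3
  set X2 := M * ((a-1)/M) with hX2
  set X1 := M * ((b-1)/M) with hX1
  set R1 := (b-1) % M with hR1
  set R2 := (a-1) % M with hR2
  omega

lemma PT2 (hM : 0 < M) {a b : ℕ} (ha : 1 ≤ a) (hab : a ≤ b) :
    M * ((Finset.Ico a b).filter (M ∣ ·)).card + a ≤ b + M := by
  rw [mult_card_eq hM ha hab]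
  have hq : (a-1)/M ≤ (b-1)/M := Nat.div_le_div_right (by omega)
  have hmul : M * ((b-1)/M - (a-1)/M) + M * ((a-1)/M) = M * ((b-1)/M) := by
    rw [← Nat.mul_add, Nat.sub_add_cancel hq]
  have e1 := Nat.div_add_mod (b-1) M
  have e2 := Nat.div_add_mod (a-1) M
  have r1 := Nat.mod_lt (b-1) hM
  have r2 := Nat.mod_lt (a-1) hM
  set X3 := M * ((b-1)/M - (a-1)/M) with hX3
  set X2 := M * ((a-1)/M) with hX2
  set X1 := M * ((b-1)/M) with hX1
  set R1 := (b-1) % M with hR1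
  set R2 := (a-1) % M with hR2
  omega

/-- gaps are pairwise disjoint (as filtered Icos) -/
lemma gap_disjoint (hL : 0 < L) (hLM : L < M) (u : ℕ → ℕ)
    (hu : ∀ j, u j ≤ cc L M (j+1)) {i j : ℕ} (hij : i < j) :
    Disjoint ((Finset.Ico (dd L M i) (u i)).filter (M ∣ ·))
      ((Finset.Ico (dd L M j) (u j)).filter (M ∣ ·)) := by
  rw [Finset.disjoint_left]
  intro x hx1 hx2
  simp only [Finset.mem_filter, Finset.mem_Ico] at hx1 hx2
  have h1 : u i ≤ cc L M (i+1) := hu i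
  have h2 : cc L M (i+1) ≤ cc L M j := cc_le_of_le hL hLM (by omega)
  have h3 : cc L M j < dd L M j := cd_lt hL hLM j
  omega

/-- sums bookkeeping: `∑_{j<J} cc (j+1) = ∑_{j<J} dd j + GG J` -/
lemma sum_cc_eq (hL : 0 < L) (hLM : L < M) (J : ℕ) :
    ∑ j ∈ Finset.range J, cc L M (j+1)
      = (∑ j ∈ Finset.range J, dd L M j) + GG L M J := by
  unfold GG
  rw [← Finset.sum_add_distrib]
  refine Finset.sum_congr rfl (fun j _ => ?_)
  have := dc_lt hL hLM j
  omega

lemma CL3a (hL : 0 < L) (hLM : L < M) {N J : ℕ} (hcN : cc L M J ≤ N) :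
    cc L M J ≤ M * cnt (Cset L M) N + cc L M 0 + FF L M J + J * M := by
  have hM : 0 < M := hL.trans hLM
  set W := (Finset.range J).biUnion
    (fun j => (Finset.Ico (dd L M j) (cc L M (j+1))).filter (M ∣ ·)) with hW
  have hsub : W ⊆ (Finset.Icc 1 N).filter (· ∈ Cset L M) := by
    intro x hx
    obtain ⟨j, hj, hxf⟩ := Finset.mem_biUnion.mp hx
    simp only [Finset.mem_filter, Finset.mem_Ico] at hxf
    simp only [Finset.mem_range] at hj
    simp only [Finset.mem_filter, Finset.mem_Icc]
    have h1 : 0 < dd L M j := dd_pos hL hLM j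
    have h2 : cc L M (j+1) ≤ cc L M J := cc_le_of_le hL hLM (by omega)
    exact ⟨⟨by omega, by omega⟩, hxf.2, j, hxf.1.1, hxf.1.2⟩
  have hcard : W.card = ∑ j ∈ Finset.range J,
      ((Finset.Ico (dd L M j) (cc L M (j+1))).filter (M ∣ ·)).card := by
    apply Finset.card_biUnion
    intro i hi j hj hij
    rcases Nat.lt_or_ge i j with h | h
    · exact gap_disjoint hL hLM _ (fun j => le_refl _) h
    · exact (gap_disjoint hL hLM _ (fun j => le_refl _) (by omega)).symm
  have hsum : ∑ j ∈ Finset.range J, cc L M (j+1)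
      ≤ M * W.card + (∑ j ∈ Finset.range J, dd L M j) + J * M := by
    rw [hcard, Finset.mul_sum, ← Finset.sum_add_distrib]
    calc ∑ j ∈ Finset.range J, cc L M (j+1)
        ≤ ∑ j ∈ Finset.range J,
            (M * ((Finset.Ico (dd L M j) (cc L M (j+1))).filter (M ∣ ·)).card
              + dd L M j + M) := by
          apply Finset.sum_le_sum
          intro j _
          have h1 : 1 ≤ dd L M j := dd_pos hL hLM j
          have h2 : dd L M j ≤ cc L M (j+1) := (dc_lt hL hLM j).le
          have := PT1 hM h1 h2
          omega
      _ = _ := by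
          rw [Finset.sum_add_distrib, Finset.sum_const, Finset.card_range, smul_eq_mul]
  have hGS := sum_cc_eq hL hLM J
  have hWc : W.card ≤ cnt (Cset L M) N := Finset.card_le_card hsub
  have hmul : M * W.card ≤ M * cnt (Cset L M) N := Nat.mul_le_mul_left M hWc
  have hTEL := TEL hL hLM J
  omega

lemma CL3b (hL : 0 < L) (hLM : L < M) {N J : ℕ} (hdN : dd L M J ≤ N)
    (hNc : N < cc L M (J+1)) :
    cc L M J + (N + 1) ≤ M * cnt (Cset L M) N + cc L M 0 + FF L M J + dd L M J + (J+1) * M := by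
  have hM : 0 < M := hL.trans hLM
  set u : ℕ → ℕ := fun j => if j = J then N+1 else cc L M (j+1) with hu
  have hu_le : ∀ j, u j ≤ cc L M (j+1) := by
    intro j
    simp only [u]
    split
    · next h => subst h; omega
    · exact le_refl _
  set W := (Finset.range (J+1)).biUnion
    (fun j => (Finset.Ico (dd L M j) (u j)).filter (M ∣ ·)) with hW
  have hsub : W ⊆ (Finset.Icc 1 N).filter (· ∈ Cset L M) := by
    intro x hx
    obtain ⟨j, hj, hxf⟩ := Finset.mem_biUnion.mp hx
    simp only [Finset.mem_filter, Finset.mem_Ico] at hxf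
    simp only [Finset.mem_range] at hj
    simp only [Finset.mem_filter, Finset.mem_Icc]
    have h1 : 0 < dd L M j := dd_pos hL hLM j
    have h2 : x < cc L M (j+1) := lt_of_lt_of_le hxf.1.2 (hu_le j)
    have h3 : x ≤ N := by
      rcases eq_or_ne j J with h | h
      · subst h; simp only [u, if_pos rfl] at hxf; omega
      · have hj' : j + 1 ≤ J := by omega
        have := cc_le_of_le hL hLM hj'
        have h4 : cc L M J ≤ dd L M J := (cd_lt hL hLM J).le
        omega
    exact ⟨⟨by omega, h3⟩, hxf.2, j, hxf.1.1, h2⟩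
  have hcard : W.card = ∑ j ∈ Finset.range (J+1),
      ((Finset.Ico (dd L M j) (u j)).filter (M ∣ ·)).card := by
    apply Finset.card_biUnion
    intro i hi j hj hij
    rcases Nat.lt_or_ge i j with h | h
    · exact gap_disjoint hL hLM u hu_le h
    · exact (gap_disjoint hL hLM u hu_le (by omega)).symm
  have hsum : ∑ j ∈ Finset.range (J+1), u j
      ≤ M * W.card + (∑ j ∈ Finset.range (J+1), dd L M j) + (J+1) * M := by
    rw [hcard, Finset.mul_sum, ← Finset.sum_add_distrib]
    calc ∑ j ∈ Finset.range (J+1), u j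
        ≤ ∑ j ∈ Finset.range (J+1),
            (M * ((Finset.Ico (dd L M j) (u j)).filter (M ∣ ·)).card + dd L M j + M) := by
          apply Finset.sum_le_sum
          intro j hj
          simp only [Finset.mem_range] at hj
          have h1 : 1 ≤ dd L M j := dd_pos hL hLM j
          have h2 : dd L M j ≤ u j := by
            simp only [u]
            split
            · next h => subst h; omega
            · exact (dc_lt hL hLM j).le
          have := PT1 hM h1 h2
          omega
      _ = _ := by
          rw [Finset.sum_add_distrib, Finset.sum_const, Finset.card_range, smul_eq_mul]
  have hsplit1 : ∑ j ∈ Finset.range (J+1), u j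
      = (∑ j ∈ Finset.range J, cc L M (j+1)) + (N+1) := by
    rw [Finset.sum_range_succ]
    congr 1
    · refine Finset.sum_congr rfl (fun j hj => ?_)
      simp only [Finset.mem_range] at hj
      simp only [u, if_neg (by omega : j ≠ J)]
    · simp [u]
  have hsplit2 : ∑ j ∈ Finset.range (J+1), dd L M j
      = (∑ j ∈ Finset.range J, dd L M j) + dd L M J := Finset.sum_range_succ _ _
  have hGS := sum_cc_eq hL hLM J
  have hWc : W.card ≤ cnt (Cset L M) N := Finset.card_le_card hsub
  have hmul : M * W.card ≤ M * cnt (Cset L M) N := Nat.mul_le_mul_left M hWc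
  have hTEL := TEL hL hLM J
  omega

lemma CL4 (hL : 0 < L) (hLM : L < M) (J : ℕ) :
    M * cnt (Cset L M) (dd L M J - 1) + cc L M 0 + FF L M J ≤ cc L M J + J * M := by
  have hM : 0 < M := hL.trans hLM
  set W := (Finset.range J).biUnion
    (fun j => (Finset.Ico (dd L M j) (cc L M (j+1))).filter (M ∣ ·)) with hW
  have hsub : (Finset.Icc 1 (dd L M J - 1)).filter (· ∈ Cset L M) ⊆ W := by
    intro x hx
    simp only [Finset.mem_filter, Finset.mem_Icc] at hx
    obtain ⟨⟨hx1, hx2⟩, hdvd, j, hj1, hj2⟩ := hx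
    have hjJ : j < J := by
      by_contra hc
      have : dd L M J ≤ dd L M j := dd_mono hL hLM (by omega)
      omega
    exact Finset.mem_biUnion.mpr ⟨j, Finset.mem_range.mpr hjJ,
      Finset.mem_filter.mpr ⟨Finset.mem_Ico.mpr ⟨hj1, hj2⟩, hdvd⟩⟩
  have hcnt : cnt (Cset L M) (dd L M J - 1) ≤ W.card := Finset.card_le_card hsub
  have hWcard : W.card ≤ ∑ j ∈ Finset.range J,
      ((Finset.Ico (dd L M j) (cc L M (j+1))).filter (M ∣ ·)).card :=
    Finset.card_biUnion_le
  have hsum : M * (∑ j ∈ Finset.range J,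
      ((Finset.Ico (dd L M j) (cc L M (j+1))).filter (M ∣ ·)).card)
      + (∑ j ∈ Finset.range J, dd L M j)
      ≤ (∑ j ∈ Finset.range J, cc L M (j+1)) + J * M := by
    rw [Finset.mul_sum, ← Finset.sum_add_distrib]
    calc ∑ j ∈ Finset.range J,
        (M * ((Finset.Ico (dd L M j) (cc L M (j+1))).filter (M ∣ ·)).card + dd L M j)
        ≤ ∑ j ∈ Finset.range J, (cc L M (j+1) + M) := by
          apply Finset.sum_le_sum
          intro j _
          exact PT2 hM (dd_pos hL hLM j) (dc_lt hL hLM j).le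
      _ = _ := by
          rw [Finset.sum_add_distrib, Finset.sum_const, Finset.card_range, smul_eq_mul]
  have hGS := sum_cc_eq hL hLM J
  have hTEL := TEL hL hLM J
  have hmul : M * cnt (Cset L M) (dd L M J - 1)
      ≤ M * (∑ j ∈ Finset.range J,
        ((Finset.Ico (dd L M j) (cc L M (j+1))).filter (M ∣ ·)).card) :=
    Nat.mul_le_mul_left M (le_trans hcnt hWcard)
  omega

end
end OptAux
namespace OptAux
open Finset Filter
open scoped Classical

section
variable {L M : ℕ}

/-- R1: global upper bound for the block count -/
lemma R1 (hL : 0 < L) (hLM : L < M) {N : ℕ} (hN : 1 ≤ N) :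
    ((M:ℝ) + L) * (cnt (Aset L M) N : ℝ) ≤ (M:ℝ) * N + 2 * ((M:ℝ) + L) := by
  have hMLpos : (0:ℝ) < (M:ℝ) + L := by positivity
  have hMpos : (0:ℝ) < (M:ℝ) := by exact_mod_cast (hL.trans hLM)
  have hLpos : (0:ℝ) < (L:ℝ) := by exact_mod_cast hL
  rcases Nat.lt_or_ge N (cc L M 0) with h0 | h0
  · rw [CL0 hL hLM h0]
    have : (0:ℝ) ≤ (N:ℝ) := by positivity
    push_cast
    nlinarith
  · obtain ⟨J, hJ1, hJ2, _⟩ := locate hL hLM h0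
    rcases Nat.lt_or_ge N (dd L M J) with hNd | hNd
    · -- partial block
      have hcl := CL1a hL hLM hJ1 hJ2
      have hcl' : (cnt (Aset L M) N : ℝ) ≤ (FF L M J : ℝ) + ((N:ℝ) + 1 - cc L M J) := by
        have hsub : cc L M J ≤ N + 1 := by omega
        have h := (Nat.cast_le (α := ℝ)).mpr hcl
        rw [Nat.cast_add, Nat.cast_sub hsub] at h
        push_cast at h ⊢
        linarith
      have hNL2 := NL2 hL hLM J
      have hH3 : (L:ℝ) * ((dd L M J : ℝ) + ((J:ℝ)+1)) ≤ (M:ℝ) * cc L M J := by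
        exact_mod_cast H3 hL hLM J
      have hNdd : (N:ℝ) ≤ (dd L M J : ℝ) := by exact_mod_cast hNd.le
      have hLN : (L:ℝ) * N ≤ (L:ℝ) * dd L M J :=
        mul_le_mul_of_nonneg_left hNdd hLpos.le
      have hLJ : (0:ℝ) ≤ (L:ℝ) * ((J:ℝ)+1) := by positivity
      nlinarith [mul_le_mul_of_nonneg_left hcl' hMLpos.le]
    · -- past the block
      have hcl := CL1b hL hLM hNd hJ2
      have hcl' : (cnt (Aset L M) N : ℝ) ≤ (FF L M (J+1) : ℝ) := by exact_mod_cast hcl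
      have hNL1 := NL1 hL hLM J
      have hNdd : (dd L M J : ℝ) ≤ (N:ℝ) := by exact_mod_cast hNd
      have hMN : (M:ℝ) * dd L M J ≤ (M:ℝ) * N := mul_le_mul_of_nonneg_left hNdd hMpos.le
      nlinarith [mul_le_mul_of_nonneg_left hcl' hMLpos.le]

/-- R2: lower bound at the peak `N = dd J - 1` -/
lemma R2 (hL : 0 < L) (hLM : L < M) (J : ℕ) :
    (M:ℝ) * (dd L M J : ℝ) ≤ ((M:ℝ) + L) * (cnt (Aset L M) (dd L M J - 1) : ℝ)
      + ((M:ℝ) + L) * ((cc L M 0 : ℝ) + ((J:ℝ)+4)^2) := by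
  have hMLpos : (0:ℝ) < (M:ℝ) + L := by positivity
  have hcl : (FF L M (J+1) : ℝ) ≤ (cnt (Aset L M) (dd L M J - 1) : ℝ) := by
    exact_mod_cast CL2 hL hLM J
  have := NL3 hL hLM J
  nlinarith [mul_le_mul_of_nonneg_left hcl hMLpos.le]

/-- R3: global lower bound for the gap-multiples count -/
lemma R3 (hL : 0 < L) (hLM : L < M) {N J : ℕ} (hJ1 : cc L M J ≤ N) (hJ2 : N < cc L M (J+1)) :
    (L:ℝ) * N ≤ (M:ℝ) * ((M:ℝ) + L) * (cnt (Cset L M) N : ℝ)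
      + ((M:ℝ) + L) * ((cc L M 0 : ℝ) + ((J:ℝ)+2) * M) := by
  have hMLpos : (0:ℝ) < (M:ℝ) + L := by positivity
  have hMpos : (0:ℝ) < (M:ℝ) := by exact_mod_cast (hL.trans hLM)
  have hLpos : (0:ℝ) < (L:ℝ) := by exact_mod_cast hL
  have hNL2 := NL2 hL hLM J
  have hH3 : (L:ℝ) * ((dd L M J : ℝ) + ((J:ℝ)+1)) ≤ (M:ℝ) * cc L M J := by
    exact_mod_cast H3 hL hLM J
  have hLJ : (0:ℝ) ≤ (L:ℝ) * ((J:ℝ)+1) := by positivity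
  have hMM : (0:ℝ) ≤ (M:ℝ) * ((M:ℝ)+L) := by positivity
  rcases Nat.lt_or_ge N (dd L M J) with hNd | hNd
  · have hcl := CL3a hL hLM (N := N) (J := J) hJ1
    have hcl' : (cc L M J : ℝ) ≤ (M:ℝ) * cnt (Cset L M) N + (cc L M 0 : ℝ)
        + (FF L M J : ℝ) + (J:ℝ) * M := by exact_mod_cast hcl
    have hNdd : (N:ℝ) ≤ (dd L M J : ℝ) := by exact_mod_cast hNd.le
    have hLN : (L:ℝ) * N ≤ (L:ℝ) * dd L M J := mul_le_mul_of_nonneg_left hNdd hLpos.le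
    nlinarith [mul_le_mul_of_nonneg_left hcl' hMLpos.le]
  · have hcl := CL3b hL hLM hNd hJ2
    have hcl' : (cc L M J : ℝ) + ((N:ℝ) + 1) ≤ (M:ℝ) * cnt (Cset L M) N + (cc L M 0 : ℝ)
        + (FF L M J : ℝ) + (dd L M J : ℝ) + ((J:ℝ)+1) * M := by exact_mod_cast hcl
    have hNdd : (dd L M J : ℝ) ≤ (N:ℝ) := by exact_mod_cast hNd
    have hMN : (M:ℝ) * dd L M J ≤ (M:ℝ) * N := mul_le_mul_of_nonneg_left hNdd hMpos.le
    nlinarith [mul_le_mul_of_nonneg_left hcl' hMLpos.le]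

/-- R4: upper bound for the gap-multiples count at the peak -/
lemma R4 (hL : 0 < L) (hLM : L < M) (J : ℕ) :
    (M:ℝ) * ((M:ℝ) + L) * (cnt (Cset L M) (dd L M (J+1) - 1) : ℝ)
      ≤ (L:ℝ) * ((dd L M (J+1) : ℝ) - 1)
        + ((M:ℝ) + L) * ((cc L M 0 : ℝ) + ((J:ℝ)+4)^2 + ((J:ℝ)+1) * M + ((J:ℝ)+5)) := by
  have hMLpos : (0:ℝ) < (M:ℝ) + L := by positivity
  have hLpos : (0:ℝ) < (L:ℝ) := by exact_mod_cast hL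
  have hcl := CL4 hL hLM (J+1)
  have hcl' : (M:ℝ) * cnt (Cset L M) (dd L M (J+1) - 1) + (cc L M 0 : ℝ) + (FF L M (J+1) : ℝ)
      ≤ (cc L M (J+1) : ℝ) + ((J:ℝ)+1) * M := by exact_mod_cast hcl
  have hNL3 := NL3 hL hLM J
  have hH2 : (L:ℝ) * cc L M (J+1) ≤ (M:ℝ) * dd L M J + L := by exact_mod_cast H2 hL hLM J
  have hH4 : (M:ℝ) * cc L M (J+1) ≤ (L:ℝ) * ((dd L M (J+1) : ℝ) + ((J:ℝ)+3)) := by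
    have := (H4 hL hLM (J+1)).le
    have h := (Nat.cast_le (α := ℝ)).mpr this
    push_cast at h
    linarith
  nlinarith [mul_le_mul_of_nonneg_left hcl' hMLpos.le]

/-- a limsup characterization -/
lemma limsup_spec (f : ℕ → ℝ) (v : ℝ) (h0 : ∀ N, 0 ≤ f N) (h1 : ∀ N, f N ≤ 1)
    (hub : ∀ ε : ℝ, 0 < ε → ∀ᶠ N in Filter.atTop, f N ≤ v + ε)
    (hlb : ∀ ε : ℝ, 0 < ε → ∃ᶠ N in Filter.atTop, v - ε ≤ f N) :
    Filter.limsup f Filter.atTop = v := by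
  have hbdd : Filter.IsBoundedUnder (· ≤ ·) Filter.atTop f :=
    Filter.isBoundedUnder_of ⟨1, h1⟩
  have hbdd2 : Filter.IsBoundedUnder (· ≥ ·) Filter.atTop f :=
    Filter.isBoundedUnder_of ⟨0, h0⟩
  have hcob : Filter.IsCoboundedUnder (· ≤ ·) Filter.atTop f := hbdd2.isCoboundedUnder_le
  apply le_antisymm
  · apply le_of_forall_pos_le_add
    intro ε hε
    exact Filter.limsup_le_of_le hcob (hub ε hε)
  · apply le_of_forall_pos_le_add
    intro ε hε
    have := Filter.le_limsup_of_frequently_le (hlb ε hε) hbdd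
    linarith

end
end OptAux
namespace OptAux
open Finset Filter
open scoped Classical

section
variable {L M : ℕ}

lemma cube_le_N (hL : 0 < L) (hLM : L < M) (J : ℕ) : (J+9)^3 ≤ cc L M J :=
  cc_big hL hLM J

set_option maxHeartbeats 1000000 in
lemma densA (hL : 0 < L) (hLM : L < M) :
    Filter.limsup (fun N : ℕ => (cnt (Aset L M) N : ℝ) / N) Filter.atTop
      = (M:ℝ) / ((M:ℝ) + L) := by
  have hMLpos : (0:ℝ) < (M:ℝ) + L := by positivity
  have hMpos : (0:ℝ) < (M:ℝ) := by exact_mod_cast (hL.trans hLM)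
  apply limsup_spec
  · intro N; positivity
  · intro N
    rcases Nat.eq_zero_or_pos N with h | h
    · subst h; simp
    · rw [div_le_one (by exact_mod_cast h)]
      exact_mod_cast cnt_le _ N
  · -- eventual upper bound
    intro ε hε
    rw [Filter.eventually_atTop]
    refine ⟨max 1 ⌈2/ε⌉₊, fun N hN => ?_⟩
    have hN1 : 1 ≤ N := le_trans (le_max_left _ _) hN
    have hNpos : (0:ℝ) < N := by exact_mod_cast hN1
    have hN2 : (2:ℝ)/ε ≤ N := by
      have h1 : (⌈2/ε⌉₊ : ℝ) ≤ N := by exact_mod_cast le_trans (le_max_right _ _) hN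
      exact le_trans (Nat.le_ceil _) h1
    have h2 : (2:ℝ) ≤ ε * N := by
      rw [div_le_iff₀ hε] at hN2; linarith
    rw [div_le_iff₀ hNpos, ← mul_le_mul_iff_right₀ hMLpos]
    have hexp : ((M:ℝ)+L) * (((M:ℝ)/((M:ℝ)+L) + ε) * N) = (M:ℝ)*N + ((M:ℝ)+L)*(ε*N) := by
      field_simp
    rw [hexp]
    have hkey := R1 hL hLM hN1
    nlinarith
  · -- frequent lower bound
    intro ε hε
    rw [Filter.frequently_atTop]
    intro a
    obtain ⟨J, hJa, hJK2⟩ : ∃ J, a ≤ J ∧ ⌈((cc L M 0 : ℝ)+1)/ε⌉₊ ≤ J :=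
      ⟨max a ⌈((cc L M 0 : ℝ)+1)/ε⌉₊, le_max_left _ _, le_max_right _ _⟩
    have hcd := cd_lt hL hLM J
    have hccpos := cc_pos hL hLM J
    refine ⟨dd L M J - 1, ?_, ?_⟩
    · have h1 : J ≤ cc L M J := self_le_cc hL hLM J
      omega
    · have hc1 : 1 ≤ dd L M J - 1 := by omega
      have hNpos : (0:ℝ) < ((dd L M J - 1 : ℕ):ℝ) := by exact_mod_cast hc1
      have hcast : ((dd L M J - 1 : ℕ):ℝ) = (dd L M J : ℝ) - 1 := by
        have : 1 ≤ dd L M J := by omega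
        push_cast [this]; ring
    -- cube bound
      have hN3 : (((J:ℝ)+9)^3) ≤ ((dd L M J - 1 : ℕ):ℝ) := by
        have hb : (J+9)^3 ≤ dd L M J - 1 := by
          have := cube_le_N hL hLM J; omega
        exact_mod_cast hb
      have hKε : ((cc L M 0 : ℝ)+1) ≤ ε * ((J:ℝ)+9) := by
        have h1 : (⌈((cc L M 0 : ℝ)+1)/ε⌉₊ : ℝ) ≤ (J:ℝ) := Nat.cast_le.mpr hJK2
        have h2 := Nat.le_ceil (((cc L M 0 : ℝ)+1)/ε)
        have h3 : ((cc L M 0:ℝ)+1)/ε ≤ (J:ℝ) := le_trans h2 h1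
        rw [div_le_iff₀ hε] at h3
        nlinarith
      have hJ0 : (0:ℝ) ≤ (J:ℝ) := by positivity
      have hc0 : (0:ℝ) ≤ (cc L M 0 : ℝ) := by positivity
      have herr : (cc L M 0 : ℝ) + ((J:ℝ)+4)^2 ≤ ε * ((dd L M J - 1 : ℕ):ℝ) := by
        have e1 : ε * (((J:ℝ)+9)^3) ≤ ε * ((dd L M J - 1 : ℕ):ℝ) :=
          mul_le_mul_of_nonneg_left hN3 hε.le
        have e2 : ((cc L M 0:ℝ)+1) * (((J:ℝ)+9)^2) ≤ (ε * ((J:ℝ)+9)) * (((J:ℝ)+9)^2) :=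
          mul_le_mul_of_nonneg_right hKε (by positivity)
        have e3 : (ε * ((J:ℝ)+9)) * (((J:ℝ)+9)^2) = ε * (((J:ℝ)+9)^3) := by ring
        have e4 : (cc L M 0 : ℝ) + ((J:ℝ)+4)^2 ≤ ((cc L M 0:ℝ)+1) * (((J:ℝ)+9)^2) := by
          nlinarith
        linarith
      rw [le_div_iff₀ hNpos, ← mul_le_mul_iff_right₀ hMLpos]
      have hexp : ((M:ℝ)+L) * (((M:ℝ)/((M:ℝ)+L) - ε) * ((dd L M J - 1 : ℕ):ℝ))
          = (M:ℝ)*((dd L M J - 1 : ℕ):ℝ) - ((M:ℝ)+L)*(ε*((dd L M J - 1 : ℕ):ℝ)) := by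
        field_simp
      rw [hexp]
      have hkey := R2 hL hLM J
      have herr2 : ((M:ℝ)+L)*((cc L M 0 : ℝ) + ((J:ℝ)+4)^2)
          ≤ ((M:ℝ)+L)*(ε*((dd L M J - 1 : ℕ):ℝ)) :=
        mul_le_mul_of_nonneg_left herr hMLpos.le
      nlinarith

set_option maxHeartbeats 1000000 in
lemma densA' (hL : 0 < L) (hLM : L < M) :
    Filter.limsup (fun N : ℕ => (cnt (A'set L M) N : ℝ) / N) Filter.atTop
      = 1 - (L:ℝ) / ((M:ℝ) * ((M:ℝ) + L)) := by
  have hMLpos : (0:ℝ) < (M:ℝ) + L := by positivity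
  have hMpos : (0:ℝ) < (M:ℝ) := by exact_mod_cast (hL.trans hLM)
  have hLpos : (0:ℝ) < (L:ℝ) := by exact_mod_cast hL
  have hM1 : (1:ℝ) ≤ (M:ℝ) := by exact_mod_cast (hL.trans hLM)
  have hcompl : ∀ N : ℕ, (cnt (A'set L M) N : ℝ) = (N:ℝ) - (cnt (Cset L M) N : ℝ) := by
    intro N
    have := cnt_compl L M N
    have h := congrArg (fun x : ℕ => (x:ℝ)) this
    push_cast at h
    linarith
  apply limsup_spec
  · intro N; positivity
  · intro N
    rcases Nat.eq_zero_or_pos N with h | h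
    · subst h; simp
    · rw [div_le_one (by exact_mod_cast h)]
      exact_mod_cast cnt_le _ N
  · -- eventual upper bound
    intro ε hε
    rw [Filter.eventually_atTop]
    set K := ⌈((cc L M 0 : ℝ) + M)/ε⌉₊ with hKdef
    refine ⟨cc L M (K+1), fun N hN => ?_⟩
    have hN0 : cc L M 0 ≤ N := le_trans (cc_le_of_le hL hLM (Nat.zero_le _)) hN
    obtain ⟨J, hJ1, hJ2, hJmax⟩ := locate hL hLM hN0
    have hJK : K + 1 ≤ J := hJmax (K+1) hN
    have hN1 : 1 ≤ N := le_trans (cc_pos hL hLM (K+1)) hN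
    have hNpos : (0:ℝ) < N := by exact_mod_cast hN1
    -- error bound
    have hcube : ((J:ℝ)+9)^3 ≤ (N:ℝ) := by
      have : (J+9)^3 ≤ N := le_trans (cube_le_N hL hLM J) hJ1
      exact_mod_cast this
    have hKε : ((cc L M 0 : ℝ) + M) ≤ ε * ((J:ℝ)+9) := by
      have h1 : (K:ℝ) ≤ (J:ℝ) := by exact_mod_cast (by omega : K ≤ J)
      have h2 := Nat.le_ceil (((cc L M 0 : ℝ) + M)/ε)
      have h3 : ((cc L M 0:ℝ) + M)/ε ≤ (J:ℝ) := le_trans h2 h1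
      rw [div_le_iff₀ hε] at h3
      nlinarith
    have hJ0 : (0:ℝ) ≤ (J:ℝ) := by positivity
    have hc0 : (0:ℝ) ≤ (cc L M 0 : ℝ) := by positivity
    have herr : (cc L M 0 : ℝ) + ((J:ℝ)+2) * M ≤ ε * ((M:ℝ) * N) := by
      have e1 : ε * (((J:ℝ)+9)^3) ≤ ε * N := mul_le_mul_of_nonneg_left hcube hε.le
      have e2 : ((cc L M 0:ℝ) + M) * (((J:ℝ)+9)^2) ≤ (ε * ((J:ℝ)+9)) * (((J:ℝ)+9)^2) :=
        mul_le_mul_of_nonneg_right hKε (by positivity)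
      have e3 : (ε * ((J:ℝ)+9)) * (((J:ℝ)+9)^2) = ε * (((J:ℝ)+9)^3) := by ring
      have e4 : (cc L M 0 : ℝ) + ((J:ℝ)+2) * M ≤ ((cc L M 0:ℝ) + M) * (((J:ℝ)+9)^2) := by
        have f1 : (cc L M 0 : ℝ) * 1 ≤ (cc L M 0 : ℝ) * (((J:ℝ)+9)^2) :=
          mul_le_mul_of_nonneg_left (by nlinarith) hc0
        have f2 : (M:ℝ) * ((J:ℝ)+2) ≤ (M:ℝ) * (((J:ℝ)+9)^2) :=
          mul_le_mul_of_nonneg_left (by nlinarith) hMpos.le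
        nlinarith
      have e5 : ε * (N:ℝ) ≤ ε * ((M:ℝ) * N) := by
        have : (N:ℝ) ≤ (M:ℝ) * N := by nlinarith
        exact mul_le_mul_of_nonneg_left this hε.le
      linarith
    rw [div_le_iff₀ hNpos, hcompl]
    have hkey := R3 hL hLM hJ1 hJ2
    -- (1 - L/(M(M+L)) + ε) * N  with factor M(M+L)
    have hMM : (0:ℝ) < (M:ℝ) * ((M:ℝ)+L) := by positivity
    rw [← mul_le_mul_iff_right₀ hMM]
    have hexp : (M:ℝ) * ((M:ℝ)+L) * ((1 - (L:ℝ)/((M:ℝ)*((M:ℝ)+L)) + ε) * N)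
        = (M:ℝ)*((M:ℝ)+L)*N - (L:ℝ)*N + ((M:ℝ)+L)*(ε * ((M:ℝ)*N)) := by
      field_simp
    rw [hexp]
    have herr2 : ((M:ℝ)+L)*((cc L M 0 : ℝ) + ((J:ℝ)+2)*M)
        ≤ ((M:ℝ)+L)*(ε*((M:ℝ)*N)) := mul_le_mul_of_nonneg_left herr hMLpos.le
    nlinarith
  · -- frequent lower bound
    intro ε hε
    rw [Filter.frequently_atTop]
    intro a
    obtain ⟨J, hJa, hJK2⟩ : ∃ J, a ≤ J ∧ ⌈((cc L M 0 : ℝ) + M + 2)/ε⌉₊ ≤ J :=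
      ⟨max a ⌈((cc L M 0 : ℝ) + M + 2)/ε⌉₊, le_max_left _ _, le_max_right _ _⟩
    have hcd := cd_lt hL hLM (J+1)
    have hccpos := cc_pos hL hLM (J+1)
    refine ⟨dd L M (J+1) - 1, ?_, ?_⟩
    · have h1 : J + 1 ≤ cc L M (J+1) := self_le_cc hL hLM (J+1)
      omega
    · have hc1 : 1 ≤ dd L M (J+1) - 1 := by omega
      obtain ⟨N, hNdef⟩ : ∃ N, N = dd L M (J+1) - 1 := ⟨_, rfl⟩
      rw [← hNdef] at hc1 ⊢
      have hNpos : (0:ℝ) < (N:ℝ) := by exact_mod_cast hc1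
      have hcast : (N:ℝ) = (dd L M (J+1) : ℝ) - 1 := by
        have h9 : 1 ≤ dd L M (J+1) := by omega
        rw [hNdef]
        push_cast [h9]; ring
      have hcube : ((J:ℝ)+10)^3 ≤ (N:ℝ) := by
        have hb : (J+1+9)^3 ≤ N := by
          have := cube_le_N hL hLM (J+1); omega
        have := (Nat.cast_le (α := ℝ)).mpr hb
        push_cast at this
        linarith
      have hKε : ((cc L M 0 : ℝ) + M + 2) ≤ ε * ((J:ℝ)+9) := by
        have h1 : (⌈((cc L M 0 : ℝ) + M + 2)/ε⌉₊ : ℝ) ≤ (J:ℝ) := Nat.cast_le.mpr hJK2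
        have h2 := Nat.le_ceil (((cc L M 0 : ℝ) + M + 2)/ε)
        have h3 : ((cc L M 0:ℝ) + M + 2)/ε ≤ (J:ℝ) := le_trans h2 h1
        rw [div_le_iff₀ hε] at h3
        nlinarith
      have hJ0 : (0:ℝ) ≤ (J:ℝ) := by positivity
      have hc0 : (0:ℝ) ≤ (cc L M 0 : ℝ) := by positivity
      have herr : (cc L M 0 : ℝ) + ((J:ℝ)+4)^2 + ((J:ℝ)+1)*M + ((J:ℝ)+5)
          ≤ ε * ((M:ℝ) * N) := by
        have e1 : ε * (((J:ℝ)+9)^3) ≤ ε * N := by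
          apply mul_le_mul_of_nonneg_left _ hε.le
          nlinarith
        have e2 : ((cc L M 0:ℝ) + M + 2) * (((J:ℝ)+9)^2) ≤ (ε * ((J:ℝ)+9)) * (((J:ℝ)+9)^2) :=
          mul_le_mul_of_nonneg_right hKε (by positivity)
        have e3 : (ε * ((J:ℝ)+9)) * (((J:ℝ)+9)^2) = ε * (((J:ℝ)+9)^3) := by ring
        have e4 : (cc L M 0 : ℝ) + ((J:ℝ)+4)^2 + ((J:ℝ)+1)*M + ((J:ℝ)+5)
            ≤ ((cc L M 0:ℝ) + M + 2) * (((J:ℝ)+9)^2) := by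
          have f1 : (cc L M 0 : ℝ) * 1 ≤ (cc L M 0 : ℝ) * (((J:ℝ)+9)^2) :=
            mul_le_mul_of_nonneg_left (by nlinarith) hc0
          have f2 : (M:ℝ) * ((J:ℝ)+1) ≤ (M:ℝ) * (((J:ℝ)+9)^2) :=
            mul_le_mul_of_nonneg_left (by nlinarith) hMpos.le
          nlinarith
        have e5 : ε * (N:ℝ) ≤ ε * ((M:ℝ) * N) := by
          have : (N:ℝ) ≤ (M:ℝ) * N := by nlinarith
          exact mul_le_mul_of_nonneg_left this hε.le
        linarith
      rw [le_div_iff₀ hNpos, hcompl]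
      have hkey := R4 hL hLM J
      rw [← hNdef] at hkey
      have hMM : (0:ℝ) < (M:ℝ) * ((M:ℝ)+L) := by positivity
      rw [← mul_le_mul_iff_right₀ hMM]
      have hexp : (M:ℝ) * ((M:ℝ)+L) * ((1 - (L:ℝ)/((M:ℝ)*((M:ℝ)+L)) - ε) * N)
          = (M:ℝ)*((M:ℝ)+L)*N - (L:ℝ)*N - ((M:ℝ)+L)*(ε * ((M:ℝ)*N)) := by
        field_simp
      rw [hexp]
      have herr2 : ((M:ℝ)+L)*((cc L M 0 : ℝ) + ((J:ℝ)+4)^2 + ((J:ℝ)+1)*M + ((J:ℝ)+5))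
          ≤ ((M:ℝ)+L)*(ε*((M:ℝ)*N)) := mul_le_mul_of_nonneg_left herr hMLpos.le
      nlinarith [hcast, hkey]

end
end OptAux
namespace OptAux
open Finset
open scoped Classical

section
variable {L M : ℕ}

/-- if `v₁` is in block `J` and `M v₁ = L v₂ + E` with `E ≤ J`, then `v₂` is in gap `J` -/
lemma blockGap (hL : 0 < L) (hLM : L < M) {v₁ v₂ E J : ℕ}
    (hid : M * v₁ = L * v₂ + E) (hEJ : E ≤ J)
    (h1 : cc L M J ≤ v₁) (h2 : v₁ < dd L M J) :
    dd L M J ≤ v₂ ∧ v₂ < cc L M (J+1) := by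
  have h3 := H3 hL hLM J
  have h4 : M * cc L M J ≤ M * v₁ := Nat.mul_le_mul_left M h1
  have h5 := H1 hL hLM J
  have h6 : M * (v₁ + 1) ≤ M * dd L M J := Nat.mul_le_mul_left M h2
  have e1 : L * (dd L M J + (J+1)) = L * dd L M J + L * (J+1) := by ring
  have e2 : M * (v₁ + 1) = M * v₁ + M := by ring
  have e3 : J + 1 ≤ L * (J + 1) := Nat.le_mul_of_pos_left _ hL
  rw [e1] at h3
  rw [e2] at h6
  have goal1 : L * dd L M J ≤ L * v₂ ∧ L * v₂ < L * cc L M (J+1) := by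
    set X1 := L * dd L M J with hX1
    set X2 := L * v₂ with hX2
    set X3 := L * cc L M (J+1) with hX3
    set Y1 := M * cc L M J with hY1
    set Y2 := M * v₁ with hY2
    set Y3 := M * dd L M J with hY3
    set Z := L * (J+1) with hZ
    omega
  exact ⟨Nat.le_of_mul_le_mul_left goal1.1 hL, Nat.lt_of_mul_lt_mul_left goal1.2⟩

lemma gap_not_A (hL : 0 < L) (hLM : L < M) {v J : ℕ}
    (h1 : dd L M J ≤ v) (h2 : v < cc L M (J+1)) : v ∉ Aset L M := by
  rintro ⟨i, hi1, hi2⟩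
  rcases Nat.lt_or_ge i (J+1) with h | h
  · have : dd L M i ≤ dd L M J := dd_mono hL hLM (by omega)
    omega
  · have : cc L M (J+1) ≤ cc L M i := cc_le_of_le hL hLM h
    omega

lemma block_of_ge (hL : 0 < L) (hLM : L < M) {v J₀ : ℕ}
    (hv : cc L M J₀ ≤ v) (hA : v ∈ Aset L M) :
    ∃ j, J₀ ≤ j ∧ cc L M j ≤ v ∧ v < dd L M j := by
  obtain ⟨j, h1, h2⟩ := hA
  refine ⟨j, ?_, h1, h2⟩
  by_contra hc
  have h3 : dd L M j ≤ cc L M J₀ :=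
    le_trans (dc_lt hL hLM j).le (cc_le_of_le hL hLM (by omega))
  omega

lemma exists_residue (hM : 0 < M) {B : Set ℕ} (hB : B.Infinite) :
    ∃ ρ, {b ∈ B | b % M = ρ}.Infinite := by
  by_contra hc
  push_neg at hc
  have hsub : B ⊆ ⋃ ρ ∈ Finset.range M, {b ∈ B | b % M = ρ} := by
    intro b hb
    simp only [Set.mem_iUnion, Set.mem_setOf_eq, Finset.mem_range, exists_prop]
    exact ⟨b % M, Nat.mod_lt b hM, hb, rfl⟩
  exact hB (Set.Finite.subset (Set.Finite.biUnion (Finset.range M).finite_toSet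
    (fun ρ _ => hc ρ)) hsub)

end
end OptAux

open OptAux in
lemma upperDensity_eq_limsup_cnt (S : Set ℕ) :
    upperDensity S
      = Filter.limsup (fun N : ℕ => (OptAux.cnt S N : ℝ) / N) Filter.atTop := rfl

theorem optimality_upperDensity' (ℓ m : ℕ) (hℓ : 0 < ℓ) (hm : 0 < m)
    (k : ℝ) (hk : k = (m : ℝ) / ℓ) :
    ∃ A A' : Set ℕ,
      upperDensity A = 1 - 1 / (k + 2) ∧
      upperDensity A' = 1 - 1 / (ℓ * (k + 1) * (k + 2)) ∧
      ∀ B : Set ℕ, B.Infinite →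
        (∀ t : ℕ, 0 < t →
          ¬ (∀ b₁ ∈ B, ∀ b₂ ∈ B, b₁ ≤ b₂ → m * b₁ + ℓ * b₂ + t ∈ A)) ∧
        ¬ (∀ b₁ ∈ B, ∀ b₂ ∈ B, b₁ ≤ b₂ → m * b₁ + ℓ * b₂ ∈ A') := by
  have hL : 0 < ℓ := hℓ
  have hLM : ℓ < m + ℓ := by omega
  have hlR : (0:ℝ) < (ℓ:ℝ) := by exact_mod_cast hℓ
  have hmR : (0:ℝ) < (m:ℝ) := by exact_mod_cast hm
  refine ⟨OptAux.Aset ℓ (m+ℓ), OptAux.A'set ℓ (m+ℓ), ?_, ?_, ?_⟩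
  · rw [upperDensity_eq_limsup_cnt, OptAux.densA hL hLM, hk]
    push_cast
    have h1 : (m:ℝ)/ℓ + 2 ≠ 0 := by positivity
    field_simp
    ring
  · rw [upperDensity_eq_limsup_cnt, OptAux.densA' hL hLM, hk]
    push_cast
    have h1 : (m:ℝ)/ℓ + 2 ≠ 0 := by positivity
    have h2 : (m:ℝ)/ℓ + 1 ≠ 0 := by positivity
    have h3 : (m:ℝ) + ℓ ≠ 0 := by positivity
    have h4 : ((m:ℝ) + ℓ) * ((m:ℝ) + ℓ + ℓ) ≠ 0 := by positivity
    field_simp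
    ring
  · intro B hBinf
    constructor
    · -- shifted version for A
      intro t ht h
      obtain ⟨b₁, hb₁⟩ := hBinf.nonempty
      obtain ⟨b, hbB, hbgt⟩ :=
        hBinf.exists_gt (max b₁ (OptAux.cc ℓ (m+ℓ) (m * ((m+ℓ)*b₁ + t))))
      have hble : b₁ ≤ b := le_of_lt (lt_of_le_of_lt (le_max_left _ _) hbgt)
      have hv₁A : m*b₁ + ℓ*b + t ∈ OptAux.Aset ℓ (m+ℓ) := h b₁ hb₁ b hbB hble
      have hv₂A : m*b + ℓ*b + t ∈ OptAux.Aset ℓ (m+ℓ) := h b hbB b hbB le_rfl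
      have hccE : OptAux.cc ℓ (m+ℓ) (m * ((m+ℓ)*b₁ + t)) ≤ m*b₁ + ℓ*b + t := by
        have h1 : OptAux.cc ℓ (m+ℓ) (m * ((m+ℓ)*b₁ + t)) ≤ b :=
          le_of_lt (lt_of_le_of_lt (le_max_right _ _) hbgt)
        have h2 : b ≤ ℓ * b := Nat.le_mul_of_pos_left b hℓ
        omega
      obtain ⟨j, hjE, hj1, hj2⟩ := OptAux.block_of_ge hL hLM hccE hv₁A
      have hid : (m+ℓ) * (m*b₁ + ℓ*b + t) = ℓ * (m*b + ℓ*b + t) + m * ((m+ℓ)*b₁ + t) := by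
        ring
      obtain ⟨hg1, hg2⟩ := OptAux.blockGap hL hLM hid hjE hj1 hj2
      exact OptAux.gap_not_A hL hLM hg1 hg2 hv₂A
    · -- unshifted version for A'
      intro h
      obtain ⟨ρ, hρinf⟩ := OptAux.exists_residue (hL.trans hLM) hBinf
      obtain ⟨b₁, hb₁m, hb₁pos⟩ := hρinf.exists_gt 0
      obtain ⟨hb₁B, hb₁ρ⟩ := hb₁m
      obtain ⟨b₂, hb₂m, hb₂gt⟩ :=
        hρinf.exists_gt (max b₁ (OptAux.cc ℓ (m+ℓ) ((m+ℓ) * (m*b₁))))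
      obtain ⟨hb₂B, hb₂ρ⟩ := hb₂m
      have hble : b₁ ≤ b₂ := le_of_lt (lt_of_le_of_lt (le_max_left _ _) hb₂gt)
      have hv₁ : m*b₁ + ℓ*b₂ ∈ OptAux.A'set ℓ (m+ℓ) := h b₁ hb₁B b₂ hb₂B hble
      have hv₂ : m*b₂ + ℓ*b₂ ∈ OptAux.A'set ℓ (m+ℓ) := h b₂ hb₂B b₂ hb₂B le_rfl
      have hdvd₂ : (m+ℓ) ∣ m*b₂ + ℓ*b₂ := ⟨b₂, by ring⟩
      have hmod : b₁ ≡ b₂ [MOD m+ℓ] := by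
        unfold Nat.ModEq
        rw [hb₁ρ, hb₂ρ]
      have hdvdsub : (m+ℓ) ∣ b₂ - b₁ := (Nat.modEq_iff_dvd' hble).mp hmod
      have hdvd₁ : (m+ℓ) ∣ m*b₁ + ℓ*b₂ := by
        have h8 : (m+ℓ)*b₁ + ℓ*(b₂ - b₁) = m*b₁ + (ℓ*b₁ + ℓ*(b₂ - b₁)) := by ring
        have h9 : ℓ*b₁ + ℓ*(b₂-b₁) = ℓ*b₂ := by
          rw [← Nat.mul_add, Nat.add_sub_cancel' hble]
        have heq : m*b₁ + ℓ*b₂ = (m+ℓ)*b₁ + ℓ*(b₂ - b₁) := by omega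
        rw [heq]
        exact dvd_add (Dvd.intro b₁ rfl) (hdvdsub.mul_left ℓ)
      have hccE : OptAux.cc ℓ (m+ℓ) ((m+ℓ) * (m*b₁)) ≤ m*b₁ + ℓ*b₂ := by
        have h1 : OptAux.cc ℓ (m+ℓ) ((m+ℓ) * (m*b₁)) ≤ b₂ :=
          le_of_lt (lt_of_le_of_lt (le_max_right _ _) hb₂gt)
        have h2 : b₂ ≤ ℓ * b₂ := Nat.le_mul_of_pos_left b₂ hℓ
        omega
      have hc0 : OptAux.cc ℓ (m+ℓ) 0 ≤ m*b₁ + ℓ*b₂ :=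
        le_trans (OptAux.cc_le_of_le hL hLM (Nat.zero_le _)) hccE
      obtain ⟨J, hJ1, hJ2, hJmax⟩ := OptAux.locate hL hLM hc0
      rcases Nat.lt_or_ge (m*b₁ + ℓ*b₂) (OptAux.dd ℓ (m+ℓ) J) with hblk | hgap
      · have hEJ : (m+ℓ) * (m*b₁) ≤ J := hJmax _ hccE
        have hid : (m+ℓ)*(m*b₁ + ℓ*b₂) = ℓ*(m*b₂ + ℓ*b₂) + (m+ℓ) * (m*b₁) := by ring
        obtain ⟨hg1, hg2⟩ := OptAux.blockGap hL hLM hid hEJ hJ1 hblk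
        exact hv₂ (show m*b₂ + ℓ*b₂ ∈ OptAux.Cset ℓ (m+ℓ) from ⟨hdvd₂, J, hg1, hg2⟩)
      · exact hv₁ (show m*b₁ + ℓ*b₂ ∈ OptAux.Cset ℓ (m+ℓ) from ⟨hdvd₁, J, hgap, hJ2⟩)

/-- **Optimality of the upper density thresholds.** With `k = m/ℓ`, there are sets
`A, A' ⊆ ℕ` with `d̄(A) = 1 - 1/(k+2)` and `d̄(A') = 1 - 1/(ℓ(k+1)(k+2))` such that no
shifted (resp. unshifted) sumset `{m b₁ + ℓ b₂ : b₁ ≤ b₂ ∈ B}` over an infinite `B` is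
contained in `A` (resp. `A'`). -/
theorem optimality_upperDensity (ℓ m : ℕ) (hℓ : 0 < ℓ) (hm : 0 < m)
    (k : ℝ) (hk : k = (m : ℝ) / ℓ) :
    ∃ A A' : Set ℕ,
      upperDensity A = 1 - 1 / (k + 2) ∧
      upperDensity A' = 1 - 1 / (ℓ * (k + 1) * (k + 2)) ∧
      ∀ B : Set ℕ, B.Infinite →
        (∀ t : ℕ, 0 < t →
          ¬ (∀ b₁ ∈ B, ∀ b₂ ∈ B, b₁ ≤ b₂ → m * b₁ + ℓ * b₂ + t ∈ A)) ∧
        ¬ (∀ b₁ ∈ B, ∀ b₂ ∈ B, b₁ ≤ b₂ → m * b₁ + ℓ * b₂ ∈ A') := by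
  exact optimality_upperDensity' ℓ m hℓ hm k hk
end

section
/- Let ℓ, m be distinct positive integers with ℓ > m. There exist sets A, A' ⊆ ℕ with upper density d̄(A) = ℓ/(ℓ+m) and d̄(A') = 1 − m/(ℓ+m)² such that for every infinite set B ⊆ ℕ and every positive integer t, the set {m·b₁ + ℓ·b₂ : b₁, b₂ ∈ B and b₁ ≠ b₂} is not contained in A − t, and the set {m·b₁ + ℓ·b₂ : b₁, b₂ ∈ B and b₁ ≠ b₂} is not contained in A'. -/
open Filter MeasureTheory Topology

/-- scale sequence -/
def XX (ℓ : ℕ) : ℕ → ℕ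
  | 0 => 1
  | k+1 => (k+1)^3 * ℓ^(2*k+4) * (XX ℓ k * ℓ^(2*k+1) + 1)

/-- end of block k -/
def EE (ℓ : ℕ) (k : ℕ) : ℕ := XX ℓ k * ℓ^(2*k+1)

/-- the main sparse set -/
def AA (ℓ m : ℕ) : Set ℕ :=
  {n | ∃ k i j, 1 ≤ k ∧ i + j = k ∧
    XX ℓ k * (m^(2*j+1) * ℓ^(2*i)) + k ≤ n ∧ n < XX ℓ k * (m^(2*j) * ℓ^(2*i+1))}

/-- the second set -/
def AP (ℓ m : ℕ) : Set ℕ := {n | n % (ℓ+m) = 0 → n / (ℓ+m) ∈ AA ℓ m}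

section basic
variable {ℓ m : ℕ}

lemma one_le_XX (hl : 2 ≤ ℓ) : ∀ k, 1 ≤ XX ℓ k := by
  intro k
  cases k with
  | zero => simp [XX]
  | succ k =>
      have h1 : 1 ≤ (k+1)^3 := Nat.one_le_pow _ _ (by omega)
      have h2 : 1 ≤ ℓ^(2*k+4) := Nat.one_le_pow _ _ (by omega)
      calc 1 = 1*1*1 := by ring
      _ ≤ (k+1)^3 * ℓ^(2*k+4) * (XX ℓ k * ℓ^(2*k+1) + 1) := by
          exact Nat.mul_le_mul (Nat.mul_le_mul h1 h2) (by omega)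
      _ = XX ℓ (k+1) := by rw [XX]

lemma lt_XX (hl : 2 ≤ ℓ) : ∀ k, k < XX ℓ k := by
  intro k
  cases k with
  | zero => simp [XX]
  | succ k =>
      have h0 : k+1 ≤ (k+1)^3 := Nat.le_self_pow (by omega) _
      have h1 : k+2 ≤ (k+1)^3 * 2 := by omega
      have h2 : 2 ≤ ℓ^(2*k+4) := le_trans hl (Nat.le_self_pow (by omega) _)
      calc k+2 ≤ (k+1)^3 * 2 := h1
      _ ≤ (k+1)^3 * ℓ^(2*k+4) := Nat.mul_le_mul_left _ h2
      _ = (k+1)^3 * ℓ^(2*k+4) * 1 := by ring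
      _ ≤ (k+1)^3 * ℓ^(2*k+4) * (XX ℓ k * ℓ^(2*k+1) + 1) := Nat.mul_le_mul_left _ (by omega)
      _ = XX ℓ (k+1) := by rw [XX]

lemma XX_mono (hl : 2 ≤ ℓ) : Monotone (XX ℓ) := by
  apply monotone_nat_of_le_succ
  intro k
  have h1 : 1 ≤ (k+1)^3 := Nat.one_le_pow _ _ (by omega)
  have h2 : 1 ≤ ℓ^(2*k+4) := Nat.one_le_pow _ _ (by omega)
  have h3 : 1 ≤ ℓ^(2*k+1) := Nat.one_le_pow _ _ (by omega)
  calc XX ℓ k = 1*1*(XX ℓ k * 1) := by ring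
  _ ≤ (k+1)^3 * ℓ^(2*k+4) * (XX ℓ k * ℓ^(2*k+1) + 1) := by
      refine Nat.mul_le_mul (Nat.mul_le_mul h1 h2) ?_
      have := Nat.mul_le_mul_left (XX ℓ k) h3
      omega
  _ = XX ℓ (k+1) := by rw [XX]

lemma EE_mono (hl : 2 ≤ ℓ) : Monotone (EE ℓ) := by
  apply monotone_nat_of_le_succ
  intro k
  unfold EE
  refine Nat.mul_le_mul (XX_mono hl (by omega)) (Nat.pow_le_pow_right (by omega) (by omega))

/-- master growth bound -/
lemma XX_succ_ge (hm : 0 < m) (hml : m < ℓ) (k : ℕ) :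
    (k+1) * ((ℓ+m) * (EE ℓ k + 1)) ≤ XX ℓ (k+1) := by
  have hl : 2 ≤ ℓ := by omega
  have h1 : k+1 ≤ (k+1)^3 := Nat.le_self_pow (by omega) _
  have h2 : ℓ+m ≤ ℓ^(2*k+4) := by
    calc ℓ+m ≤ ℓ*ℓ := by nlinarith
    _ = ℓ^2 := by ring
    _ ≤ ℓ^(2*k+4) := Nat.pow_le_pow_right (by omega) (by omega)
  calc (k+1) * ((ℓ+m) * (EE ℓ k + 1)) = (k+1) * (ℓ+m) * (EE ℓ k + 1) := by ring
  _ ≤ (k+1)^3 * ℓ^(2*k+4) * (EE ℓ k + 1) := Nat.mul_le_mul (Nat.mul_le_mul h1 h2) le_rfl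
  _ = XX ℓ (k+1) := by rw [XX]; rfl

/-- chain monotonicity for products m^a * ℓ^b along constant a+b -/
lemma chain' (hml : m ≤ ℓ) {a b a' b' : ℕ} (h : a + b = a' + b') (hb : b ≤ b') :
    m ^ a * ℓ ^ b ≤ m ^ a' * ℓ ^ b' := by
  obtain ⟨e, rfl⟩ : ∃ e, b' = b + e := ⟨b' - b, by omega⟩
  have ha : a = a' + e := by omega
  subst ha
  calc m^(a'+e) * ℓ^b = m^a' * m^e * ℓ^b := by rw [pow_add]
  _ ≤ m^a' * ℓ^e * ℓ^b := by
      have : m^e ≤ ℓ^e := Nat.pow_le_pow_left hml e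
      exact Nat.mul_le_mul (Nat.mul_le_mul_left _ this) le_rfl
  _ = m^a' * ℓ^(b+e) := by rw [pow_add]; ring

end basic

/-- counting majorant for one block -/
def GG (ℓ m : ℕ) : ℕ → ℕ → ℕ → ℕ
  | 0, Y, N => min (Y * (ℓ - m)) (N - Y * m)
  | (r+1), Y, N => GG ℓ m r (m^2 * Y) N +
      min (Y * (ℓ - m) * ℓ^(2*r+2)) (N - Y * m * ℓ^(2*r+2))

section Glem
variable {ℓ m : ℕ}

lemma GG_total (hm : 0 < m) (hml : m < ℓ) :
    ∀ r Y N, (ℓ+m) * GG ℓ m r Y N + Y * m^(2*r+2) ≤ Y * ℓ^(2*r+2) := by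
  intro r
  induction r with
  | zero =>
      intro Y N
      have h1 : GG ℓ m 0 Y N ≤ Y * (ℓ-m) := min_le_left _ _
      zify [hml.le] at h1 ⊢
      norm_num
      nlinarith [h1, mul_le_mul_of_nonneg_left h1 (show (0:ℤ) ≤ (ℓ:ℤ)+m by positivity)]
  | succ r ih =>
      intro Y N
      have h1 : GG ℓ m (r+1) Y N ≤ GG ℓ m r (m^2*Y) N + Y*(ℓ-m)*ℓ^(2*r+2) :=
        Nat.add_le_add_left (min_le_left _ _) _
      have h2 := ih (m^2*Y) N
      zify [hml.le] at h1 h2 ⊢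
      have e1 : ((ℓ:ℤ))^(2*(r+1)+2) = ℓ^(2*r+2) * ℓ^2 := by ring
      have e2 : ((m:ℤ))^(2*(r+1)+2) = m^(2*r+2) * m^2 := by ring
      rw [e1, e2]
      nlinarith [h2, mul_le_mul_of_nonneg_left h1 (show (0:ℤ) ≤ (ℓ:ℤ)+m by positivity)]

lemma GG_le (hm : 0 < m) (hml : m < ℓ) :
    ∀ r Y N, (ℓ+m) * GG ℓ m r Y N ≤ ℓ * N := by
  intro r
  induction r with
  | zero =>
      intro Y N
      rcases le_or_gt N (Y*m) with h | h
      · have h2 : N - Y*m = 0 := by omega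
        have h1 : GG ℓ m 0 Y N ≤ N - Y*m := min_le_right _ _
        rw [h2] at h1
        have h3 : GG ℓ m 0 Y N = 0 := Nat.le_zero.mp h1
        rw [h3, Nat.mul_zero]
        exact Nat.zero_le _
      · rcases le_or_gt N (Y*ℓ) with h' | h'
        · have h1 : GG ℓ m 0 Y N ≤ N - Y*m := min_le_right _ _
          zify [hml.le, h.le] at h1 h' ⊢
          nlinarith [mul_le_mul_of_nonneg_left h1 (show (0:ℤ) ≤ (ℓ:ℤ)+m by positivity), h',
            mul_le_mul_of_nonneg_left h' (show (0:ℤ) ≤ (m:ℤ) by positivity),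
            mul_nonneg (mul_nonneg (Int.natCast_nonneg m) (Int.natCast_nonneg m)) (Int.natCast_nonneg Y)]
        · have h1 : GG ℓ m 0 Y N ≤ Y*(ℓ-m) := min_le_left _ _
          zify [hml.le] at h1 h' ⊢
          nlinarith [mul_le_mul_of_nonneg_left h1 (show (0:ℤ) ≤ (ℓ:ℤ)+m by positivity), h',
            mul_le_mul_of_nonneg_left h'.le (show (0:ℤ) ≤ (ℓ:ℤ) by positivity),
            mul_nonneg (mul_nonneg (Int.natCast_nonneg m) (Int.natCast_nonneg m)) (Int.natCast_nonneg Y)]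
  | succ r ih =>
      intro Y N
      rcases le_or_gt N (Y * m * ℓ^(2*r+2)) with h | h
      · have h2 : N - Y * m * ℓ^(2*r+2) = 0 := by omega
        have h1 : GG ℓ m (r+1) Y N ≤ GG ℓ m r (m^2*Y) N + (N - Y * m * ℓ^(2*r+2)) :=
          Nat.add_le_add_left (min_le_right _ _) _
        rw [h2] at h1
        calc (ℓ+m) * GG ℓ m (r+1) Y N ≤ (ℓ+m) * (GG ℓ m r (m^2*Y) N + 0) :=
              Nat.mul_le_mul_left _ h1
        _ = (ℓ+m) * GG ℓ m r (m^2*Y) N := by ring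
        _ ≤ ℓ * N := ih (m^2*Y) N
      · rcases le_or_gt N (Y * ℓ^(2*r+3)) with h' | h'
        · have h1 := GG_total hm hml r (m^2*Y) N
          have hmin : GG ℓ m (r+1) Y N ≤ GG ℓ m r (m^2*Y) N + (N - Y*m*ℓ^(2*r+2)) :=
            Nat.add_le_add_left (min_le_right _ _) _
          zify [hml.le, h.le] at h1 hmin h' ⊢
          have e1 : ((ℓ:ℤ))^(2*r+3) = ℓ^(2*r+2)*ℓ := by ring
          rw [e1] at h'
          nlinarith [h1, mul_le_mul_of_nonneg_left hmin (show (0:ℤ) ≤ (ℓ:ℤ)+m by positivity), h',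
            mul_le_mul_of_nonneg_left h' (show (0:ℤ) ≤ (m:ℤ) by positivity),
            mul_nonneg (mul_nonneg (mul_nonneg (Int.natCast_nonneg m) (Int.natCast_nonneg m))
              (Int.natCast_nonneg Y)) (pow_nonneg (Int.natCast_nonneg m) (2*r+2))]
        · have h1 := GG_total hm hml (r+1) Y N
          have h2 : Y * ℓ^(2*(r+1)+2) ≤ ℓ * N := by
            have e1 : ℓ^(2*(r+1)+2) = ℓ^(2*r+3)*ℓ := by ring
            rw [e1]
            calc Y * (ℓ^(2*r+3)*ℓ) = ℓ * (Y*ℓ^(2*r+3)) := by ring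
            _ ≤ ℓ*N := Nat.mul_le_mul_left _ h'.le
          exact le_trans (le_trans (Nat.le_add_right _ _) h1) h2

end Glem

section sums
variable {ℓ m : ℕ}

/-- GG as an explicit sum -/
lemma GG_sum (hml : m < ℓ) : ∀ r Y N, GG ℓ m r Y N =
    ∑ i ∈ Finset.range (r+1),
      min (m^(2*(r-i)) * Y * ((ℓ-m) * ℓ^(2*i))) (N - m^(2*(r-i)+1) * Y * ℓ^(2*i)) := by
  intro r
  induction r with
  | zero =>
      intro Y N
      rw [Finset.sum_range_one]
      show min (Y * (ℓ-m)) (N - Y * m) = _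
      have e1 : m^(2*(0-0)) * Y * ((ℓ-m) * ℓ^(2*0)) = Y * (ℓ-m) := by ring
      have e2 : m^(2*(0-0)+1) * Y * ℓ^(2*0) = Y * m := by ring
      rw [e1, e2]
  | succ r ih =>
      intro Y N
      show GG ℓ m r (m^2*Y) N + min (Y * (ℓ-m) * ℓ^(2*r+2)) (N - Y * m * ℓ^(2*r+2)) = _
      rw [ih]
      conv_rhs => rw [Finset.sum_range_succ]
      congr 1
      · apply Finset.sum_congr rfl
        intro i hi
        have hik : i ≤ r := by simpa [Nat.lt_succ_iff] using hi
        have e1 : m^(2*(r-i)) * (m^2*Y) * ((ℓ-m) * ℓ^(2*i))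
            = m^(2*(r+1-i)) * Y * ((ℓ-m) * ℓ^(2*i)) := by
          have : 2*(r+1-i) = 2*(r-i) + 2 := by omega
          rw [this, pow_add]; ring
        have e2 : m^(2*(r-i)+1) * (m^2*Y) * ℓ^(2*i)
            = m^(2*(r+1-i)+1) * Y * ℓ^(2*i) := by
          have : 2*(r+1-i)+1 = (2*(r-i)+1) + 2 := by omega
          rw [this, pow_add]; ring
        rw [e1, e2]
      · have e3 : r+1-(r+1) = 0 := by omega
        rw [e3]
        have e1 : m^(2*0) * Y * ((ℓ-m) * ℓ^(2*(r+1))) = Y * (ℓ-m) * ℓ^(2*r+2) := by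
          have : 2*(r+1) = 2*r+2 := by omega
          rw [this]; ring
        have e2 : m^(2*0+1) * Y * ℓ^(2*(r+1)) = Y * m * ℓ^(2*r+2) := by
          have : 2*(r+1) = 2*r+2 := by omega
          rw [this]; ring
        rw [e1, e2]

/-- telescoping identity for block interval lengths -/
lemma telescope (hm : 0 < m) (hml : m < ℓ) : ∀ r,
    (ℓ+m) * (∑ i ∈ Finset.range (r+1), m^(2*(r-i)) * ((ℓ-m) * ℓ^(2*i))) + m^(2*r+2)
      = ℓ^(2*r+2) := by
  intro r
  induction r with
  | zero =>
      rw [Finset.sum_range_one]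
      norm_num
      zify [hml.le]
      ring
  | succ r ih =>
      rw [Finset.sum_range_succ]
      have e0 : ∑ i ∈ Finset.range (r+1), m^(2*(r+1-i)) * ((ℓ-m) * ℓ^(2*i))
          = m^2 * ∑ i ∈ Finset.range (r+1), m^(2*(r-i)) * ((ℓ-m) * ℓ^(2*i)) := by
        rw [Finset.mul_sum]
        apply Finset.sum_congr rfl
        intro i hi
        have hik : i ≤ r := by simpa [Nat.lt_succ_iff] using hi
        have e1 : 2*(r+1-i) = 2 + 2*(r-i) := by omega
        rw [e1, pow_add]; ring
      rw [e0]
      have e3 : r+1-(r+1) = 0 := by omega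
      rw [e3]
      zify [hml.le] at ih ⊢
      have e4 : ((ℓ:ℤ))^(2*(r+1)+2) = ℓ^(2*r+2) * ℓ^2 := by ring
      have e5 : ((m:ℤ))^(2*(r+1)+2) = m^(2*r+2) * m^2 := by ring
      have e6 : ((ℓ:ℤ))^(2*(r+1)) = ℓ^(2*r+2) := by ring
      rw [e4, e5, e6]
      linear_combination (m:ℤ)^2 * ih

end sums

section star
variable {ℓ m : ℕ}

lemma hi_le_EE (hml : m < ℓ) {k' i' j' : ℕ} (hij : i' + j' = k') :
    XX ℓ k' * (m^(2*j') * ℓ^(2*i'+1)) ≤ EE ℓ k' := by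
  unfold EE
  have h := chain' hml.le (a := 2*j') (b := 2*i'+1) (a' := 0) (b' := 2*k'+1)
    (by omega) (by omega)
  calc XX ℓ k' * (m^(2*j') * ℓ^(2*i'+1)) ≤ XX ℓ k' * (m^0 * ℓ^(2*k'+1)) :=
        Nat.mul_le_mul_left _ h
  _ = XX ℓ k' * ℓ^(2*k'+1) := by ring

lemma core (hm : 0 < m) (hml : m < ℓ) {c₁ c₂ k i j b : ℕ}
    (hk1 : 1 ≤ k) (hc₁ : c₁ ≤ k) (hc₂ : c₂ ≤ k) (hij : i + j = k)
    (hlo : XX ℓ k * (m^(2*j+1) * ℓ^(2*i)) + k ≤ ℓ*b + c₁)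
    (hhi : ℓ*b + c₁ < XX ℓ k * (m^(2*j) * ℓ^(2*i+1))) :
    m*b + c₂ ∉ AA ℓ m := by
  have hl2 : 2 ≤ ℓ := by omega
  -- (a) upper bound for m*b
  have hmb_hi : m*b < (XX ℓ k) * (m^(2*j+1) * ℓ^(2*i)) := by
    have h1 : m*(ℓ*b) < m * ((XX ℓ k) * (m^(2*j) * ℓ^(2*i+1))) :=
      (Nat.mul_lt_mul_left hm).mpr (by omega)
    have h2 : m * ((XX ℓ k) * (m^(2*j) * ℓ^(2*i+1))) = ℓ * ((XX ℓ k) * (m^(2*j+1) * ℓ^(2*i))) := by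
      rw [pow_succ, pow_succ]; ring
    have h3 : ℓ * (m*b) < ℓ * ((XX ℓ k) * (m^(2*j+1) * ℓ^(2*i))) := by
      calc ℓ * (m*b) = m*(ℓ*b) := by ring
      _ < m * ((XX ℓ k) * (m^(2*j) * ℓ^(2*i+1))) := h1
      _ = ℓ * ((XX ℓ k) * (m^(2*j+1) * ℓ^(2*i))) := h2
    exact Nat.lt_of_mul_lt_mul_left h3
  -- (b) lower bound for ℓ*(m*b)
  have hmb_lo : (XX ℓ k) * (m^(2*j+2) * ℓ^(2*i)) ≤ ℓ*(m*b) := by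
    have h1 : (XX ℓ k) * (m^(2*j+1) * ℓ^(2*i)) ≤ ℓ*b := by omega
    have h2 : m * ((XX ℓ k) * (m^(2*j+1) * ℓ^(2*i))) ≤ m*(ℓ*b) := Nat.mul_le_mul_left _ h1
    calc (XX ℓ k) * (m^(2*j+2) * ℓ^(2*i)) = m * ((XX ℓ k) * (m^(2*j+1) * ℓ^(2*i))) := by
          rw [pow_succ]; ring
    _ ≤ m*(ℓ*b) := h2
    _ = ℓ*(m*b) := by ring
  -- m*b is beyond all previous blocks
  have hEprev : EE ℓ (k-1) + 1 ≤ m*b := by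
    have e : k - 1 + 1 = k := Nat.succ_pred_eq_of_pos hk1
    have hX1 : ℓ * (EE ℓ (k-1) + 1) ≤ (XX ℓ k) := by
      have h := XX_succ_ge hm hml (k-1)
      rw [e] at h
      have h2 : ℓ * (EE ℓ (k-1) + 1) ≤ k * ((ℓ+m) * (EE ℓ (k-1) + 1)) := by
        calc ℓ * (EE ℓ (k-1) + 1) = 1 * (ℓ * (EE ℓ (k-1) + 1)) := by ring
        _ ≤ k * ((ℓ+m) * (EE ℓ (k-1) + 1)) :=
            Nat.mul_le_mul (by omega) (Nat.mul_le_mul (by omega) le_rfl)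
      omega
    have hpow : 1 ≤ m^(2*j+2) * ℓ^(2*i) :=
      Nat.one_le_iff_ne_zero.mpr (by positivity)
    have h3 : ℓ * (EE ℓ (k-1) + 1) ≤ ℓ * (m*b) := by
      calc ℓ * (EE ℓ (k-1) + 1) ≤ (XX ℓ k) := hX1
      _ = (XX ℓ k) * 1 := by ring
      _ ≤ (XX ℓ k) * (m^(2*j+2) * ℓ^(2*i)) := Nat.mul_le_mul_left _ hpow
      _ ≤ ℓ*(m*b) := hmb_lo
    have := Nat.le_of_mul_le_mul_left h3 (by omega : 0 < ℓ)
    simpa using this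
  rintro ⟨k', i', j', hk1', hij', hlo', hhi'⟩
  rcases lt_trichotomy k' k with hkk | heq | hkk
  · -- k' < k : m*b+c₂ is beyond block k'
    have h1 : XX ℓ k' * (m^(2*j') * ℓ^(2*i'+1)) ≤ EE ℓ (k-1) :=
      le_trans (hi_le_EE hml hij') (EE_mono hl2 (by omega))
    omega
  · -- same block
    have heq2 := heq.symm
    subst heq2
    rcases le_or_gt i i' with hii | hii
    · have h1 : m^(2*j+1) * ℓ^(2*i) ≤ m^(2*j'+1) * ℓ^(2*i') :=
        chain' hml.le (by omega) (by omega)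
      have h2 : (XX ℓ k) * (m^(2*j+1) * ℓ^(2*i)) ≤ (XX ℓ k) * (m^(2*j'+1) * ℓ^(2*i')) :=
        Nat.mul_le_mul_left _ h1
      omega
    · -- i' < i
      have h1 : ℓ*(m*b + c₂) < ℓ * ((XX ℓ k) * (m^(2*j') * ℓ^(2*i'+1))) :=
        (Nat.mul_lt_mul_left (show 0 < ℓ by omega)).mpr hhi'
      have h2 : ℓ * ((XX ℓ k) * (m^(2*j') * ℓ^(2*i'+1))) = (XX ℓ k) * (m^(2*j') * ℓ^(2*i'+2)) := by
        rw [pow_succ, pow_succ]; ring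
      have h3 : m^(2*j') * ℓ^(2*i'+2) ≤ m^(2*j+2) * ℓ^(2*i) :=
        chain' hml.le (by omega) (by omega)
      have h4 : ℓ*(m*b) ≤ ℓ*(m*b + c₂) := Nat.mul_le_mul_left _ (by omega)
      have h5 : (XX ℓ k) * (m^(2*j') * ℓ^(2*i'+2)) ≤ (XX ℓ k) * (m^(2*j+2) * ℓ^(2*i)) :=
        Nat.mul_le_mul_left _ h3
      omega
  · -- k' > k
    have h1 : (XX ℓ k) * (m^(2*j+1) * ℓ^(2*i)) ≤ EE ℓ k := by
      have h := chain' hml.le (a := 2*j+1) (b := 2*i) (a' := 0) (b' := 2*k+1)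
        (by omega) (by omega)
      calc (XX ℓ k) * (m^(2*j+1) * ℓ^(2*i)) ≤ (XX ℓ k) * (m^0 * ℓ^(2*k+1)) := Nat.mul_le_mul_left _ h
      _ = (XX ℓ k) * ℓ^(2*k+1) := by ring
      _ = EE ℓ k := rfl
    have h2 : EE ℓ k + k < XX ℓ (k+1) := by
      have h := XX_succ_ge hm hml k
      have t1 : (k+1) * (1 * (EE ℓ k + 1)) ≤ (k+1) * ((ℓ+m) * (EE ℓ k + 1)) :=
        Nat.mul_le_mul_left _ (Nat.mul_le_mul_right _ (by omega))
      have t2 : EE ℓ k + k + 1 ≤ (k+1) * (1 * (EE ℓ k + 1)) := by nlinarith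
      omega
    have h3 : XX ℓ (k+1) ≤ XX ℓ k' := XX_mono hl2 (by omega)
    have h4 : XX ℓ k' ≤ XX ℓ k' * (m^(2*j'+1) * ℓ^(2*i')) := by
      have hpow : 1 ≤ m^(2*j'+1) * ℓ^(2*i') := Nat.one_le_iff_ne_zero.mpr (by positivity)
      calc XX ℓ k' = XX ℓ k' * 1 := by ring
      _ ≤ _ := Nat.mul_le_mul_left _ hpow
    omega

/-- the key finiteness property of AA -/
lemma bad_finite (hm : 0 < m) (hml : m < ℓ) (c₁ c₂ : ℕ) :
    {b : ℕ | ℓ*b + c₁ ∈ AA ℓ m ∧ m*b + c₂ ∈ AA ℓ m}.Finite := by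
  have hl2 : 2 ≤ ℓ := by omega
  set c := max c₁ c₂ with hc
  apply Set.Finite.subset (Set.finite_Iic (EE ℓ c))
  rintro b ⟨h1, h2⟩
  obtain ⟨k, i, j, hk1, hij, hlo, hhi⟩ := h1
  rcases le_or_gt k c with hkc | hkc
  · have hb : b ≤ ℓ*b + c₁ := by nlinarith
    have h3 : XX ℓ k * (m^(2*j) * ℓ^(2*i+1)) ≤ EE ℓ c :=
      le_trans (hi_le_EE hml hij) (EE_mono hl2 hkc)
    simp only [Set.mem_Iic]
    omega
  · exact absurd h2 (core hm hml hk1 (by omega) (by omega) hij hlo hhi)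

end star

section count
variable {ℓ m : ℕ}

lemma count_upper (hm : 0 < m) (hml : m < ℓ) (k N : ℕ) (hN : N < XX ℓ (k+2))
    [DecidablePred (· ∈ AA ℓ m)] :
    (ℓ+m) * ((Finset.Icc 1 N).filter (· ∈ AA ℓ m)).card ≤ ℓ * N + (ℓ+m) * EE ℓ k := by
  have hl2 : 2 ≤ ℓ := by omega
  have hsub : (Finset.Icc 1 N).filter (· ∈ AA ℓ m) ⊆
      Finset.Icc 1 (EE ℓ k) ∪ (Finset.range (k+2)).biUnion
        (fun i => (Finset.Ico (XX ℓ (k+1) * (m^(2*((k+1)-i)+1) * ℓ^(2*i)) + (k+1))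
          (XX ℓ (k+1) * (m^(2*((k+1)-i)) * ℓ^(2*i+1)))).filter (· ≤ N)) := by
    intro n hn
    simp only [Finset.mem_filter, Finset.mem_Icc] at hn
    obtain ⟨⟨hn1, hn2⟩, k', i', j', hk1', hij', hlo', hhi'⟩ := hn
    rcases lt_trichotomy k' (k+1) with hkk | heq | hkk
    · apply Finset.mem_union_left
      simp only [Finset.mem_Icc]
      have h1 : XX ℓ k' * (m^(2*j') * ℓ^(2*i'+1)) ≤ EE ℓ k :=
        le_trans (hi_le_EE hml hij') (EE_mono hl2 (by omega))
      omega
    · subst heq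
      apply Finset.mem_union_right
      rw [Finset.mem_biUnion]
      refine ⟨i', by simp only [Finset.mem_range]; omega, ?_⟩
      simp only [Finset.mem_filter, Finset.mem_Ico]
      have e1 : 2*j'+1 = 2*((k+1)-i')+1 := by omega
      have e2 : 2*j' = 2*((k+1)-i') := by omega
      rw [e1] at hlo'
      rw [e2] at hhi'
      exact ⟨⟨hlo', hhi'⟩, hn2⟩
    · exfalso
      have h3 : XX ℓ (k+2) ≤ XX ℓ k' := XX_mono hl2 (by omega)
      have h4 : XX ℓ k' ≤ XX ℓ k' * (m^(2*j'+1) * ℓ^(2*i')) := by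
        have hpow : 1 ≤ m^(2*j'+1) * ℓ^(2*i') := Nat.one_le_iff_ne_zero.mpr (by positivity)
        calc XX ℓ k' = XX ℓ k' * 1 := by ring
        _ ≤ _ := Nat.mul_le_mul_left _ hpow
      omega
  have hIco : ∀ i ∈ Finset.range (k+2),
      ((Finset.Ico (XX ℓ (k+1) * (m^(2*((k+1)-i)+1) * ℓ^(2*i)) + (k+1))
          (XX ℓ (k+1) * (m^(2*((k+1)-i)) * ℓ^(2*i+1)))).filter (· ≤ N)).card ≤
      min (m^(2*((k+1)-i)) * XX ℓ (k+1) * ((ℓ-m) * ℓ^(2*i)))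
        (N - m^(2*((k+1)-i)+1) * XX ℓ (k+1) * ℓ^(2*i)) := by
    intro i _
    have hss : (Finset.Ico (XX ℓ (k+1) * (m^(2*((k+1)-i)+1) * ℓ^(2*i)) + (k+1))
          (XX ℓ (k+1) * (m^(2*((k+1)-i)) * ℓ^(2*i+1)))).filter (· ≤ N) ⊆
        Finset.Ico (XX ℓ (k+1) * (m^(2*((k+1)-i)+1) * ℓ^(2*i)) + (k+1))
          (min (XX ℓ (k+1) * (m^(2*((k+1)-i)) * ℓ^(2*i+1))) (N+1)) := by
      intro x hx
      simp only [Finset.mem_filter, Finset.mem_Ico] at hx ⊢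
      omega
    have hcard := Finset.card_le_card hss
    rw [Nat.card_Ico] at hcard
    have hlen : XX ℓ (k+1) * (m^(2*((k+1)-i)) * ℓ^(2*i+1)) =
        XX ℓ (k+1) * (m^(2*((k+1)-i)+1) * ℓ^(2*i))
          + m^(2*((k+1)-i)) * XX ℓ (k+1) * ((ℓ-m) * ℓ^(2*i)) := by
      zify [hml.le]
      ring
    have ha : XX ℓ (k+1) * (m^(2*((k+1)-i)+1) * ℓ^(2*i))
        = m^(2*((k+1)-i)+1) * XX ℓ (k+1) * ℓ^(2*i) := by ring
    omega
  have hb1 : ((Finset.Icc 1 N).filter (· ∈ AA ℓ m)).card ≤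
      EE ℓ k + GG ℓ m (k+1) (XX ℓ (k+1)) N := by
    calc ((Finset.Icc 1 N).filter (· ∈ AA ℓ m)).card
        ≤ _ := Finset.card_le_card hsub
    _ ≤ (Finset.Icc 1 (EE ℓ k)).card + ((Finset.range (k+2)).biUnion _).card :=
        Finset.card_union_le _ _
    _ ≤ EE ℓ k + GG ℓ m (k+1) (XX ℓ (k+1)) N := by
        apply Nat.add_le_add
        · rw [Nat.card_Icc]; omega
        · calc ((Finset.range (k+2)).biUnion _).card ≤ _ := Finset.card_biUnion_le
          _ ≤ ∑ i ∈ Finset.range (k+2),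
              min (m^(2*((k+1)-i)) * XX ℓ (k+1) * ((ℓ-m) * ℓ^(2*i)))
                (N - m^(2*((k+1)-i)+1) * XX ℓ (k+1) * ℓ^(2*i)) :=
            Finset.sum_le_sum hIco
          _ = GG ℓ m (k+1) (XX ℓ (k+1)) N := (GG_sum hml (k+1) (XX ℓ (k+1)) N).symm
  have hb2 := GG_le hm hml (k+1) (XX ℓ (k+1)) N
  calc (ℓ+m) * ((Finset.Icc 1 N).filter (· ∈ AA ℓ m)).card
      ≤ (ℓ+m) * (EE ℓ k + GG ℓ m (k+1) (XX ℓ (k+1)) N) := Nat.mul_le_mul_left _ hb1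
  _ = (ℓ+m) * EE ℓ k + (ℓ+m) * GG ℓ m (k+1) (XX ℓ (k+1)) N := by ring
  _ ≤ (ℓ+m) * EE ℓ k + ℓ * N := Nat.add_le_add_left hb2 _
  _ = ℓ * N + (ℓ+m) * EE ℓ k := by ring

end count

section countlow
variable {ℓ m : ℕ}

lemma count_lower (hm : 0 < m) (hml : m < ℓ) (k : ℕ) (hk : 1 ≤ k)
    [DecidablePred (· ∈ AA ℓ m)] :
    XX ℓ k * (∑ i ∈ Finset.range (k+1), m^(2*(k-i)) * ((ℓ-m) * ℓ^(2*i)))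
      ≤ ((Finset.Icc 1 (EE ℓ k)).filter (· ∈ AA ℓ m)).card + (k+1)*k := by
  have hl2 : 2 ≤ ℓ := by omega
  set F := (Finset.range (k+1)).biUnion
    (fun i => Finset.Ico (XX ℓ k * (m^(2*(k-i)+1) * ℓ^(2*i)) + k)
      (XX ℓ k * (m^(2*(k-i)) * ℓ^(2*i+1)))) with hF
  have hsubF : F ⊆ (Finset.Icc 1 (EE ℓ k)).filter (· ∈ AA ℓ m) := by
    intro n hn
    rw [hF, Finset.mem_biUnion] at hn
    obtain ⟨i, hi, hIco⟩ := hn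
    simp only [Finset.mem_range] at hi
    simp only [Finset.mem_Ico] at hIco
    have hiEE : XX ℓ k * (m^(2*(k-i)) * ℓ^(2*i+1)) ≤ EE ℓ k :=
      hi_le_EE hml (show i + (k-i) = k by omega)
    simp only [Finset.mem_filter, Finset.mem_Icc]
    exact ⟨⟨by omega, by omega⟩, ⟨k, i, k-i, hk, by omega, hIco.1, hIco.2⟩⟩
  have hdisj : ∀ i ∈ Finset.range (k+1), ∀ j ∈ Finset.range (k+1), i ≠ j →
      Disjoint (Finset.Ico (XX ℓ k * (m^(2*(k-i)+1) * ℓ^(2*i)) + k)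
          (XX ℓ k * (m^(2*(k-i)) * ℓ^(2*i+1))))
        (Finset.Ico (XX ℓ k * (m^(2*(k-j)+1) * ℓ^(2*j)) + k)
          (XX ℓ k * (m^(2*(k-j)) * ℓ^(2*j+1)))) := by
    have key : ∀ i i', i < i' → i' ≤ k →
        XX ℓ k * (m^(2*(k-i)) * ℓ^(2*i+1)) ≤ XX ℓ k * (m^(2*(k-i')+1) * ℓ^(2*i')) := by
      intro i i' hii hik
      exact Nat.mul_le_mul_left _ (chain' hml.le (by omega) (by omega))
    intro i hi j hj hij
    simp only [Finset.mem_range] at hi hj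
    rw [Finset.disjoint_left]
    intro x hx hx'
    simp only [Finset.mem_Ico] at hx hx'
    rcases lt_or_gt_of_ne hij with h | h
    · have := key i j h (by omega); omega
    · have := key j i h (by omega); omega
  have hcardF : F.card = ∑ i ∈ Finset.range (k+1),
      (Finset.Ico (XX ℓ k * (m^(2*(k-i)+1) * ℓ^(2*i)) + k)
        (XX ℓ k * (m^(2*(k-i)) * ℓ^(2*i+1)))).card := Finset.card_biUnion hdisj
  have hterm : ∀ i ∈ Finset.range (k+1),
      (Finset.Ico (XX ℓ k * (m^(2*(k-i)+1) * ℓ^(2*i)) + k)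
        (XX ℓ k * (m^(2*(k-i)) * ℓ^(2*i+1)))).card + k
      = XX ℓ k * (m^(2*(k-i)) * ((ℓ-m) * ℓ^(2*i))) := by
    intro i _
    rw [Nat.card_Ico]
    have hlen : XX ℓ k * (m^(2*(k-i)) * ℓ^(2*i+1)) =
        XX ℓ k * (m^(2*(k-i)+1) * ℓ^(2*i)) + XX ℓ k * (m^(2*(k-i)) * ((ℓ-m) * ℓ^(2*i))) := by
      zify [hml.le]; ring
    have hXk : k ≤ XX ℓ k := (lt_XX hl2 k).le
    have hge : XX ℓ k ≤ XX ℓ k * (m^(2*(k-i)) * ((ℓ-m) * ℓ^(2*i))) := by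
      have hpow : 1 ≤ m^(2*(k-i)) * ((ℓ-m) * ℓ^(2*i)) := by
        have h1 : 0 < m^(2*(k-i)) := by positivity
        have h2 : 0 < ℓ^(2*i) := by positivity
        have h3 : 0 < ℓ - m := by omega
        exact Nat.one_le_iff_ne_zero.mpr (by positivity)
      calc XX ℓ k = XX ℓ k * 1 := by ring
      _ ≤ _ := Nat.mul_le_mul_left _ hpow
    omega
  have hsum : ∑ i ∈ Finset.range (k+1),
      (XX ℓ k * (m^(2*(k-i)) * ((ℓ-m) * ℓ^(2*i))))
      = F.card + (k+1)*k := by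
    rw [← Finset.sum_congr rfl hterm, Finset.sum_add_distrib, Finset.sum_const,
      Finset.card_range, hcardF, smul_eq_mul]
  have hmulsum : XX ℓ k * (∑ i ∈ Finset.range (k+1), m^(2*(k-i)) * ((ℓ-m) * ℓ^(2*i)))
      = ∑ i ∈ Finset.range (k+1), (XX ℓ k * (m^(2*(k-i)) * ((ℓ-m) * ℓ^(2*i)))) := by
    rw [Finset.mul_sum]
  have hcardle := Finset.card_le_card hsubF
  omega

end countlow

section realbounds
variable {ℓ m : ℕ}

lemma exists_k (hl2 : 2 ≤ ℓ) (k₀ N : ℕ) (h : XX ℓ k₀ ≤ N) :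
    ∃ k, k₀ ≤ k ∧ XX ℓ k ≤ N ∧ N < XX ℓ (k+1) := by
  classical
  set P : ℕ → Prop := fun j => XX ℓ j ≤ N with hP
  have hk₀N : k₀ ≤ N := le_trans (lt_XX hl2 k₀).le h
  refine ⟨Nat.findGreatest P N, Nat.le_findGreatest hk₀N h, Nat.findGreatest_spec (P := P) hk₀N h, ?_⟩
  by_contra hcon
  push_neg at hcon
  have hKN : Nat.findGreatest P N + 1 ≤ N := by
    have := lt_XX hl2 (Nat.findGreatest P N + 1)
    omega
  exact Nat.findGreatest_is_greatest (Nat.lt_succ_self _) hKN hcon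

lemma XX_ge_cube (hl2 : 2 ≤ ℓ) {k : ℕ} (hk : 1 ≤ k) : k^3 ≤ XX ℓ k := by
  obtain ⟨k', rfl⟩ : ∃ k', k = k'+1 := ⟨k-1, by omega⟩
  have h1 : 1 ≤ ℓ^(2*k'+4) := Nat.one_le_pow _ _ (by omega)
  calc (k'+1)^3 = (k'+1)^3 * 1 * 1 := by ring
  _ ≤ (k'+1)^3 * ℓ^(2*k'+4) * (XX ℓ k' * ℓ^(2*k'+1) + 1) :=
      Nat.mul_le_mul (Nat.mul_le_mul_left _ h1) (by omega)
  _ = XX ℓ (k'+1) := by rw [XX]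

/-- limsup characterization -/
lemma limsup_eq_of_bounds {L : ℝ} {u : ℕ → ℝ} (h0 : ∀ N, 0 ≤ u N) (h1 : ∀ N, u N ≤ 1)
    (hub : ∀ ε : ℝ, 0 < ε → ∀ᶠ N in Filter.atTop, u N ≤ L + ε)
    (hlb : ∀ ε : ℝ, 0 < ε → ∃ᶠ N in Filter.atTop, L - ε ≤ u N) :
    Filter.limsup u Filter.atTop = L := by
  have hbdd : Filter.IsBoundedUnder (· ≤ ·) Filter.atTop u :=
    ⟨1, Filter.eventually_map.2 (Filter.Eventually.of_forall h1)⟩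
  have hbdd' : Filter.IsBoundedUnder (· ≥ ·) Filter.atTop u :=
    ⟨0, Filter.eventually_map.2 (Filter.Eventually.of_forall h0)⟩
  have hcb : Filter.IsCoboundedUnder (· ≤ ·) Filter.atTop u :=
    hbdd'.isCoboundedUnder_le
  apply le_antisymm
  · apply le_of_forall_pos_le_add
    intro ε hε
    exact Filter.limsup_le_of_le hcb (hub ε hε)
  · by_contra hc
    push_neg at hc
    have h2 : ∀ ε : ℝ, 0 < ε → L - ε ≤ Filter.limsup u Filter.atTop := fun ε hε =>
      Filter.le_limsup_of_frequently_le (hlb ε hε) hbdd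
    have := h2 ((L - Filter.limsup u Filter.atTop)/2) (by linarith)
    linarith

lemma AA_density_upper (hm : 0 < m) (hml : m < ℓ) [DecidablePred (· ∈ AA ℓ m)]
    {ε : ℝ} (hε : 0 < ε) :
    ∀ᶠ N : ℕ in Filter.atTop,
      (((Finset.Icc 1 N).filter (· ∈ AA ℓ m)).card : ℝ)/N ≤ (ℓ:ℝ)/((ℓ:ℝ)+m) + ε := by
  have hl2 : 2 ≤ ℓ := by omega
  obtain ⟨k₀, hk₀⟩ := exists_nat_gt (1/ε)
  filter_upwards [Filter.eventually_ge_atTop (XX ℓ (k₀+1)),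
    Filter.eventually_ge_atTop 1] with N hN1 hN2
  obtain ⟨k, hk1, hk2, hk3⟩ := exists_k hl2 (k₀+1) N hN1
  obtain ⟨k', rfl⟩ : ∃ k', k = k'+1 := ⟨k-1, by omega⟩
  have hcount := count_upper hm hml k' N hk3
  have herr : (k₀+1) * ((ℓ+m) * EE ℓ k') ≤ N := by
    have h := XX_succ_ge hm hml k'
    have h2 : (k₀+1) * ((ℓ+m) * EE ℓ k') ≤ (k'+1) * ((ℓ+m) * (EE ℓ k' + 1)) :=
      Nat.mul_le_mul (by omega) (Nat.mul_le_mul_left _ (by omega))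
    omega
  -- go to ℝ
  have hN0 : (0:ℝ) < N := by exact_mod_cast Nat.lt_of_lt_of_le Nat.zero_lt_one hN2
  have hs0 : (0:ℝ) < (ℓ:ℝ) + m := by positivity
  have h1 : ((ℓ:ℝ)+m) * (((Finset.Icc 1 N).filter (· ∈ AA ℓ m)).card : ℝ)
      ≤ ℓ*N + ((ℓ:ℝ)+m) * (EE ℓ k' : ℝ) := by exact_mod_cast hcount
  have h2 : ((k₀:ℝ)+1) * (((ℓ:ℝ)+m) * (EE ℓ k' : ℝ)) ≤ N := by exact_mod_cast herr
  have e1 : (1:ℝ) < k₀ * ε := by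
    rw [div_lt_iff₀ hε] at hk₀; linarith
  have hEE0 : (0:ℝ) ≤ ((ℓ:ℝ)+m) * (EE ℓ k' : ℝ) := by positivity
  have e3 : ((ℓ:ℝ)+m) * (EE ℓ k' : ℝ) ≤ ε*N := by
    nlinarith [mul_le_mul_of_nonneg_left h2 hε.le, mul_nonneg hEE0 (by linarith : (0:ℝ) ≤ ε*k₀ + ε - 1)]
  have hm1 : (1:ℝ) ≤ (ℓ:ℝ)+m := by
    have : (1:ℕ) ≤ ℓ + m := by omega
    exact_mod_cast le_trans this (le_of_eq (by push_cast; ring))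
  have key : ((ℓ:ℝ)+m) * (((Finset.Icc 1 N).filter (· ∈ AA ℓ m)).card : ℝ)
      ≤ ((ℓ:ℝ)+m) * (((ℓ:ℝ)/((ℓ:ℝ)+m) + ε) * N) := by
    have expand : ((ℓ:ℝ)+m) * (((ℓ:ℝ)/((ℓ:ℝ)+m) + ε) * N) = ℓ*N + ((ℓ:ℝ)+m)*ε*N := by
      field_simp
    rw [expand]
    nlinarith [mul_nonneg (mul_nonneg (by linarith : (0:ℝ) ≤ (ℓ:ℝ)+m-1) hε.le) hN0.le]
  have key2 := le_of_mul_le_mul_left key hs0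
  rw [div_le_iff₀ hN0]
  exact key2

end realbounds

section lowbound
variable {ℓ m : ℕ}

set_option maxHeartbeats 1000000 in
lemma AA_density_lower (hm : 0 < m) (hml : m < ℓ) [DecidablePred (· ∈ AA ℓ m)]
    {ε : ℝ} (hε : 0 < ε) (a : ℕ) :
    ∃ k, a ≤ k ∧
      ((ℓ:ℝ)/((ℓ:ℝ)+m) - ε) * (EE ℓ k : ℝ)
        ≤ (((Finset.Icc 1 (EE ℓ k)).filter (· ∈ AA ℓ m)).card : ℝ) := by
  have hl2 : 2 ≤ ℓ := by omega
  have hml1 : (m:ℝ)/ℓ < 1 := by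
    rw [div_lt_one (by positivity)]; exact_mod_cast hml
  have hml0 : (0:ℝ) ≤ (m:ℝ)/ℓ := by positivity
  obtain ⟨k₁, hk₁⟩ := exists_pow_lt_of_lt_one (half_pos hε) hml1
  obtain ⟨k₂, hk₂⟩ := exists_nat_gt (4/ε)
  set k := max (max a 1) (max k₁ k₂) with hkdef
  have hka : a ≤ k := le_trans (le_max_left a 1) (le_max_left _ _)
  have hk1 : 1 ≤ k := le_trans (le_max_right a 1) (le_max_left _ _)
  have hkk₁ : k₁ ≤ k := le_trans (le_max_left k₁ k₂) (le_max_right _ _)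
  have hkk₂ : k₂ ≤ k := le_trans (le_max_right k₁ k₂) (le_max_right _ _)
  refine ⟨k, hka, ?_⟩
  have hcl := count_lower hm hml k hk1
  have htel := telescope hm hml k
  -- real versions
  set C := (((Finset.Icc 1 (EE ℓ k)).filter (· ∈ AA ℓ m)).card : ℝ) with hC
  set S := ((∑ i ∈ Finset.range (k+1), m^(2*(k-i)) * ((ℓ-m) * ℓ^(2*i)) : ℕ) : ℝ) with hS
  have h1 : (XX ℓ k : ℝ) * S ≤ C + ((k:ℝ)+1)*k := by
    rw [hC, hS]; exact_mod_cast hcl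
  have h2 : ((ℓ:ℝ)+m) * S + (m:ℝ)^(2*k+2) = (ℓ:ℝ)^(2*k+2) := by
    rw [hS]; exact_mod_cast htel
  have hX3 : ((k:ℝ))^3 ≤ (XX ℓ k : ℝ) := by exact_mod_cast XX_ge_cube hl2 hk1
  have hX1 : (1:ℝ) ≤ (XX ℓ k : ℝ) := by exact_mod_cast one_le_XX hl2 k
  have hEdef : (EE ℓ k : ℝ) = (XX ℓ k : ℝ) * (ℓ:ℝ)^(2*k+1) := by
    unfold EE; push_cast; ring
  have hs0 : (0:ℝ) < (ℓ:ℝ) + m := by positivity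
  have hl0 : (0:ℝ) < (ℓ:ℝ) := by positivity
  -- error term 1 : X * m^(2k+2) ≤ (ε/2) * (ℓ+m) * EE
  have herr1 : (XX ℓ k : ℝ) * (m:ℝ)^(2*k+2) ≤ ε/2 * (((ℓ:ℝ)+m) * (EE ℓ k : ℝ)) := by
    have hp1 : ((m:ℝ)/ℓ)^(2*k+2) ≤ ((m:ℝ)/ℓ)^k :=
      pow_le_pow_of_le_one hml0 hml1.le (by omega)
    have hp2 : ((m:ℝ)/ℓ)^(2*k+2) < ε/2 := lt_of_le_of_lt hp1
      (lt_of_le_of_lt (pow_le_pow_of_le_one hml0 hml1.le hkk₁) hk₁)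
    have hp3 : (m:ℝ)^(2*k+2) ≤ ε/2 * (ℓ:ℝ)^(2*k+2) := by
      rw [div_pow] at hp2
      have hlp : (0:ℝ) < (ℓ:ℝ)^(2*k+2) := by positivity
      rw [div_lt_iff₀ hlp] at hp2
      linarith
    have hp4 : (ℓ:ℝ)^(2*k+2) ≤ ((ℓ:ℝ)+m) * (ℓ:ℝ)^(2*k+1) := by
      have : (ℓ:ℝ)^(2*k+2) = (ℓ:ℝ) * (ℓ:ℝ)^(2*k+1) := by ring
      rw [this]
      have hlp : (0:ℝ) ≤ (ℓ:ℝ)^(2*k+1) := by positivity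
      nlinarith [Nat.cast_nonneg (α := ℝ) m]
    rw [hEdef]
    calc (XX ℓ k : ℝ) * (m:ℝ)^(2*k+2) ≤ (XX ℓ k : ℝ) * (ε/2 * (ℓ:ℝ)^(2*k+2)) := by
          apply mul_le_mul_of_nonneg_left hp3 (by positivity)
    _ ≤ (XX ℓ k : ℝ) * (ε/2 * (((ℓ:ℝ)+m) * (ℓ:ℝ)^(2*k+1))) := by
          apply mul_le_mul_of_nonneg_left _ (by positivity)
          apply mul_le_mul_of_nonneg_left hp4 (by positivity)
    _ = ε/2 * (((ℓ:ℝ)+m) * ((XX ℓ k : ℝ) * (ℓ:ℝ)^(2*k+1))) := by ring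
  -- error term 2 : (ℓ+m)*(k+1)*k ≤ (ε/2)*(ℓ+m)*EE
  have herr2 : ((ℓ:ℝ)+m) * (((k:ℝ)+1)*k) ≤ ε/2 * (((ℓ:ℝ)+m) * (EE ℓ k : ℝ)) := by
    have hεk : 4 < ε * k := by
      rw [div_lt_iff₀ hε] at hk₂
      have : (k₂:ℝ) ≤ k := by exact_mod_cast hkk₂
      nlinarith
    have hk0 : (1:ℝ) ≤ (k:ℝ) := by exact_mod_cast hk1
    have hcube : ((k:ℝ)+1)*k ≤ ε/2 * (k:ℝ)^3 := by
      have h2k : ((k:ℝ)+1)*k ≤ 2*(k:ℝ)^2 := by nlinarith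
      have h3k : 2*(k:ℝ)^2 ≤ ε/2 * (k:ℝ)^3 := by nlinarith [mul_le_mul_of_nonneg_right hεk.le (mul_self_nonneg (k:ℝ))]
      linarith
    have hEk : ((k:ℝ))^3 ≤ (EE ℓ k : ℝ) := by
      rw [hEdef]
      have hl1 : (1:ℝ) ≤ (ℓ:ℝ) := by exact_mod_cast (show 1 ≤ ℓ by omega)
      have hp : (1:ℝ) ≤ (ℓ:ℝ)^(2*k+1) := one_le_pow₀ hl1
      nlinarith
    calc ((ℓ:ℝ)+m) * (((k:ℝ)+1)*k) ≤ ((ℓ:ℝ)+m) * (ε/2 * (k:ℝ)^3) :=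
          mul_le_mul_of_nonneg_left hcube (le_of_lt hs0)
    _ = ε/2 * (((ℓ:ℝ)+m) * (k:ℝ)^3) := by ring
    _ ≤ ε/2 * (((ℓ:ℝ)+m) * (EE ℓ k : ℝ)) := by
          apply mul_le_mul_of_nonneg_left _ (by positivity : (0:ℝ) ≤ ε/2)
          exact mul_le_mul_of_nonneg_left hEk (le_of_lt hs0)
  -- combine
  have hkey : ((ℓ:ℝ) - ((ℓ:ℝ)+m)*ε) * (EE ℓ k : ℝ) ≤ ((ℓ:ℝ)+m) * C := by
    have hc1 : ((ℓ:ℝ)+m) * ((XX ℓ k : ℝ) * S) ≤ ((ℓ:ℝ)+m) * (C + ((k:ℝ)+1)*k) :=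
      mul_le_mul_of_nonneg_left h1 (le_of_lt hs0)
    have hc2 : ((ℓ:ℝ)+m) * ((XX ℓ k : ℝ) * S) = (XX ℓ k : ℝ) * (((ℓ:ℝ)+m) * S) := by ring
    have hc3 : (XX ℓ k : ℝ) * (((ℓ:ℝ)+m) * S) =
        (XX ℓ k : ℝ) * (ℓ:ℝ)^(2*k+2) - (XX ℓ k : ℝ) * (m:ℝ)^(2*k+2) := by
      rw [show ((ℓ:ℝ)+m) * S = (ℓ:ℝ)^(2*k+2) - (m:ℝ)^(2*k+2) by linarith]; ring
    have hc4 : (XX ℓ k : ℝ) * (ℓ:ℝ)^(2*k+2) = (ℓ:ℝ) * (EE ℓ k : ℝ) := by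
      rw [hEdef]; ring
    nlinarith [hc1, herr1, herr2]
  -- divide by (ℓ+m)
  have hfin : ((ℓ:ℝ)/((ℓ:ℝ)+m) - ε) * (EE ℓ k : ℝ) * ((ℓ:ℝ)+m) ≤ ((ℓ:ℝ)+m) * C := by
    calc ((ℓ:ℝ)/((ℓ:ℝ)+m) - ε) * (EE ℓ k : ℝ) * ((ℓ:ℝ)+m)
        = ((ℓ:ℝ) - ((ℓ:ℝ)+m)*ε) * (EE ℓ k : ℝ) := by field_simp
    _ ≤ ((ℓ:ℝ)+m) * C := hkey
  nlinarith [hfin]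

end lowbound

section densities
variable {ℓ m : ℕ}

lemma upperDensity_AA (hm : 0 < m) (hml : m < ℓ) [DecidablePred (· ∈ AA ℓ m)] :
    Filter.limsup
      (fun N : ℕ => (((Finset.Icc 1 N).filter (· ∈ AA ℓ m)).card : ℝ) / N)
      Filter.atTop = (ℓ:ℝ)/((ℓ:ℝ)+(m:ℝ)) := by
  have hl2 : 2 ≤ ℓ := by omega
  apply limsup_eq_of_bounds
  · intro N; positivity
  · intro N
    have hcard : ((Finset.Icc 1 N).filter (· ∈ AA ℓ m)).card ≤ N := by
      calc _ ≤ (Finset.Icc 1 N).card := Finset.card_filter_le _ _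
      _ = N := by rw [Nat.card_Icc, Nat.add_sub_cancel]
    apply div_le_one_of_le₀
    · exact_mod_cast hcard
    · positivity
  · intro ε hε
    exact AA_density_upper hm hml hε
  · intro ε hε
    rw [Filter.frequently_atTop]
    intro a
    obtain ⟨k, hka, hk⟩ := AA_density_lower hm hml hε a
    have hXE : XX ℓ k ≤ EE ℓ k := by
      have hp : 1 ≤ ℓ^(2*k+1) := Nat.one_le_pow _ _ (by omega)
      calc XX ℓ k = XX ℓ k * 1 := by ring
      _ ≤ XX ℓ k * ℓ^(2*k+1) := Nat.mul_le_mul_left _ hp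
    have hEa : a ≤ EE ℓ k := by
      have := lt_XX hl2 k
      omega
    have hE0 : (0:ℝ) < (EE ℓ k : ℝ) := by
      have h1 : 1 ≤ EE ℓ k := le_trans (one_le_XX hl2 k) hXE
      exact_mod_cast Nat.lt_of_lt_of_le Nat.zero_lt_one h1
    refine ⟨EE ℓ k, hEa, ?_⟩
    rw [le_div_iff₀ hE0]
    exact hk

lemma AP_count (hm : 0 < m) (hml : m < ℓ) (N : ℕ)
    [DecidablePred (· ∈ AP ℓ m)] [DecidablePred (· ∈ AA ℓ m)] :
    ((Finset.Icc 1 N).filter (· ∈ AP ℓ m)).card + N/(ℓ+m)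
      = N + ((Finset.Icc 1 (N/(ℓ+m))).filter (· ∈ AA ℓ m)).card := by
  classical
  have hs : 0 < ℓ+m := by omega
  have h1 := Finset.card_filter_add_card_filter_not
    (s := Finset.Icc 1 N) (p := (· ∈ AP ℓ m))
  have hIcc : (Finset.Icc 1 N).card = N := by rw [Nat.card_Icc, Nat.add_sub_cancel]
  have h3 := Finset.card_filter_add_card_filter_not
    (s := Finset.Icc 1 (N/(ℓ+m))) (p := (· ∈ AA ℓ m))
  have hIcc2 : (Finset.Icc 1 (N/(ℓ+m))).card = N/(ℓ+m) := by rw [Nat.card_Icc, Nat.add_sub_cancel]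
  have h2 : ((Finset.Icc 1 N).filter (fun n => ¬ (n ∈ AP ℓ m))).card
      = ((Finset.Icc 1 (N/(ℓ+m))).filter (fun d => ¬ (d ∈ AA ℓ m))).card := by
    apply Finset.card_nbij' (i := fun n => n/(ℓ+m)) (j := fun d => (ℓ+m)*d)
    · intro n hn
      simp only [Finset.mem_coe, Finset.mem_filter, Finset.mem_Icc] at hn ⊢
      obtain ⟨⟨hn1, hn2⟩, hg⟩ := hn
      rw [show (n ∈ AP ℓ m) = (n % (ℓ+m) = 0 → n/(ℓ+m) ∈ AA ℓ m) from rfl] at hg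
      push_neg at hg
      obtain ⟨hmod, hnot⟩ := hg
      obtain ⟨q, rfl⟩ := Nat.dvd_of_mod_eq_zero hmod
      rw [Nat.mul_div_cancel_left q hs] at hnot ⊢
      have hq1 : 1 ≤ q := by
        rcases Nat.eq_zero_or_pos q with h | h
        · subst h; omega
        · exact h
      have hq2 : q ≤ N/(ℓ+m) := (Nat.le_div_iff_mul_le hs).mpr (by rw [Nat.mul_comm]; exact hn2)
      exact ⟨⟨hq1, hq2⟩, hnot⟩
    · intro d hd
      simp only [Finset.mem_coe, Finset.mem_filter, Finset.mem_Icc] at hd ⊢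
      obtain ⟨⟨hd1, hd2⟩, hg⟩ := hd
      have hdN : (ℓ+m)*d ≤ N := by
        have := (Nat.le_div_iff_mul_le hs).mp hd2
        rw [Nat.mul_comm]
        exact this
      refine ⟨⟨by nlinarith, hdN⟩, ?_⟩
      rw [show ((ℓ+m)*d ∈ AP ℓ m) = ((ℓ+m)*d % (ℓ+m) = 0 → ((ℓ+m)*d)/(ℓ+m) ∈ AA ℓ m) from rfl]
      push_neg
      constructor
      · simp [Nat.mul_mod_right]
      · rw [Nat.mul_div_cancel_left d hs]
        exact hg
    · intro n hn
      simp only [Finset.mem_coe, Finset.mem_filter, Finset.mem_Icc] at hn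
      obtain ⟨_, hg⟩ := hn
      rw [show (n ∈ AP ℓ m) = (n % (ℓ+m) = 0 → n/(ℓ+m) ∈ AA ℓ m) from rfl] at hg
      push_neg at hg
      exact Nat.mul_div_cancel' (Nat.dvd_of_mod_eq_zero hg.1)
    · intro d _
      exact Nat.mul_div_cancel_left d hs
  omega

end densities

section densAP
variable {ℓ m : ℕ}

set_option maxHeartbeats 1000000 in
lemma upperDensity_AP (hm : 0 < m) (hml : m < ℓ)
    [DecidablePred (· ∈ AP ℓ m)] [DecidablePred (· ∈ AA ℓ m)] :
    Filter.limsup (fun N : ℕ => (((Finset.Icc 1 N).filter (· ∈ AP ℓ m)).card : ℝ) / N)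
      Filter.atTop = 1 - (m:ℝ)/(((ℓ:ℝ)+m)^2) := by
  have hl2 : 2 ≤ ℓ := by omega
  have hs : 0 < ℓ+m := by omega
  have hsR0 : (0:ℝ) < (ℓ:ℝ)+m := by positivity
  have hsR1 : (1:ℝ) ≤ (ℓ:ℝ)+m := by
    have h1 : (1:ℝ) ≤ (ℓ:ℝ) := by exact_mod_cast (show 1 ≤ ℓ by omega)
    have h2 : (0:ℝ) ≤ (m:ℝ) := by positivity
    linarith
  have hm0 : (0:ℝ) < (m:ℝ) := by exact_mod_cast hm
  apply limsup_eq_of_bounds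
  · intro N; positivity
  · intro N
    have hcard : ((Finset.Icc 1 N).filter (· ∈ AP ℓ m)).card ≤ N := by
      calc _ ≤ (Finset.Icc 1 N).card := Finset.card_filter_le _ _
      _ = N := by rw [Nat.card_Icc, Nat.add_sub_cancel]
    apply div_le_one_of_le₀
    · exact_mod_cast hcard
    · positivity
  · -- upper bound
    intro ε hε
    set δ := min (ε/2) ((m:ℝ)/(2*((ℓ:ℝ)+m))) with hδdef
    have hδ0 : 0 < δ := lt_min (half_pos hε) (by positivity)
    have hδ1 : δ ≤ ε/2 := min_le_left _ _
    have hδ2 : δ ≤ (m:ℝ)/(2*((ℓ:ℝ)+m)) := min_le_right _ _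
    obtain ⟨M₀, hM₀⟩ := Filter.eventually_atTop.mp (AA_density_upper hm hml hδ0)
    obtain ⟨n₁, hn₁⟩ := exists_nat_gt (2*(m:ℝ)/((((ℓ:ℝ)+m))*ε))
    filter_upwards [Filter.eventually_ge_atTop ((ℓ+m)*(M₀+1)), Filter.eventually_ge_atTop 1,
      Filter.eventually_ge_atTop n₁] with N hN1 hN2 hN3
    set M := N/(ℓ+m) with hMdef
    have hM1 : M₀ + 1 ≤ M := (Nat.le_div_iff_mul_le hs).mpr (by rw [Nat.mul_comm]; exact hN1)
    have hcnt := hM₀ M (by omega)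
    have hid := AP_count hm hml N
    have hN0 : (0:ℝ) < (N:ℝ) := by exact_mod_cast Nat.lt_of_lt_of_le Nat.zero_lt_one hN2
    have hM0R : (0:ℝ) < (M:ℝ) := by
      have h1 : 1 ≤ M := by omega
      exact_mod_cast Nat.lt_of_lt_of_le Nat.zero_lt_one h1
    have hMr1 : ((ℓ:ℝ)+m) * (M:ℝ) ≤ (N:ℝ) := by
      have h := Nat.div_mul_le_self N (ℓ+m)
      have h2 : (((N/(ℓ+m)) * (ℓ+m) : ℕ) : ℝ) ≤ (N:ℝ) := by exact_mod_cast h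
      push_cast at h2
      rw [← hMdef] at h2
      linarith
    have hMr2 : (N:ℝ) ≤ ((ℓ:ℝ)+m) * (M:ℝ) + ((ℓ:ℝ)+m) := by
      have h1 := Nat.div_add_mod N (ℓ+m)
      have h2 : N % (ℓ+m) < ℓ+m := Nat.mod_lt _ hs
      have h3 : (((ℓ+m) * M + N % (ℓ+m) : ℕ) : ℝ) = (N:ℝ) := by exact_mod_cast h1
      have h4 : ((N % (ℓ+m) : ℕ) : ℝ) < ((ℓ:ℝ)+m) := by exact_mod_cast h2
      push_cast at h3
      linarith
    have hidR : (((Finset.Icc 1 N).filter (· ∈ AP ℓ m)).card : ℝ)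
        = (N:ℝ) + (((Finset.Icc 1 M).filter (· ∈ AA ℓ m)).card : ℝ) - (M:ℝ) := by
      have hc : ((((Finset.Icc 1 N).filter (· ∈ AP ℓ m)).card + M : ℕ) : ℝ)
          = ((N + ((Finset.Icc 1 M).filter (· ∈ AA ℓ m)).card : ℕ) : ℝ) := by
        exact_mod_cast congrArg (Nat.cast (R := ℝ)) hid
      push_cast at hc
      linarith
    rw [hidR]
    set C := (((Finset.Icc 1 M).filter (· ∈ AA ℓ m)).card : ℝ) with hCdef
    rw [div_le_iff₀ hM0R] at hcnt
    rw [div_le_iff₀ hN0]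
    have hc2 : ((ℓ:ℝ)+m)*C ≤ ((ℓ:ℝ) + ((ℓ:ℝ)+m)*δ)*M := by
      have h := mul_le_mul_of_nonneg_left hcnt hsR0.le
      have e0 : ((ℓ:ℝ)+m)*((ℓ:ℝ)/((ℓ:ℝ)+m)) = (ℓ:ℝ) := by
        field_simp
      have e : ((ℓ:ℝ)+m)*((((ℓ:ℝ))/((ℓ:ℝ)+m) + δ) * M) = ((ℓ:ℝ) + ((ℓ:ℝ)+m)*δ)*M := by
        calc ((ℓ:ℝ)+m)*((((ℓ:ℝ))/((ℓ:ℝ)+m) + δ) * M)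
            = (((ℓ:ℝ)+m)*((ℓ:ℝ)/((ℓ:ℝ)+m)))*M + (((ℓ:ℝ)+m)*δ)*M := by ring
        _ = ((ℓ:ℝ) + ((ℓ:ℝ)+m)*δ)*M := by rw [e0]; ring
      rw [e] at h
      exact h
    have hp2 : ((ℓ:ℝ)+m)*δ ≤ (m:ℝ)/2 := by
      have h := mul_le_mul_of_nonneg_left hδ2 hsR0.le
      have e : ((ℓ:ℝ)+m)*((m:ℝ)/(2*((ℓ:ℝ)+m))) = (m:ℝ)/2 := by field_simp
      rw [e] at h
      exact h
    have hp3 : (m:ℝ) ≤ (((ℓ:ℝ)+m)*ε/2)*N := by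
      have hpos : (0:ℝ) < ((ℓ:ℝ)+m)*ε := by positivity
      rw [div_lt_iff₀ hpos] at hn₁
      have hNn : (n₁:ℝ) ≤ N := by exact_mod_cast hN3
      nlinarith
    have hmdivN : (m:ℝ)/((ℓ:ℝ)+m)*N ≤ (m:ℝ)*M + m := by
      have h := mul_le_mul_of_nonneg_left hMr2 (by positivity : (0:ℝ) ≤ (m:ℝ)/((ℓ:ℝ)+m))
      have e : (m:ℝ)/((ℓ:ℝ)+m)*(((ℓ:ℝ)+m)*M + ((ℓ:ℝ)+m)) = (m:ℝ)*M + m := by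
        field_simp
      rw [e] at h
      exact h
    have expand : ((ℓ:ℝ)+m)*((1 - (m:ℝ)/(((ℓ:ℝ)+m))^2 + ε) * N)
        = ((ℓ:ℝ)+m)*N - (m:ℝ)/((ℓ:ℝ)+m)*N + ((ℓ:ℝ)+m)*ε*N := by
      field_simp
    have KEY : ((ℓ:ℝ)+m)*((N:ℝ) + C - M) ≤ ((ℓ:ℝ)+m)*((1 - (m:ℝ)/(((ℓ:ℝ)+m))^2 + ε) * N) := by
      rw [expand]
      nlinarith [hc2, hmdivN, hp3, mul_le_mul_of_nonneg_left hMr1 hδ0.le,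
        mul_nonneg hε.le hN0.le, hδ1, hN0.le, hM0R.le, hsR1]
    exact le_of_mul_le_mul_left KEY hsR0
  · -- lower bound (frequently)
    intro ε hε
    rw [Filter.frequently_atTop]
    intro a
    obtain ⟨k, hka, hk⟩ := AA_density_lower hm hml hε (max a 1)
    have hXE : XX ℓ k ≤ EE ℓ k := by
      have hp : 1 ≤ ℓ^(2*k+1) := Nat.one_le_pow _ _ (by omega)
      calc XX ℓ k = XX ℓ k * 1 := by ring
      _ ≤ XX ℓ k * ℓ^(2*k+1) := Nat.mul_le_mul_left _ hp
    have hE1 : 1 ≤ EE ℓ k := le_trans (one_le_XX hl2 k) hXE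
    have hEa : a ≤ EE ℓ k := by
      have := lt_XX hl2 k
      omega
    have hE0R : (0:ℝ) < ((EE ℓ k : ℕ):ℝ) := by
      exact_mod_cast Nat.lt_of_lt_of_le Nat.zero_lt_one hE1
    refine ⟨(ℓ+m)*EE ℓ k, ?_, ?_⟩
    · calc a ≤ EE ℓ k := hEa
      _ = 1 * EE ℓ k := by ring
      _ ≤ (ℓ+m) * EE ℓ k := Nat.mul_le_mul_right _ (by omega)
    · have hMdiv : ((ℓ+m)*EE ℓ k)/(ℓ+m) = EE ℓ k := Nat.mul_div_cancel_left _ hs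
      have hid := AP_count hm hml ((ℓ+m)*EE ℓ k)
      rw [hMdiv] at hid
      set C := (((Finset.Icc 1 (EE ℓ k)).filter (· ∈ AA ℓ m)).card : ℝ) with hCdef
      have hNcast : (((ℓ+m)*EE ℓ k : ℕ):ℝ) = ((ℓ:ℝ)+m)*((EE ℓ k : ℕ):ℝ) := by push_cast; ring
      have hN0 : (0:ℝ) < (((ℓ+m)*EE ℓ k : ℕ):ℝ) := by rw [hNcast]; positivity
      have hidR : (((Finset.Icc 1 ((ℓ+m)*EE ℓ k)).filter (· ∈ AP ℓ m)).card : ℝ)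
          = ((ℓ:ℝ)+m)*((EE ℓ k : ℕ):ℝ) + C - ((EE ℓ k : ℕ):ℝ) := by
        have hc : ((((Finset.Icc 1 ((ℓ+m)*EE ℓ k)).filter (· ∈ AP ℓ m)).card + EE ℓ k : ℕ) : ℝ)
            = (((ℓ+m)*EE ℓ k + ((Finset.Icc 1 (EE ℓ k)).filter (· ∈ AA ℓ m)).card : ℕ) : ℝ) := by
          exact_mod_cast congrArg (Nat.cast (R := ℝ)) hid
        push_cast at hc
        rw [hCdef]
        push_cast
        linarith
      rw [le_div_iff₀ hN0, hidR, hNcast]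
      have hk2 : (ℓ:ℝ)*((EE ℓ k:ℕ):ℝ) - ((ℓ:ℝ)+m)*ε*((EE ℓ k:ℕ):ℝ) ≤ ((ℓ:ℝ)+m)*C := by
        have h := mul_le_mul_of_nonneg_left hk hsR0.le
        have e : ((ℓ:ℝ)+m)*((((ℓ:ℝ))/((ℓ:ℝ)+m) - ε)*((EE ℓ k:ℕ):ℝ))
            = (ℓ:ℝ)*((EE ℓ k:ℕ):ℝ) - ((ℓ:ℝ)+m)*ε*((EE ℓ k:ℕ):ℝ) := by
          field_simp
        rw [e] at h
        exact h
      have KEY2 : ((ℓ:ℝ)+m)*((1 - (m:ℝ)/(((ℓ:ℝ)+m))^2 - ε)*(((ℓ:ℝ)+m)*((EE ℓ k:ℕ):ℝ)))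
          ≤ ((ℓ:ℝ)+m)*(((ℓ:ℝ)+m)*((EE ℓ k:ℕ):ℝ) + C - ((EE ℓ k:ℕ):ℝ)) := by
        have expand2 : ((ℓ:ℝ)+m)*((1 - (m:ℝ)/(((ℓ:ℝ)+m))^2 - ε)*(((ℓ:ℝ)+m)*((EE ℓ k:ℕ):ℝ)))
            = ((ℓ:ℝ)+m)^2*((EE ℓ k:ℕ):ℝ) - (m:ℝ)*((EE ℓ k:ℕ):ℝ)
              - ε*((ℓ:ℝ)+m)^2*((EE ℓ k:ℕ):ℝ) := by
          field_simp
        rw [expand2]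
        nlinarith [hk2, mul_nonneg (mul_nonneg (mul_nonneg hε.le hE0R.le) hsR0.le)
          (by linarith : (0:ℝ) ≤ (ℓ:ℝ)+(m:ℝ)-1)]
      exact le_of_mul_le_mul_left KEY2 hsR0

end densAP

section pattern
variable {ℓ m : ℕ}

lemma not_pattern_AA (hm : 0 < m) (hml : m < ℓ) {B : Set ℕ} (hB : B.Infinite) (t : ℕ) :
    ¬ (∀ b₁ ∈ B, ∀ b₂ ∈ B, b₁ ≠ b₂ → m * b₁ + ℓ * b₂ + t ∈ AA ℓ m) := by
  intro h
  obtain ⟨b₀, hb₀⟩ := hB.nonempty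
  have hsub : B \ {b₀} ⊆ {b : ℕ | ℓ*b + (m*b₀ + t) ∈ AA ℓ m ∧ m*b + (ℓ*b₀ + t) ∈ AA ℓ m} := by
    rintro b ⟨hbB, hbne⟩
    simp only [Set.mem_singleton_iff] at hbne
    constructor
    · have h1 := h b₀ hb₀ b hbB (fun e => hbne e.symm)
      have e : m * b₀ + ℓ * b + t = ℓ*b + (m*b₀ + t) := by ring
      rwa [e] at h1
    · have h1 := h b hbB b₀ hb₀ hbne
      have e : m * b + ℓ * b₀ + t = m*b + (ℓ*b₀ + t) := by ring
      rwa [e] at h1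
  have hfin := (bad_finite hm hml (m*b₀+t) (ℓ*b₀+t)).subset hsub
  exact (hB.diff (Set.finite_singleton b₀)) hfin

lemma not_pattern_AP (hm : 0 < m) (hml : m < ℓ) {B : Set ℕ} (hB : B.Infinite) :
    ¬ (∀ b₁ ∈ B, ∀ b₂ ∈ B, b₁ ≠ b₂ → m * b₁ + ℓ * b₂ ∈ AP ℓ m) := by
  intro h
  have hs : 0 < ℓ + m := by omega
  -- pigeonhole modulo ℓ+m
  have hex : ∃ β, β < ℓ+m ∧ {a : ℕ | (ℓ+m) * a + β ∈ B}.Infinite := by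
    by_contra hcon
    push_neg at hcon
    have hfin : ∀ β ∈ Set.Iio (ℓ+m), ((fun a => (ℓ+m)*a + β) '' {a | (ℓ+m)*a + β ∈ B}).Finite := by
      intro β hβ
      exact Set.Finite.image _ (hcon β hβ)
    have hBsub : B ⊆ ⋃ β ∈ Set.Iio (ℓ+m), (fun a => (ℓ+m)*a + β) '' {a | (ℓ+m)*a + β ∈ B} := by
      intro b hb
      simp only [Set.mem_iUnion, Set.mem_image, Set.mem_setOf_eq]
      refine ⟨b % (ℓ+m), Nat.mod_lt _ hs, b / (ℓ+m), ?_, ?_⟩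
      · rw [Nat.div_add_mod]; exact hb
      · rw [Nat.div_add_mod]
    exact hB (Set.Finite.subset (Set.Finite.biUnion (Set.finite_Iio _) hfin) hBsub)
  obtain ⟨β, hβ, hD⟩ := hex
  obtain ⟨a₀, ha₀⟩ := hD.nonempty
  have hsub : {a : ℕ | (ℓ+m)*a + β ∈ B} \ {a₀} ⊆
      {a : ℕ | ℓ*a + (m*a₀ + β) ∈ AA ℓ m ∧ m*a + (ℓ*a₀ + β) ∈ AA ℓ m} := by
    rintro a ⟨haB, hane⟩
    simp only [Set.mem_singleton_iff] at hane
    simp only [Set.mem_setOf_eq] at haB ha₀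
    have hne : (ℓ+m)*a₀ + β ≠ (ℓ+m)*a + β := by
      intro e
      apply hane
      have : (ℓ+m)*a₀ = (ℓ+m)*a := by omega
      exact (Nat.eq_of_mul_eq_mul_left hs this).symm
    constructor
    · have h1 := h ((ℓ+m)*a₀ + β) ha₀ ((ℓ+m)*a + β) haB hne
      have hv : m*((ℓ+m)*a₀ + β) + ℓ*((ℓ+m)*a + β) = (ℓ+m)*(ℓ*a + (m*a₀ + β)) := by ring
      rw [hv] at h1
      have h2 := h1 (by simp [Nat.mul_mod_right])
      rwa [Nat.mul_div_cancel_left _ hs] at h2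
    · have h1 := h ((ℓ+m)*a + β) haB ((ℓ+m)*a₀ + β) ha₀ (Ne.symm hne)
      have hv : m*((ℓ+m)*a + β) + ℓ*((ℓ+m)*a₀ + β) = (ℓ+m)*(m*a + (ℓ*a₀ + β)) := by ring
      rw [hv] at h1
      have h2 := h1 (by simp [Nat.mul_mod_right])
      rwa [Nat.mul_div_cancel_left _ hs] at h2
  have hfin := (bad_finite hm hml (m*a₀+β) (ℓ*a₀+β)).subset hsub
  exact (hD.diff (Set.finite_singleton a₀)) hfin

end pattern

/-- For distinct `ℓ > m` there are sets `A, A' ⊆ ℕ` with `d̄(A) = ℓ/(ℓ+m)` and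
`d̄(A') = 1 - m/(ℓ+m)²` such that for every infinite `B` and every `t ∈ ℕ`, the pattern
`{m b₁ + ℓ b₂ : b₁ ≠ b₂ ∈ B}` is not contained in `A - t`, nor in `A'`. -/
theorem examples_upperDensity_ne (ℓ m : ℕ) (hm : 0 < m) (hlm : m < ℓ) :
    ∃ A A' : Set ℕ,
      upperDensity A = (ℓ : ℝ) / ((ℓ : ℝ) + m) ∧
      upperDensity A' = 1 - (m : ℝ) / (((ℓ : ℝ) + m) ^ 2) ∧
      ∀ B : Set ℕ, B.Infinite →
        (∀ t : ℕ, 0 < t →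
          ¬ (∀ b₁ ∈ B, ∀ b₂ ∈ B, b₁ ≠ b₂ → m * b₁ + ℓ * b₂ + t ∈ A)) ∧
        ¬ (∀ b₁ ∈ B, ∀ b₂ ∈ B, b₁ ≠ b₂ → m * b₁ + ℓ * b₂ ∈ A') := by
  classical
  refine ⟨AA ℓ m, AP ℓ m, ?_, ?_, ?_⟩
  · unfold upperDensity
    exact upperDensity_AA hm hlm
  · unfold upperDensity
    exact upperDensity_AP hm hlm
  · intro B hB
    exact ⟨fun t _ => not_pattern_AA hm hlm hB t, not_pattern_AP hm hlm hB⟩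
end

section
/- Let ℓ, m be distinct positive integers with ℓ > m. There exist sets A, A' ⊆ ℕ with lower density d_(A) = 1/2 and d_(A') = 1 − 1/(2(ℓ+m)) such that for every infinite set B ⊆ ℕ and every positive integer t, the set {m·b₁ + ℓ·b₂ : b₁, b₂ ∈ B and b₁ ≠ b₂} + t is not contained in A, and the set {m·b₁ + ℓ·b₂ : b₁, b₂ ∈ B and b₁ ≠ b₂} is not contained in A'. -/
set_option maxHeartbeats 1000000

open Filter MeasureTheory Topology

/-- The scale of `n` with respect to base `q`. -/
noncomputable def Kf (q : ℝ) (n : ℕ) : ℕ := (⌊Real.logb q n⌋).toNat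

private lemma card_mod_Ioc (a W v : ℕ) (hW : 0 < W) (hv : v < W) :
    ((Finset.Ioc a (a+W)).filter (fun n => n % W = v)).card = 1 := by
  classical
  have hmod : a % W < W := Nat.mod_lt _ hW
  have hsplit : a % W + W * (a / W) = a := Nat.mod_add_div a W
  obtain ⟨x₀, hx₁, hx₂, hx₃⟩ : ∃ x₀, a < x₀ ∧ x₀ ≤ a + W ∧ x₀ % W = v := by
    by_cases hcase : a % W < v
    · exact ⟨v + W * (a / W), by omega, by omega,
        by rw [Nat.add_mul_mod_self_left, Nat.mod_eq_of_lt hv]⟩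
    · refine ⟨v + W * (a / W + 1), ?_, ?_, ?_⟩
      · have : v + W * (a / W + 1) = v + W * (a/W) + W := by ring
        omega
      · have : v + W * (a / W + 1) = v + W * (a/W) + W := by ring
        omega
      · rw [Nat.add_mul_mod_self_left, Nat.mod_eq_of_lt hv]
  rw [Finset.card_eq_one]
  refine ⟨x₀, ?_⟩
  ext n
  simp only [Finset.mem_filter, Finset.mem_Ioc, Finset.mem_singleton]
  constructor
  · rintro ⟨⟨hn₁, hn₂⟩, hn₃⟩
    by_contra hne
    rcases Nat.lt_or_ge n x₀ with hlt | hge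
    · have hmodeq : n ≡ x₀ [MOD W] := by unfold Nat.ModEq; rw [hn₃, hx₃]
      have h := (Nat.modEq_iff_dvd' hlt.le).mp hmodeq
      have := Nat.le_of_dvd (by omega) h
      omega
    · have hlt : x₀ < n := by omega
      have hmodeq : x₀ ≡ n [MOD W] := by unfold Nat.ModEq; rw [hn₃, hx₃]
      have h := (Nat.modEq_iff_dvd' hlt.le).mp hmodeq
      have := Nat.le_of_dvd (by omega) h
      omega
  · rintro rfl
    exact ⟨⟨hx₁, hx₂⟩, hx₃⟩

private lemma exists_mod_class (B : Set ℕ) (hB : B.Infinite) (W : ℕ) (hW : 0 < W) :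
    ∃ r, r < W ∧ {b ∈ B | b % W = r}.Infinite := by
  by_contra h
  push_neg at h
  have hsub : B ⊆ ⋃ r ∈ Finset.range W, {b ∈ B | b % W = r} := by
    intro b hb
    simp only [Set.mem_iUnion, Finset.mem_range, Set.mem_setOf_eq]
    exact ⟨b % W, Nat.mod_lt _ hW, hb, rfl⟩
  have hfin : (⋃ r ∈ Finset.range W, {b ∈ B | b % W = r}).Finite :=
    Set.Finite.biUnion (Finset.range W).finite_toSet
      (fun r hr => (h r (Finset.mem_range.mp hr)))
  exact hB (hfin.subset hsub)

private lemma Kf_mono (q : ℝ) (hq : 1 < q) {x y : ℕ} (hx : 0 < x) (hxy : x ≤ y) :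
    Kf q x ≤ Kf q y := by
  unfold Kf
  have hxR : (0:ℝ) < (x:ℝ) := by exact_mod_cast hx
  have h1 : Real.logb q x ≤ Real.logb q y := by
    rw [Real.logb_le_logb hq hxR (by exact_mod_cast hx.trans_le hxy)]
    exact_mod_cast hxy
  exact Int.toNat_le_toNat (Int.floor_le_floor h1)

private lemma cnt_tendsto (q : ℝ) (hq : 1 < q) (W : ℕ) (hW : 0 < W) (c : ℕ → ℕ)
    (hc : ∀ k, c k < W) :
    Filter.Tendsto
      (fun N : ℕ => (((Finset.Ioc 0 N).filter (fun n => n % W = c (Kf q n))).card : ℝ) / N)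
      Filter.atTop (𝓝 (1 / (W:ℝ))) := by
  classical
  set P : ℕ → Prop := fun n => n % W = c (Kf q n) with hP
  set cnt : ℕ → ℕ := fun N => ((Finset.Ioc 0 N).filter P).card with hcnt
  have hWR : (0:ℝ) < (W:ℝ) := by exact_mod_cast hW
  have hsplit : ∀ a b : ℕ, a ≤ b → cnt b = cnt a + ((Finset.Ioc a b).filter P).card := by
    intro a b hab
    rw [hcnt]
    simp only
    rw [← Finset.Ioc_union_Ioc_eq_Ioc (Nat.zero_le a) hab, Finset.filter_union,
      Finset.card_union_of_disjoint]
    apply Finset.disjoint_filter_filter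
    rw [Finset.disjoint_left]
    intro x hx1 hx2
    simp only [Finset.mem_Ioc] at hx1 hx2
    omega
  have hgoodblock : ∀ M : ℕ, Kf q (W*M+1) = Kf q (W*M+W) →
      ((Finset.Ioc (W*M) (W*M+W)).filter P).card = 1 := by
    intro M hKconst
    have hiff : ∀ n ∈ Finset.Ioc (W*M) (W*M+W), P n ↔ (n % W = c (Kf q (W*M+1))) := by
      intro n hn
      simp only [Finset.mem_Ioc] at hn
      have h1 : Kf q (W*M+1) ≤ Kf q n := Kf_mono q hq (by omega) (by omega)
      have h2 : Kf q n ≤ Kf q (W*M+W) := Kf_mono q hq (by omega) (by omega)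
      have h3 : Kf q n = Kf q (W*M+1) := by omega
      rw [hP]
      simp only [h3]
    rw [Finset.filter_congr hiff, card_mod_Ioc _ _ _ hW (hc _)]
  have hblockle : ∀ M : ℕ, ((Finset.Ioc (W*M) (W*M+W)).filter P).card ≤ W := by
    intro M
    calc ((Finset.Ioc (W*M) (W*M+W)).filter P).card ≤ (Finset.Ioc (W*M) (W*M+W)).card :=
          Finset.card_filter_le _ _
    _ = W := by rw [Nat.card_Ioc]; omega
  have hmain : ∀ M : ℕ, cnt (W*M) ≤ M + W * Kf q (W*M+1) ∧ M ≤ cnt (W*M) + W * Kf q (W*M+1) := by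
    intro M
    induction M with
    | zero => simp [hcnt]
    | succ M ih =>
      have hstep : cnt (W*(M+1)) = cnt (W*M) + ((Finset.Ioc (W*M) (W*M+W)).filter P).card := by
        rw [Nat.mul_succ]
        exact hsplit (W*M) (W*M+W) (Nat.le_add_right _ _)
      have hmulstep : W*(M+1) = W*M + W := by ring
      have hKmono : Kf q (W*M+1) ≤ Kf q (W*(M+1)+1) := Kf_mono q hq (by omega) (by omega)
      have hKm : W * Kf q (W*M+1) ≤ W * Kf q (W*(M+1)+1) := Nat.mul_le_mul_left _ hKmono
      by_cases hgood : Kf q (W*M+1) = Kf q (W*M+W)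
      · have h1 := hgoodblock M hgood
        constructor
        · rw [hstep, h1]; linarith [ih.1]
        · rw [hstep, h1]; linarith [ih.2]
      · have hKlt : Kf q (W*M+1) + 1 ≤ Kf q (W*M+W) :=
          Nat.succ_le_of_lt (lt_of_le_of_ne (Kf_mono q hq (by omega) (by omega)) hgood)
        have hK2 : Kf q (W*M+W) ≤ Kf q (W*(M+1)+1) := Kf_mono q hq (by omega) (by omega)
        have hKm2 : W * (Kf q (W*M+1) + 1) ≤ W * Kf q (W*(M+1)+1) :=
          Nat.mul_le_mul_left _ (by omega)
        rw [Nat.mul_add, Nat.mul_one] at hKm2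
        constructor
        · rw [hstep]; linarith [ih.1, hblockle M]
        · rw [hstep]; linarith [ih.2]
  have hbound : ∀ N : ℕ, 1 ≤ N → |(cnt N : ℝ) - N / W| ≤ W * ((Kf q (N+1) : ℝ) + 2) := by
    intro N hN
    set M := N / W with hM
    have hdm : W * M + N % W = N := by rw [hM]; exact Nat.div_add_mod N W
    have hmlt := Nat.mod_lt N hW
    have hWM : W*M ≤ N := by omega
    have hWM2 : N < W*M + W := by omega
    have hcm1 : cnt (W*M) ≤ cnt N := by
      rw [hsplit (W*M) N hWM]; exact Nat.le_add_right _ _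
    have hcm2 : cnt N ≤ cnt (W*M) + W := by
      rw [hsplit (W*M) N hWM]
      have : ((Finset.Ioc (W*M) N).filter P).card ≤ W := by
        calc ((Finset.Ioc (W*M) N).filter P).card ≤ (Finset.Ioc (W*M) N).card :=
            Finset.card_filter_le _ _
        _ ≤ W := by rw [Nat.card_Ioc]; omega
      omega
    obtain ⟨h1, h2⟩ := hmain M
    have hKmono : Kf q (W*M+1) ≤ Kf q (N+1) := Kf_mono q hq (by omega) (by omega)
    have hKm : W * Kf q (W*M+1) ≤ W * Kf q (N+1) := Nat.mul_le_mul_left _ hKmono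
    have hA : cnt N ≤ M + W * Kf q (N+1) + W := by linarith
    have hB : M ≤ cnt N + W * Kf q (N+1) := by linarith
    have hAR : (cnt N : ℝ) ≤ (M:ℝ) + (W:ℝ) * (Kf q (N+1) : ℝ) + W := by exact_mod_cast hA
    have hBR : (M:ℝ) ≤ (cnt N : ℝ) + (W:ℝ) * (Kf q (N+1) : ℝ) := by exact_mod_cast hB
    have hMR1 : (M:ℝ) ≤ (N:ℝ)/W := by
      rw [le_div_iff₀ hWR]
      have hnat : M * W ≤ N := by rw [Nat.mul_comm]; exact hWM
      exact_mod_cast hnat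
    have hMR2 : (N:ℝ)/W ≤ (M:ℝ) + 1 := by
      rw [div_le_iff₀ hWR]
      have : (N:ℝ) < ((W*M + W : ℕ) : ℝ) := by exact_mod_cast hWM2
      push_cast at this
      linarith
    have hWge : (1:ℝ) ≤ (W:ℝ) := by exact_mod_cast hW
    rw [abs_le]
    constructor
    · nlinarith [hBR, hMR2]
    · nlinarith [hAR, hMR1]
  have hKlog : ∀ N : ℕ, (Kf q (N+1) : ℝ) ≤ Real.logb q ((N:ℝ)+1) := by
    intro N
    have hx1 : (1:ℝ) ≤ ((N+1:ℕ):ℝ) := by exact_mod_cast Nat.le_add_left 1 N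
    have h0 : 0 ≤ ⌊Real.logb q ((N+1:ℕ):ℝ)⌋ := Int.floor_nonneg.mpr (Real.logb_nonneg hq hx1)
    have heq : ((Kf q (N+1) : ℕ) : ℝ) = ((⌊Real.logb q ((N+1:ℕ):ℝ)⌋ : ℤ) : ℝ) := by
      unfold Kf
      exact_mod_cast congrArg (fun z : ℤ => (z:ℝ)) (Int.toNat_of_nonneg h0)
    rw [heq]
    calc ((⌊Real.logb q ((N+1:ℕ):ℝ)⌋ : ℤ) : ℝ) ≤ Real.logb q ((N+1:ℕ):ℝ) := Int.floor_le _
    _ = Real.logb q ((N:ℝ)+1) := by push_cast; ring_nf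
  have l1 : Filter.Tendsto (fun x : ℝ => Real.log x / x) Filter.atTop (𝓝 0) :=
    Real.isLittleO_log_id_atTop.tendsto_div_nhds_zero
  have l2 : Filter.Tendsto (fun N : ℕ => ((N:ℝ)+1)) Filter.atTop Filter.atTop :=
    Filter.tendsto_atTop_add_const_right _ 1 tendsto_natCast_atTop_atTop
  have l3 : Filter.Tendsto (fun N : ℕ => Real.log ((N:ℝ)+1) / ((N:ℝ)+1)) Filter.atTop (𝓝 0) :=
    l1.comp l2
  have l4 : Filter.Tendsto (fun N : ℕ => Real.log ((N:ℝ)+1) / (N:ℝ)) Filter.atTop (𝓝 0) := by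
    apply squeeze_zero_norm' ?_ (by simpa using l3.const_mul (2:ℝ))
    filter_upwards [Filter.eventually_ge_atTop 1] with N hN
    have hN1 : (1:ℝ) ≤ (N:ℝ) := by exact_mod_cast hN
    have hlogpos : 0 ≤ Real.log ((N:ℝ)+1) := Real.log_nonneg (by linarith)
    rw [Real.norm_eq_abs, abs_of_nonneg (by positivity)]
    rw [div_le_iff₀ (by linarith : (0:ℝ) < (N:ℝ))]
    rw [mul_comm (2:ℝ) _, mul_assoc, div_mul_eq_mul_div, le_div_iff₀ (by linarith : (0:ℝ) < (N:ℝ)+1)]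
    nlinarith
  have l5 : Filter.Tendsto (fun N : ℕ => (W:ℝ) * (Real.logb q ((N:ℝ)+1) + 2) / (N:ℝ))
      Filter.atTop (𝓝 0) := by
    have hlq : 0 < Real.log q := Real.log_pos hq
    have hlq' : Real.log q ≠ 0 := ne_of_gt hlq
    have e1 : ∀ N : ℕ, (W:ℝ) * (Real.logb q ((N:ℝ)+1) + 2) / (N:ℝ)
        = ((W:ℝ)/Real.log q) * (Real.log ((N:ℝ)+1) / (N:ℝ)) + ((2:ℝ)*W) * (1/(N:ℝ)) := by
      intro N
      by_cases hN0 : (N:ℝ) = 0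
      · simp [Real.logb, hN0]
      · rw [Real.logb]; field_simp
    have t1 := l4.const_mul ((W:ℝ)/Real.log q)
    have t2 := tendsto_one_div_atTop_nhds_zero_nat.const_mul ((2:ℝ)*(W:ℝ))
    have := t1.add t2
    simp only [mul_zero, add_zero] at this
    apply this.congr
    intro N
    rw [e1]
  have hfinal0 : Filter.Tendsto (fun N : ℕ => ((cnt N : ℝ))/(N:ℝ) - 1/(W:ℝ))
      Filter.atTop (𝓝 0) := by
    apply squeeze_zero_norm' ?_ l5
    filter_upwards [Filter.eventually_ge_atTop 1] with N hN
    have hNR : (1:ℝ) ≤ (N:ℝ) := by exact_mod_cast hN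
    have hNpos : (0:ℝ) < (N:ℝ) := by linarith
    have hb := hbound N hN
    have heq : ((cnt N:ℝ) - (N:ℝ)/(W:ℝ))/(N:ℝ) = (cnt N:ℝ)/(N:ℝ) - 1/(W:ℝ) := by
      rw [sub_div, div_right_comm, div_self (ne_of_gt hNpos)]
    rw [← heq, Real.norm_eq_abs, abs_div, abs_of_pos hNpos]
    have hnum : |(cnt N:ℝ) - (N:ℝ)/(W:ℝ)| ≤ (W:ℝ) * (Real.logb q ((N:ℝ)+1) + 2) := by
      calc |(cnt N:ℝ) - (N:ℝ)/(W:ℝ)| ≤ (W:ℝ) * ((Kf q (N+1) : ℝ) + 2) := hb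
      _ ≤ (W:ℝ) * (Real.logb q ((N:ℝ)+1) + 2) := by
          have := hKlog N
          nlinarith [hWR]
    gcongr
  have hfin := hfinal0.add (tendsto_const_nhds :
    Filter.Tendsto (fun _ : ℕ => 1/(W:ℝ)) Filter.atTop (𝓝 (1/(W:ℝ))))
  rw [zero_add] at hfin
  apply hfin.congr
  intro N
  simp only [hcnt]
  ring

private lemma core_s18 (ℓ m : ℕ) (hm : 0 < m) (hlm : m < ℓ) (t u₁ u₂ v : ℕ)
    (hu₁ : 1 ≤ u₁) (hu₂ : ℓ^2*u₁ + ℓ*t ≤ u₂) (hv : ℓ*u₂ + t ≤ v)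
    (H₁ : Kf ((ℓ:ℝ)/m) (m*v + ℓ*u₁ + t) % 2 = Kf ((ℓ:ℝ)/m) (m*u₁ + ℓ*v + t) % 2)
    (H₂ : Kf ((ℓ:ℝ)/m) (m*v + ℓ*u₂ + t) % 2 = Kf ((ℓ:ℝ)/m) (m*u₂ + ℓ*v + t) % 2) :
    False := by
  set q : ℝ := (ℓ:ℝ)/m with hqdef
  have hmR : (0:ℝ) < m := by exact_mod_cast hm
  have hlR : (0:ℝ) < ℓ := by exact_mod_cast hm.trans hlm
  have hmlR : (m:ℝ) < ℓ := by exact_mod_cast hlm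
  have hq : 1 < q := by rw [hqdef, lt_div_iff₀ hmR]; linarith
  have hq0 : (0:ℝ) < q := by linarith
  have hu₂pos : 1 ≤ u₂ := by
    have h1 : 0 < ℓ^2*u₁ := Nat.mul_pos (pow_pos (by omega) 2) (by omega)
    exact Nat.le_trans h1 (Nat.le_trans (Nat.le_add_right _ _) hu₂)
  have hvpos : 1 ≤ v := by
    have h1 : 0 < ℓ*u₂ := Nat.mul_pos (by omega) (by linarith)
    linarith
  have hmv : 1 ≤ m*v := Nat.mul_pos hm (by linarith)
  have hlv : ℓ ≤ ℓ*v := Nat.le_mul_of_pos_right ℓ (by linarith)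
  have key : ∀ (u s s' : ℕ), s = m*v + ℓ*u + t → s' = m*u + ℓ*v + t → 1 ≤ u →
      (Kf q s % 2 = Kf q s' % 2) →
      ∃ i : ℤ, (((m:ℝ)*(s':ℝ))/ℓ < q ^ (i:ℝ)) ∧ (q ^ (i:ℝ) ≤ (s:ℝ)) := by
    intro u s s' hs hs' hu Hpar
    set w : ℝ := ((m:ℝ)*(s':ℝ))/ℓ with hw
    have hs'big : ℓ ≤ s' := by rw [hs']; linarith [hlv, Nat.zero_le (m*u)]
    have hspos : 1 ≤ s := by rw [hs]; linarith [hmv, Nat.zero_le (ℓ*u)]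
    have hw1 : 1 ≤ w := by
      rw [hw, le_div_iff₀ hlR]
      have h1 : (ℓ:ℝ) ≤ (s' : ℝ) := by exact_mod_cast hs'big
      have h2 : (1:ℝ) ≤ (m:ℝ) := by exact_mod_cast hm
      nlinarith
    have hwpos : 0 < w := by linarith
    have hqw : q * w = (s' : ℝ) := by
      rw [hqdef, hw]
      field_simp
    have hflip : ⌊Real.logb q s'⌋ = ⌊Real.logb q w⌋ + 1 := by
      rw [← hqw, Real.logb_mul (by positivity) (by positivity),
        Real.logb_self_eq_one hq, add_comm, Int.floor_add_one]
    have hws : w < (s:ℝ) := by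
      rw [hw, div_lt_iff₀ hlR]
      have hnat : m * s' < s * ℓ := by
        rw [hs, hs']
        have h1 : m*m*u < ℓ*ℓ*u := by
          have := Nat.mul_lt_mul'' hlm hlm
          exact (Nat.mul_lt_mul_right (by omega)).mpr this
        have h2 : m*t ≤ ℓ*t := Nat.mul_le_mul_right t hlm.le
        nlinarith
      exact_mod_cast hnat
    have hfw0 : 0 ≤ ⌊Real.logb q w⌋ := Int.floor_nonneg.mpr (Real.logb_nonneg hq hw1)
    have hfs0 : 0 ≤ ⌊Real.logb q (s:ℝ)⌋ := Int.floor_nonneg.mpr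
      (Real.logb_nonneg hq (by exact_mod_cast hspos))
    have hKs' : (Kf q s' : ℤ) = ⌊Real.logb q w⌋ + 1 := by
      unfold Kf
      rw [hflip]
      omega
    have hKs : (Kf q s : ℤ) = ⌊Real.logb q (s:ℝ)⌋ := by
      unfold Kf; omega
    have hne : ⌊Real.logb q w⌋ ≠ ⌊Real.logb q (s:ℝ)⌋ := by
      intro hcontra
      omega
    have hmono : ⌊Real.logb q w⌋ ≤ ⌊Real.logb q (s:ℝ)⌋ :=
      Int.floor_le_floor ((Real.logb_le_logb hq hwpos (by positivity)).mpr hws.le)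
    have hlt : ⌊Real.logb q w⌋ < ⌊Real.logb q (s:ℝ)⌋ := lt_of_le_of_ne hmono hne
    refine ⟨⌊Real.logb q (s:ℝ)⌋, ?_, ?_⟩
    · rw [← Real.logb_lt_iff_lt_rpow hq hwpos]
      exact_mod_cast Int.floor_lt.mp hlt
    · rw [← Real.le_logb_iff_rpow_le hq (by exact_mod_cast hspos : (0:ℝ) < (s:ℝ))]
      exact Int.floor_le _
  obtain ⟨i₁, hi₁w, hi₁s⟩ := key u₁ _ _ rfl rfl hu₁ H₁
  obtain ⟨i₂, hi₂w, hi₂s⟩ := key u₂ _ _ rfl rfl hu₂pos H₂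
  have hs₁w₂ : ((m*v + ℓ*u₁ + t : ℕ):ℝ) ≤ ((m:ℝ)*((m*u₂ + ℓ*v + t : ℕ):ℝ))/ℓ := by
    rw [le_div_iff₀ hlR]
    have hnat : (m*v + ℓ*u₁ + t) * ℓ ≤ m * (m*u₂ + ℓ*v + t) := by
      have h1 : u₂ ≤ m*m*u₂ := Nat.le_mul_of_pos_left u₂ (Nat.mul_pos hm hm)
      have h2 : t ≤ m*t := Nat.le_mul_of_pos_left t hm
      nlinarith [hu₂]
    exact_mod_cast hnat
  have hii : i₁ < i₂ := by
    have h1 : (q:ℝ) ^ (i₁:ℝ) < q ^ (i₂:ℝ) := lt_of_le_of_lt (le_trans hi₁s hs₁w₂) hi₂w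
    have h2 := (Real.rpow_lt_rpow_left_iff hq).mp h1
    exact_mod_cast h2
  have hqw₁ : q * (((m:ℝ)*((m*u₁ + ℓ*v + t : ℕ):ℝ))/ℓ) = ((m*u₁ + ℓ*v + t : ℕ) : ℝ) := by
    rw [hqdef]; field_simp
  have hchain : ((m*u₁ + ℓ*v + t : ℕ) : ℝ) < ((m*v + ℓ*u₂ + t : ℕ) : ℝ) := by
    calc ((m*u₁ + ℓ*v + t : ℕ) : ℝ) = q * (((m:ℝ)*((m*u₁ + ℓ*v + t : ℕ):ℝ))/ℓ) := hqw₁.symm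
    _ < q * q ^ (i₁:ℝ) := mul_lt_mul_of_pos_left hi₁w hq0
    _ = q ^ ((i₁:ℝ) + 1) := by rw [Real.rpow_add_one (by linarith : q ≠ 0)]; ring
    _ ≤ q ^ ((i₂:ℝ)) := by
        rw [Real.rpow_le_rpow_left_iff hq]
        have h3 : i₁ + 1 ≤ i₂ := by omega
        exact_mod_cast h3
    _ ≤ ((m*v + ℓ*u₂ + t : ℕ) : ℝ) := hi₂s
  have hnatlt : m*u₁ + ℓ*v + t < m*v + ℓ*u₂ + t := by exact_mod_cast hchain
  have hfinal : m*v + ℓ*u₂ + t ≤ m*u₁ + ℓ*v + t := by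
    have h1 : (m+1)*v ≤ ℓ*v := Nat.mul_le_mul_right v hlm
    nlinarith [hv]
  exact absurd hnatlt (not_lt.mpr hfinal)

/-- For distinct `ℓ > m` there are sets `A, A' ⊆ ℕ` with `d_(A) = 1/2` and
`d_(A') = 1 - 1/(2(ℓ+m))` such that for every infinite `B` and every `t ∈ ℕ`, the pattern
`{m b₁ + ℓ b₂ : b₁ ≠ b₂ ∈ B} + t` is not contained in `A`, nor is the unshifted pattern
contained in `A'`. -/
theorem examples_lowerDensity_ne (ℓ m : ℕ) (hm : 0 < m) (hlm : m < ℓ) :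
    ∃ A A' : Set ℕ,
      lowerDensity A = 1 / 2 ∧
      lowerDensity A' = 1 - 1 / (2 * ((ℓ : ℝ) + m)) ∧
      ∀ B : Set ℕ, B.Infinite →
        (∀ t : ℕ, 0 < t →
          ¬ (∀ b₁ ∈ B, ∀ b₂ ∈ B, b₁ ≠ b₂ → m * b₁ + ℓ * b₂ + t ∈ A)) ∧
        ¬ (∀ b₁ ∈ B, ∀ b₂ ∈ B, b₁ ≠ b₂ → m * b₁ + ℓ * b₂ ∈ A') := by
  classical
  set q : ℝ := (ℓ:ℝ)/m with hqdef
  have hmR : (0:ℝ) < m := by exact_mod_cast hm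
  have hmlR : (m:ℝ) < ℓ := by exact_mod_cast hlm
  have hq : 1 < q := by rw [hqdef, lt_div_iff₀ hmR]; linarith
  set p : ℕ := ℓ + m with hpdef
  have hp : 0 < p := by omega
  refine ⟨{n : ℕ | 0 < n ∧ n % 2 = Kf q n % 2},
    {n : ℕ | ¬ (0 < n ∧ n % (2*p) = p * (Kf q n % 2))}, ?_, ?_, ?_⟩
  · -- lower density of A is 1/2
    unfold lowerDensity
    apply Filter.Tendsto.liminf_eq
    have h := cnt_tendsto q hq 2 (by norm_num) (fun k => k % 2)
      (fun k => Nat.mod_lt _ (by norm_num))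
    have hconst : (1:ℝ)/((2:ℕ):ℝ) = 1/2 := by norm_num
    rw [hconst] at h
    apply h.congr
    intro N
    refine congrArg (fun k : ℕ => (k:ℝ)/(N:ℝ)) ?_
    refine congrArg Finset.card ?_
    refine @Finset.filter_congr ℕ _ _ _ (fun a => Classical.propDecidable _) (Finset.Icc 1 N) (fun n hn => ?_)
    · simp only [Finset.mem_Icc] at hn
      simp only [Set.mem_setOf_eq]
      constructor
      · intro hcond; exact ⟨by omega, hcond⟩
      · intro hcond; exact hcond.2

  · -- lower density of A' is 1 - 1/(2(ℓ+m))
    unfold lowerDensity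
    apply Filter.Tendsto.liminf_eq
    have hpc : ∀ k : ℕ, p * (k % 2) < 2*p := by
      intro k
      have h2 : k % 2 < 2 := Nat.mod_lt _ (by norm_num)
      rcases Nat.mod_two_eq_zero_or_one k with h | h <;> rw [h] <;> omega
    have h := cnt_tendsto q hq (2*p) (by omega) (fun k => p * (k % 2)) hpc
    have hC : ∀ N : ℕ,
        (@Finset.filter ℕ
          (· ∈ {n : ℕ | ¬ (0 < n ∧ n % (2*p) = p * (Kf q n % 2))})
          (fun a => Classical.propDecidable _) (Finset.Icc 1 N)).card
        = N - ((Finset.Ioc 0 N).filter (fun n => n % (2*p) = p * (Kf q n % 2))).card := by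
      intro N
      have heqf : @Finset.filter ℕ
          (· ∈ {n : ℕ | ¬ (0 < n ∧ n % (2*p) = p * (Kf q n % 2))})
          (fun a => Classical.propDecidable _) (Finset.Icc 1 N)
          = (Finset.Icc 1 N).filter (fun n => ¬ (n % (2*p) = p * (Kf q n % 2))) := by
        refine @Finset.filter_congr ℕ _ _ (fun a => Classical.propDecidable _) _ (Finset.Icc 1 N) (fun n hn => ?_)
        simp only [Finset.mem_Icc] at hn
        simp only [Set.mem_setOf_eq]
        constructor
        · intro hcond hmem; exact hcond ⟨by omega, hmem⟩
        · intro hcond hmem; exact hcond hmem.2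
      have hIccIoc : (Finset.Icc 1 N).filter (fun n => ¬ (n % (2*p) = p * (Kf q n % 2)))
          = (Finset.Ioc 0 N).filter (fun n => ¬ (n % (2*p) = p * (Kf q n % 2))) := rfl
      rw [heqf, hIccIoc, Finset.filter_not, Finset.card_sdiff_of_subset (Finset.filter_subset _ _),
        Nat.card_Ioc]
      omega
    have hle : ∀ N : ℕ,
        ((Finset.Ioc 0 N).filter (fun n => n % (2*p) = p * (Kf q n % 2))).card ≤ N := by
      intro N
      calc _ ≤ (Finset.Ioc 0 N).card := Finset.card_filter_le _ _
      _ = N := by rw [Nat.card_Ioc]; omega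
    have h2 : Filter.Tendsto
        (fun N : ℕ => (1:ℝ) - (((Finset.Ioc 0 N).filter
          (fun n => n % (2*p) = p * (Kf q n % 2))).card : ℝ)/N)
        Filter.atTop (𝓝 (1 - 1/((2*p : ℕ):ℝ))) := tendsto_const_nhds.sub h
    have hconst : (1:ℝ) - 1/((2*p : ℕ):ℝ) = 1 - 1 / (2 * ((ℓ : ℝ) + m)) := by
      rw [hpdef]; push_cast; ring_nf
    rw [hconst] at h2
    apply h2.congr'
    filter_upwards [Filter.eventually_ge_atTop 1] with N hN
    have hNpos : (0:ℝ) < (N:ℝ) := by exact_mod_cast hN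
    have e2 : (1:ℝ) - (((Finset.Ioc 0 N).filter (fun n => n % (2*p) = p * (Kf q n % 2))).card : ℝ)/N
        = (((N - ((Finset.Ioc 0 N).filter (fun n => n % (2*p) = p * (Kf q n % 2))).card : ℕ)):ℝ)/N := by
      rw [Nat.cast_sub (hle N), sub_div, div_self (ne_of_gt hNpos)]
    rw [e2]
    refine congrArg (fun k : ℕ => (k:ℝ)/(N:ℝ)) ?_
    exact (hC N).symm
  · -- avoidance
    intro B hB
    constructor
    · -- the A part, with shift t > 0
      intro t ht hAll
      obtain ⟨r, hr, hBr⟩ := exists_mod_class B hB 2 (by norm_num)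
      obtain ⟨u₁, hu₁B, hu₁pos⟩ := hBr.exists_gt 0
      obtain ⟨u₂, hu₂B, hu₂gt⟩ := hBr.exists_gt (ℓ^2*u₁ + ℓ*t)
      obtain ⟨v, hvB, hvgt⟩ := hBr.exists_gt (ℓ*u₂ + t)
      have hu₁u₂ : u₁ < u₂ := by
        have : u₁ ≤ ℓ^2*u₁ := Nat.le_mul_of_pos_left u₁ (pow_pos (by omega) 2)
        omega
      have hu₂v : u₂ < v := by
        have : u₂ ≤ ℓ*u₂ := Nat.le_mul_of_pos_left u₂ (by omega)
        omega
      have hA1 := hAll v hvB.1 u₁ hu₁B.1 (by omega)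
      have hA1' := hAll u₁ hu₁B.1 v hvB.1 (by omega)
      have hA2 := hAll v hvB.1 u₂ hu₂B.1 (by omega)
      have hA2' := hAll u₂ hu₂B.1 v hvB.1 (by omega)
      simp only [Set.mem_setOf_eq] at hA1 hA1' hA2 hA2'
      have hmodeq : ∀ u : ℕ, u % 2 = r →
          (m*v + ℓ*u + t) % 2 = (m*u + ℓ*v + t) % 2 := by
        intro u hu
        have huv : u ≡ v [MOD 2] := by
          unfold Nat.ModEq
          rw [hu, hvB.2]
        exact ((Nat.ModEq.mul_left m huv.symm).add (Nat.ModEq.mul_left ℓ huv)).add_right t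
      have H₁ : Kf q (m*v + ℓ*u₁ + t) % 2 = Kf q (m*u₁ + ℓ*v + t) % 2 := by
        rw [← hA1.2, ← hA1'.2]
        exact hmodeq u₁ hu₁B.2
      have H₂ : Kf q (m*v + ℓ*u₂ + t) % 2 = Kf q (m*u₂ + ℓ*v + t) % 2 := by
        rw [← hA2.2, ← hA2'.2]
        exact hmodeq u₂ hu₂B.2
      exact core_s18 ℓ m hm hlm t u₁ u₂ v (by omega) (by omega) (by omega) H₁ H₂
    · -- the A' part, t = 0
      intro hAll
      obtain ⟨r, hr, hBr⟩ := exists_mod_class B hB (2*p) (by omega)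
      obtain ⟨u₁, hu₁B, hu₁pos⟩ := hBr.exists_gt 0
      obtain ⟨u₂, hu₂B, hu₂gt⟩ := hBr.exists_gt (ℓ^2*u₁)
      obtain ⟨v, hvB, hvgt⟩ := hBr.exists_gt (ℓ*u₂)
      have hu₁u₂ : u₁ < u₂ := by
        have : u₁ ≤ ℓ^2*u₁ := Nat.le_mul_of_pos_left u₁ (pow_pos (by omega) 2)
        omega
      have hu₂v : u₂ < v := by
        have : u₂ ≤ ℓ*u₂ := Nat.le_mul_of_pos_left u₂ (by omega)
        omega
      have hvpos : 0 < v := by omega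
      have hA1 := hAll v hvB.1 u₁ hu₁B.1 (by omega)
      have hA1' := hAll u₁ hu₁B.1 v hvB.1 (by omega)
      have hA2 := hAll v hvB.1 u₂ hu₂B.1 (by omega)
      have hA2' := hAll u₂ hu₂B.1 v hvB.1 (by omega)
      simp only [Set.mem_setOf_eq] at hA1 hA1' hA2 hA2'
      -- each sum is positive and ≡ p*(r%2) mod 2p, so its Kf-parity differs from r
      have hprmod : (p * r) % (2*p) = p * (r % 2) := by
        obtain ⟨d, e, hde, he⟩ : ∃ d e, r = 2*d + e ∧ e < 2 := ⟨r/2, r%2, by omega, by omega⟩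
        have h1 : p*r = p*e + d*(2*p) := by rw [hde]; ring
        have h2 : r % 2 = e := by omega
        rw [h1, Nat.add_mul_mod_self_right, h2]
        have h3 : p*e < 2*p := by
          rcases (by omega : e = 0 ∨ e = 1) with h | h <;> rw [h] <;> omega
        exact Nat.mod_eq_of_lt h3
      have hkey : ∀ u : ℕ, u ∈ B → u % (2*p) = r → u₁ ≤ u ∨ v ≤ u → True := fun _ _ _ _ => trivial
      have hsummod : ∀ u : ℕ, u % (2*p) = r →
          (m*v + ℓ*u) % (2*p) = p * (r % 2) := by
        intro u hu
        have hur : u ≡ r [MOD 2*p] := by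
          unfold Nat.ModEq
          rw [hu, Nat.mod_eq_of_lt hr]
        have hvr : v ≡ r [MOD 2*p] := by
          unfold Nat.ModEq
          rw [hvB.2, Nat.mod_eq_of_lt hr]
        have hsum : m*v + ℓ*u ≡ m*r + ℓ*r [MOD 2*p] :=
          (Nat.ModEq.mul_left m hvr).add (Nat.ModEq.mul_left ℓ hur)
        have hpr : m*r + ℓ*r = p*r := by rw [hpdef]; ring
        calc (m*v + ℓ*u) % (2*p) = (m*r + ℓ*r) % (2*p) := hsum
        _ = (p*r) % (2*p) := by rw [hpr]
        _ = p * (r % 2) := hprmod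
      have hKne : ∀ u : ℕ, 0 < u → u % (2*p) = r →
          (¬ (0 < m*v + ℓ*u ∧ (m*v + ℓ*u) % (2*p) = p * (Kf q (m*v + ℓ*u) % 2))) →
          Kf q (m*v + ℓ*u) % 2 ≠ r % 2 := by
        intro u hu hur hnotmem hKeq
        apply hnotmem
        constructor
        · have : 1 ≤ m*v := Nat.mul_pos hm hvpos
          omega
        · rw [hsummod u hur, hKeq]
      -- similarly for reversed sums m*u + ℓ*v
      have hsummod' : ∀ u : ℕ, u % (2*p) = r →
          (m*u + ℓ*v) % (2*p) = p * (r % 2) := by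
        intro u hu
        have hur : u ≡ r [MOD 2*p] := by
          unfold Nat.ModEq
          rw [hu, Nat.mod_eq_of_lt hr]
        have hvr : v ≡ r [MOD 2*p] := by
          unfold Nat.ModEq
          rw [hvB.2, Nat.mod_eq_of_lt hr]
        have hsum : m*u + ℓ*v ≡ m*r + ℓ*r [MOD 2*p] :=
          (Nat.ModEq.mul_left m hur).add (Nat.ModEq.mul_left ℓ hvr)
        have hpr : m*r + ℓ*r = p*r := by rw [hpdef]; ring
        calc (m*u + ℓ*v) % (2*p) = (m*r + ℓ*r) % (2*p) := hsum
        _ = (p*r) % (2*p) := by rw [hpr]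
        _ = p * (r % 2) := hprmod
      have hKne' : ∀ u : ℕ, 0 < u → u % (2*p) = r →
          (¬ (0 < m*u + ℓ*v ∧ (m*u + ℓ*v) % (2*p) = p * (Kf q (m*u + ℓ*v) % 2))) →
          Kf q (m*u + ℓ*v) % 2 ≠ r % 2 := by
        intro u hu hur hnotmem hKeq
        apply hnotmem
        constructor
        · have : 1 ≤ ℓ*v := Nat.mul_pos (by omega) hvpos
          omega
        · rw [hsummod' u hur, hKeq]
      have k1 := hKne u₁ (by omega) hu₁B.2 hA1
      have k1' := hKne' u₁ (by omega) hu₁B.2 hA1'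
      have k2 := hKne u₂ (by omega) hu₂B.2 hA2
      have k2' := hKne' u₂ (by omega) hu₂B.2 hA2'
      have H₁ : Kf q (m*v + ℓ*u₁ + 0) % 2 = Kf q (m*u₁ + ℓ*v + 0) % 2 := by
        simp only [Nat.add_zero]
        have a1 : Kf q (m*v + ℓ*u₁) % 2 < 2 := Nat.mod_lt _ (by norm_num)
        have a2 : Kf q (m*u₁ + ℓ*v) % 2 < 2 := Nat.mod_lt _ (by norm_num)
        have a3 : r % 2 < 2 := Nat.mod_lt _ (by norm_num)
        omega
      have H₂ : Kf q (m*v + ℓ*u₂ + 0) % 2 = Kf q (m*u₂ + ℓ*v + 0) % 2 := by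
        simp only [Nat.add_zero]
        have a1 : Kf q (m*v + ℓ*u₂) % 2 < 2 := Nat.mod_lt _ (by norm_num)
        have a2 : Kf q (m*u₂ + ℓ*v) % 2 < 2 := Nat.mod_lt _ (by norm_num)
        have a3 : r % 2 < 2 := Nat.mod_lt _ (by norm_num)
        omega
      exact core_s18 ℓ m hm hlm 0 u₁ u₂ v (by omega) (by omega) (by omega) H₁ H₂
end
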